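/- arXiv:2303.06454 — 9 statements merged into one kernel-verified Lean document; each statement's English description precedes it below -/
import Mathlib

section
/- Let n be a positive integer and write n = le + r with 0 < r ≤ e. Then there is an isomorphism of 𝔬-modules 𝔒/𝔓^n ≅ (𝔬/𝔭^{l+1})^{rd} ⊕ (𝔬/𝔭^{l})^{(e−r)d}. -/
/-!
Over the discrete valuation ring `𝔬`, `𝔒` is free of rank `e * d`, the `𝔬`-length of
`𝔒 ⧸ 𝔭𝔒 = 𝔒 ⧸ 𝔓 ^ e`; more generally lengths multiply along the local extension `𝔬 → 𝔒`, so
`𝔒 ⧸ 𝔓 ^ m` has `𝔬`-length `m * d`. Putting `𝔓 ^ n` in Smith normal form with respect to an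
`𝔬`-basis of `𝔒` gives `𝔒 ⧸ 𝔓 ^ n ≅ Π i, 𝔬 ⧸ 𝔭 ^ k i`. Since
`𝔭 ^ (l + 1) 𝔒 = 𝔓 ^ ((l + 1) * e) ⊆ 𝔓 ^ n ⊆ 𝔓 ^ (l * e) = 𝔭 ^ l 𝔒`, every `k i` is `l` or
`l + 1`, and comparing lengths, `∑ i, k i = n * d = l * (e * d) + r * d`, exactly `r * d` of them
are `l + 1`.
-/

open Module

section SmithCoeffs

variable {ι R S : Type*} [Fintype ι] [CommRing R] [IsDomain R] [IsPrincipalIdealRing R]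
  [CommRing S] [IsDomain S] [Algebra R S] (b : Basis ι R S) {I : Ideal S} (hI : I ≠ ⊥)

theorem Ideal.dvd_smithCoeffs_of_le_span {t : R} (h : I ≤ Ideal.span {algebraMap R S t})
    (i : ι) : t ∣ I.smithCoeffs b hI i := by
  obtain ⟨s, hs⟩ := Ideal.mem_span_singleton'.mp (h (I.selfBasis b hI i).2)
  rw [Ideal.selfBasis_def, mul_comm, ← Algebra.smul_def] at hs
  refine ⟨(I.ringBasis b hI).repr s i, ?_⟩
  simpa using congr((I.ringBasis b hI).repr $hs i).symm

theorem Ideal.smithCoeffs_dvd_of_algebraMap_mem {t : R} (h : algebraMap R S t ∈ I) (i : ι) :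
    I.smithCoeffs b hI i ∣ t := by
  have ht : t ∈ annihilator R (S ⧸ I) := mem_annihilator.mpr fun x => by
    induction x using Submodule.Quotient.induction_on with
    | H s =>
      rw [← Submodule.Quotient.mk_smul, Algebra.smul_def, Submodule.Quotient.mk_eq_zero]
      exact I.mul_mem_right s h
  rw [(I.quotientEquivPiSpan b hI).annihilator_eq, annihilator_pi, Submodule.mem_iInf] at ht
  simpa only [Ideal.annihilator_quotient, Ideal.mem_span_singleton] using ht i

theorem Ideal.length_quotient_eq_sum_smithCoeffs :
    length R (S ⧸ I) = ∑ i, length R (R ⧸ Ideal.span {I.smithCoeffs b hI i}) := by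
  rw [(I.quotientEquivPiSpan b hI).length_eq, length_pi_of_fintype]

end SmithCoeffs

theorem IsDiscreteValuationRing.exists_span_singleton_eq_pow {R : Type*} [CommRing R]
    [IsDomain R] [IsDiscreteValuationRing R] {π c : R} (hπ : Irreducible π) {a b : ℕ}
    (ha : π ^ a ∣ c) (hb : c ∣ π ^ b) :
    ∃ k, a ≤ k ∧ k ≤ b ∧ Ideal.span {c} = IsLocalRing.maximalIdeal R ^ k := by
  obtain ⟨k, hkb, hck⟩ := (dvd_prime_pow hπ.prime b).mp hb
  refine ⟨k, ?_, hkb, ?_⟩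
  · exact (_root_.pow_dvd_pow_iff hπ.ne_zero hπ.not_isUnit).mp (ha.trans hck.dvd)
  · rw [Ideal.span_singleton_eq_span_singleton.mpr hck, hπ.maximalIdeal_eq,
      Ideal.span_singleton_pow]

theorem IsDiscreteValuationRing.length_restrictScalars_quotient_pow_maximalIdeal
    {R S : Type*} [CommRing R] [IsLocalRing R] [CommRing S] [IsDomain S]
    [IsDiscreteValuationRing S] [Algebra R S] [IsLocalHom (algebraMap R S)] (m : ℕ) :
    length R (S ⧸ IsLocalRing.maximalIdeal S ^ m) =
      m * length R (S ⧸ IsLocalRing.maximalIdeal S) := by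
  rw [IsLocalRing.length_restrictScalars R S, IsLocalRing.length_restrictScalars R S (S ⧸ _),
    length_quotient_pow_maximalIdeal, ← pow_one (IsLocalRing.maximalIdeal S),
    length_quotient_pow_maximalIdeal, Nat.cast_one, one_mul]

theorem Fintype.sum_eq_card_mul_add_card_eq_succ {ι : Type*} [Fintype ι] {k : ι → ℕ} {l : ℕ}
    (hk : ∀ i, l ≤ k i ∧ k i ≤ l + 1) :
    ∑ i, k i = Fintype.card ι * l + Fintype.card {i // k i = l + 1} := by
  classical
  have hk' : ∀ i, k i = l + if k i = l + 1 then 1 else 0 := fun i => by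
    have := hk i
    split_ifs <;> omega
  rw [Finset.sum_congr rfl fun i _ => hk' i, Finset.sum_add_distrib, Finset.sum_const,
    Finset.sum_boole, Fintype.card_subtype, smul_eq_mul, Finset.card_univ, Nat.cast_id]

theorem nonempty_pi_linearEquiv_prod {R ι : Type*} [Semiring R] [Fintype ι] (p : ι → Prop)
    [DecidablePred p] {M : ι → Type*} [∀ i, AddCommMonoid (M i)] [∀ i, Module R (M i)]
    {A B : Type*} [AddCommMonoid A] [Module R A] [AddCommMonoid B] [Module R B] {a b : ℕ}
    (hA : ∀ i, p i → Nonempty (M i ≃ₗ[R] A)) (hB : ∀ i, ¬p i → Nonempty (M i ≃ₗ[R] B))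
    (ha : Fintype.card {i // p i} = a) (hb : Fintype.card {i // ¬p i} = b) :
    Nonempty ((Π i, M i) ≃ₗ[R] (Fin a → A) × (Fin b → B)) :=
  ⟨(LinearEquiv.piCongrLeft R M (Equiv.sumCompl p)).symm ≪≫ₗ
    LinearEquiv.sumPiEquivProdPi R _ _ _ ≪≫ₗ
    LinearEquiv.prodCongr
      (LinearEquiv.piCongrRight (fun i => (hA i i.2).some) ≪≫ₗ
        LinearEquiv.funCongrLeft R A (Fintype.equivFinOfCardEq ha).symm)
      (LinearEquiv.piCongrRight (fun i => (hB i i.2).some) ≪≫ₗ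
        LinearEquiv.funCongrLeft R B (Fintype.equivFinOfCardEq hb).symm)⟩

section Extension

variable {𝔬 𝔒 : Type*} [CommRing 𝔬] [IsDomain 𝔬] [IsDiscreteValuationRing 𝔬]
  [CommRing 𝔒] [IsDomain 𝔒] [Algebra 𝔬 𝔒]

theorem IsDiscreteValuationRing.finrank_eq_length_quotient_map_maximalIdeal [FaithfulSMul 𝔬 𝔒]
    [Module.Finite 𝔬 𝔒] :
    (finrank 𝔬 𝔒 : ℕ∞) = length 𝔬 (𝔒 ⧸ (IsLocalRing.maximalIdeal 𝔬).map (algebraMap 𝔬 𝔒)) := by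
  obtain ⟨π, hπ⟩ := IsDiscreteValuationRing.exists_irreducible 𝔬
  let b := Free.chooseBasis 𝔬 𝔒
  have hspan : (IsLocalRing.maximalIdeal 𝔬).map (algebraMap 𝔬 𝔒) =
      Ideal.span {algebraMap 𝔬 𝔒 π} := by
    rw [hπ.maximalIdeal_eq, Ideal.map_span, Set.image_singleton]
  have hI : (IsLocalRing.maximalIdeal 𝔬).map (algebraMap 𝔬 𝔒) ≠ ⊥ := by
    rw [hspan, Ne, Ideal.span_singleton_eq_bot,
      map_eq_zero_iff _ (FaithfulSMul.algebraMap_injective 𝔬 𝔒)]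
    exact hπ.ne_zero
  rw [Ideal.length_quotient_eq_sum_smithCoeffs b hI, finrank_eq_card_chooseBasisIndex,
    ← Finset.card_univ, Finset.card_eq_sum_ones, Nat.cast_sum]
  refine Finset.sum_congr rfl fun i _ => ?_
  have hπc := Ideal.dvd_smithCoeffs_of_le_span b hI hspan.le i
  have hcπ := Ideal.smithCoeffs_dvd_of_algebraMap_mem b hI
    (hspan ▸ Ideal.mem_span_singleton_self _) i
  obtain ⟨k, hk1, hk2, hk⟩ := exists_span_singleton_eq_pow hπ (a := 1) (b := 1)
    (c := Ideal.smithCoeffs b _ hI i) (by rwa [pow_one]) (by rwa [pow_one])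
  rw [hk, length_quotient_pow_maximalIdeal, show k = 1 by omega, Nat.cast_one]

theorem IsDiscreteValuationRing.exists_span_smithCoeffs_maximalIdeal_pow_eq_pow
    [IsDiscreteValuationRing 𝔒] {ι : Type*} [Fintype ι] (b : Basis ι 𝔬 𝔒) {e : ℕ}
    (heram : (IsLocalRing.maximalIdeal 𝔬).map (algebraMap 𝔬 𝔒) = IsLocalRing.maximalIdeal 𝔒 ^ e)
    {l r : ℕ} (hre : r ≤ e) (hI : IsLocalRing.maximalIdeal 𝔒 ^ (l * e + r) ≠ ⊥) (i : ι) :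
    ∃ k, l ≤ k ∧ k ≤ l + 1 ∧
      Ideal.span {Ideal.smithCoeffs b _ hI i} = IsLocalRing.maximalIdeal 𝔬 ^ k := by
  obtain ⟨π, hπ⟩ := exists_irreducible 𝔬
  have hmap (k : ℕ) :
      Ideal.span {algebraMap 𝔬 𝔒 (π ^ k)} = IsLocalRing.maximalIdeal 𝔒 ^ (e * k) := by
    rw [pow_mul, ← heram, ← Ideal.map_pow, hπ.maximalIdeal_eq, Ideal.span_singleton_pow,
      Ideal.map_span, Set.image_singleton]
  refine exists_span_singleton_eq_pow hπ (Ideal.dvd_smithCoeffs_of_le_span b hI ?_ i)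
    (Ideal.smithCoeffs_dvd_of_algebraMap_mem b hI ?_ i)
  · rw [hmap, mul_comm]
    exact Ideal.pow_le_pow_right (Nat.le_add_right _ _)
  · have hmem := Ideal.mem_span_singleton_self (algebraMap 𝔬 𝔒 (π ^ (l + 1)))
    rw [hmap] at hmem
    exact Ideal.pow_le_pow_right (by nlinarith) hmem

theorem IsDiscreteValuationRing.nonempty_linearEquiv_quotient_maximalIdeal_pow
    [IsDiscreteValuationRing 𝔒] [FaithfulSMul 𝔬 𝔒] [Module.Finite 𝔬 𝔒] {e d : ℕ}
    (heram : (IsLocalRing.maximalIdeal 𝔬).map (algebraMap 𝔬 𝔒) = IsLocalRing.maximalIdeal 𝔒 ^ e)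
    (hd : length 𝔬 (𝔒 ⧸ IsLocalRing.maximalIdeal 𝔒) = d) {l r : ℕ} (hre : r ≤ e) :
    Nonempty ((𝔒 ⧸ IsLocalRing.maximalIdeal 𝔒 ^ (l * e + r)) ≃ₗ[𝔬]
      (Fin (r * d) → 𝔬 ⧸ IsLocalRing.maximalIdeal 𝔬 ^ (l + 1)) ×
        (Fin ((e - r) * d) → 𝔬 ⧸ IsLocalRing.maximalIdeal 𝔬 ^ l)) := by
  classical
  let b := Free.chooseBasis 𝔬 𝔒
  have hlen : ∀ m, length 𝔬 (𝔒 ⧸ IsLocalRing.maximalIdeal 𝔒 ^ m) = (m * d : ℕ) := fun m => by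
    rw [length_restrictScalars_quotient_pow_maximalIdeal, hd, Nat.cast_mul]
  have hcard : Fintype.card (Free.ChooseBasisIndex 𝔬 𝔒) = e * d := by
    have := finrank_eq_length_quotient_map_maximalIdeal (𝔬 := 𝔬) (𝔒 := 𝔒)
    rwa [heram, hlen, finrank_eq_card_chooseBasisIndex, Nat.cast_inj] at this
  have hI : IsLocalRing.maximalIdeal 𝔒 ^ (l * e + r) ≠ ⊥ := pow_ne_zero _ (not_a_field 𝔒)
  choose k hk using exists_span_smithCoeffs_maximalIdeal_pow_eq_pow b heram hre hI
  have hsum : ∑ i, k i = (l * e + r) * d := by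
    rw [← Nat.cast_inj (R := ℕ∞), ← hlen, Ideal.length_quotient_eq_sum_smithCoeffs b hI,
      Nat.cast_sum]
    refine Finset.sum_congr rfl fun i _ => ?_
    rw [(hk i).2.2, length_quotient_pow_maximalIdeal]
  have hsucc : Fintype.card {i // k i = l + 1} = r * d := by
    have := Fintype.sum_eq_card_mul_add_card_eq_succ fun i => ⟨(hk i).1, (hk i).2.1⟩
    rw [hsum, hcard] at this
    nlinarith
  have hnsucc : Fintype.card {i // ¬k i = l + 1} = (e - r) * d := by
    rw [Fintype.card_subtype_compl, hcard, hsucc, Nat.sub_mul]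
  obtain ⟨E⟩ := nonempty_pi_linearEquiv_prod (fun i => k i = l + 1)
    (M := fun i => 𝔬 ⧸ Ideal.span {Ideal.smithCoeffs b _ hI i})
    (A := 𝔬 ⧸ IsLocalRing.maximalIdeal 𝔬 ^ (l + 1)) (B := 𝔬 ⧸ IsLocalRing.maximalIdeal 𝔬 ^ l)
    (fun i h => ⟨Submodule.quotEquivOfEq _ _ (by rw [(hk i).2.2, h])⟩)
    (fun i h => ⟨Submodule.quotEquivOfEq _ _ (by rw [(hk i).2.2, show k i = l by grind])⟩)
    hsucc hnsucc
  exact ⟨(Ideal.quotientEquivPiSpan _ b hI).trans E⟩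

end Extension

theorem stmt_1_general
    (𝔬 𝔒 : Type) [CommRing 𝔬] [CommRing 𝔒] [IsDomain 𝔬] [IsDomain 𝔒]
    [IsDiscreteValuationRing 𝔬] [IsDiscreteValuationRing 𝔒]
    [Algebra 𝔬 𝔒]
    (hinj : Function.Injective (algebraMap 𝔬 𝔒))
    [Module.Finite 𝔬 𝔒]
    (e d : ℕ)
    (heram : Ideal.map (algebraMap 𝔬 𝔒) (IsLocalRing.maximalIdeal 𝔬) =
      (IsLocalRing.maximalIdeal 𝔒) ^ e)
    (hd : Nonempty ((𝔒 ⧸ IsLocalRing.maximalIdeal 𝔒) ≃ₗ[𝔬]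
      (Fin d → 𝔬 ⧸ IsLocalRing.maximalIdeal 𝔬)))
    (n l r : ℕ) (hn : n = l * e + r) (hre : r ≤ e) :
    Nonempty ((𝔒 ⧸ (IsLocalRing.maximalIdeal 𝔒) ^ n) ≃ₗ[𝔬]
      ((Fin (r * d) → 𝔬 ⧸ (IsLocalRing.maximalIdeal 𝔬) ^ (l + 1)) ×
        (Fin ((e - r) * d) → 𝔬 ⧸ (IsLocalRing.maximalIdeal 𝔬) ^ l))) := by
  subst hn
  have : FaithfulSMul 𝔬 𝔒 := (faithfulSMul_iff_algebraMap_injective 𝔬 𝔒).mpr hinj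
  refine IsDiscreteValuationRing.nonempty_linearEquiv_quotient_maximalIdeal_pow heram ?_ hre
  rw [hd.some.length_eq, length_pi, ← pow_one (IsLocalRing.maximalIdeal 𝔬),
    IsDiscreteValuationRing.length_quotient_pow_maximalIdeal, ENat.card_eq_coe_fintype_card,
    Fintype.card_fin, Nat.cast_one, mul_one]

/-- With `𝔬 ⊆ 𝔒` discrete valuation rings as in the context
(residue degree `d`, ramification index `e`), if `n = l*e + r` with `0 < r ≤ e`, then
`𝔒/𝔓^n ≅ (𝔬/𝔭^(l+1))^(r*d) ⊕ (𝔬/𝔭^l)^((e-r)*d)` as `𝔬`-modules. -/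
theorem stmt_1
    (𝔬 𝔒 : Type) [CommRing 𝔬] [CommRing 𝔒] [IsDomain 𝔬] [IsDomain 𝔒]
    [IsDiscreteValuationRing 𝔬] [IsDiscreteValuationRing 𝔒]
    [Algebra 𝔬 𝔒]
    (hinj : Function.Injective (algebraMap 𝔬 𝔒))
    [Module.Finite 𝔬 𝔒]
    (e d : ℕ) (he : 1 ≤ e)
    (heram : Ideal.map (algebraMap 𝔬 𝔒) (IsLocalRing.maximalIdeal 𝔬) =
      (IsLocalRing.maximalIdeal 𝔒) ^ e)
    (hd : Nonempty ((𝔒 ⧸ IsLocalRing.maximalIdeal 𝔒) ≃ₗ[𝔬]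
      (Fin d → 𝔬 ⧸ IsLocalRing.maximalIdeal 𝔬)))
    (n l r : ℕ) (hn : n = l * e + r) (hr0 : 0 < r) (hre : r ≤ e) :
    Nonempty ((𝔒 ⧸ (IsLocalRing.maximalIdeal 𝔒) ^ n) ≃ₗ[𝔬]
      ((Fin (r * d) → 𝔬 ⧸ (IsLocalRing.maximalIdeal 𝔬) ^ (l + 1)) ×
        (Fin ((e - r) * d) → 𝔬 ⧸ (IsLocalRing.maximalIdeal 𝔬) ^ l))) :=
  stmt_1_general 𝔬 𝔒 hinj e d heram hd n l r hn hre
end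

section
/- Let M be a finitely generated torsion 𝔒-module with M ≅ ⊕_{i=1}^{s} 𝔒/𝔓^{n_i} as 𝔒-modules, and let λ = (n_1, …, n_s) be the associated partition. Then, as an 𝔬-module (by restriction of scalars along ρ), M ≅ ⊕_{i≥1} (𝔬/𝔭^{i})^{f_{e,i}(λ)·d}. -/
/-!
Choose a uniformizer `ϖ` of `𝔒` and lifts `b₁, …, b_d ∈ 𝔒` of an `𝔬/𝔭`-basis of `𝔒/𝔓`. The
elements `ϖ^t b_i` (`t < e`) span `𝔒` modulo `𝔭𝔒 = 𝔓^e`, hence span `𝔒` by Nakayama. Since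
`ρ(π) = ϖ^e · unit` for a uniformizer `π` of `𝔬`, the `𝔓`-adic valuation of `∑ a_{t,i} ϖ^t b_i`
is the minimum of `e·v(a_{t,i}) + t`; thus the family is a basis in which `𝔓^m` becomes the product
of the ideals `𝔭^⌈(m-t)/e⌉`, so `𝔒/𝔓^m ≅ ⊕_{t<e} (𝔬/𝔭^⌈(m-t)/e⌉)^d`. Summing over the parts
`n_j` of `λ` and counting, for each `i`, the pairs `(j, t)` with `⌈(n_j - t)/e⌉ = i` gives the
multiplicity `f_{e,i}(λ)·d`.
-/

open DirectSum

/-- `ℓ(λ_{e,l})`: the number of parts `n_j` of the partition `n : Fin s → ℕ`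
with `(l-1)e < n_j ≤ le`. -/
def partLen (e l : ℕ) {s : ℕ} (n : Fin s → ℕ) : ℕ :=
  (Finset.univ.filter (fun j : Fin s => (l - 1) * e < n j ∧ n j ≤ l * e)).card

/-- `w_{e,l}(λ) = Σ_{(l-1)e < n_j ≤ le} (n_j - (l-1)e)`, the weight of `λ` at `(e,l)`. -/
def partWeight (e l : ℕ) {s : ℕ} (n : Fin s → ℕ) : ℕ :=
  ∑ j : Fin s, if (l - 1) * e < n j ∧ n j ≤ l * e then n j - (l - 1) * e else 0

/-- `f_{e,l}(λ) = ℓ(λ_{e,l+1})·e − w_{e,l+1}(λ) + w_{e,l}(λ)`. -/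
def fEL (e l : ℕ) {s : ℕ} (n : Fin s → ℕ) : ℕ :=
  partLen e (l + 1) n * e - partWeight e (l + 1) n + partWeight e l n

open IsLocalRing Finset

namespace Nat

variable {e : ℕ}

lemma le_mul_ceilDiv_sub_add (he : 0 < e) (m t : ℕ) : m ≤ e * ((m - t) ⌈/⌉ e) + t := by
  have := le_smul_ceilDiv (b := m - t) he
  rw [smul_eq_mul] at this
  omega

lemma ceilDiv_eq_succ_iff (he : 0 < e) {x k : ℕ} :
    x ⌈/⌉ e = k + 1 ↔ e * k < x ∧ x ≤ e * k + e := by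
  rw [le_antisymm_iff, ceilDiv_le_iff_le_mul he, Nat.succ_le_iff, ← not_le,
    ceilDiv_le_iff_le_mul he, mul_add_one]
  omega

lemma mul_ceilDiv_cancel_left (he : 0 < e) (k : ℕ) : e * k ⌈/⌉ e = k :=
  smul_ceilDiv he k

lemma sub_mod_ceilDiv (he : 0 < e) (m : ℕ) : (m - m % e) ⌈/⌉ e = m / e := by
  have := Nat.div_add_mod m e
  rw [show m - m % e = e * (m / e) by omega]
  exact mul_ceilDiv_cancel_left he _

lemma succ_sub_mod_ceilDiv_le (he : 0 < e) (m : ℕ) : (m + 1 - m % e) ⌈/⌉ e ≤ m / e + 1 := by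
  rw [ceilDiv_le_iff_le_mul he, mul_add_one]
  have := Nat.div_add_mod m e
  omega

lemma succ_sub_ceilDiv_le_of_ne_mod (he : 0 < e) {m t : ℕ} (ht : t < e) (hne : t ≠ m % e) :
    (m + 1 - t) ⌈/⌉ e ≤ (m - t) ⌈/⌉ e := by
  rw [ceilDiv_le_iff_le_mul he]
  have hle := le_mul_ceilDiv_sub_add he m t
  by_contra hlt
  have hm : m = e * ((m - t) ⌈/⌉ e) + t := by omega
  exact hne (by rw [hm, Nat.mul_add_mod, Nat.mod_eq_of_lt ht])

lemma card_ceilDiv_sub_eq_succ (he : 0 < e) (m k : ℕ) :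
    #{t : Fin e | (m - t) ⌈/⌉ e = k + 1} =
      (if e * k + e < m ∧ m ≤ e * k + e + e then e - (m - (e * k + e)) else 0) +
        (if e * k < m ∧ m ≤ e * k + e then m - e * k else 0) := by
  rw [card_filter, Fin.sum_univ_eq_sum_range (fun t => if (m - t) ⌈/⌉ e = k + 1 then 1 else 0),
    ← card_filter]
  have hIco : {t ∈ range e | (m - t) ⌈/⌉ e = k + 1} =
      Ico (m - (e * k + e)) (min e (m - e * k)) := by
    ext t
    simp only [mem_filter, mem_range, mem_Ico, ceilDiv_eq_succ_iff he]
    omega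
  rw [hIco, Nat.card_Ico]
  split_ifs <;> omega

end Nat

lemma fEL_succ_eq_sum_card {e : ℕ} (he : 0 < e) (k : ℕ) {s : ℕ} (n : Fin s → ℕ) :
    fEL e (k + 1) n = ∑ j, #{t : Fin e | (n j - t) ⌈/⌉ e = k + 1} := by
  simp only [Nat.card_ceilDiv_sub_eq_succ he, fEL, partLen, partWeight, Nat.add_sub_cancel,
    card_filter, sum_mul, sum_add_distrib]
  have hB : (k + 1) * e = e * k + e := by ring
  have hC : (k + 1 + 1) * e = e * k + e + e := by ring
  have hA : k * e = e * k := mul_comm _ _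
  rw [hA, hB, hC, ← sum_tsub_distrib]
  · congr 1
    refine sum_congr rfl fun j _ => ?_
    split_ifs <;> omega
  · intro j _
    split_ifs <;> omega

lemma card_sigma_ceilDiv_sub_eq_succ {e : ℕ} (he : 0 < e) (k : ℕ) {s : ℕ} (n : Fin s → ℕ)
    (ι : Type*) [Fintype ι] :
    Fintype.card {x : Σ _ : Fin s, Fin e × ι // (n x.1 - x.2.1) ⌈/⌉ e = k + 1} =
      fEL e (k + 1) n * Fintype.card ι := by
  rw [fEL_succ_eq_sum_card he, sum_mul, Fintype.card_subtype, ← univ_sigma_univ, card_filter,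
    sum_sigma]
  refine sum_congr rfl fun j _ => ?_
  rw [← univ_product_univ, sum_product, card_filter, sum_mul]
  refine sum_congr rfl fun t _ => ?_
  split_ifs <;> simp

def Equiv.optionNat : Option ℕ ≃ ℕ where
  toFun o := o.elim 0 (· + 1)
  invFun
    | 0 => none
    | k + 1 => some k
  left_inv o := by cases o <;> rfl
  right_inv k := by cases k <;> rfl

namespace DirectSum

variable (R : Type*) [Semiring R]

noncomputable def lequivShiftOfSubsingleton (A : ℕ → Type*) [∀ k, AddCommMonoid (A k)]
    [∀ k, Module R (A k)] [Subsingleton (A 0)] : (⨁ k, A k) ≃ₗ[R] ⨁ k, A (k + 1) :=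
  haveI : Unique (A 0) := uniqueOfSubsingleton 0
  have E : (⨁ o : Option ℕ, A (o.elim 0 (· + 1))) ≃ₗ[R] A 0 × ⨁ k, A (k + 1) :=
    lequivProdDirectSum R
  (lequivCongrLeft R Equiv.optionNat.symm).trans (E.trans LinearEquiv.uniqueProd)

noncomputable def lequivFiberwise {ι : Type*} [Fintype ι] [DecidableEq ι] (V : ι → ℕ)
    (Q : ℕ → Type*) [∀ k, AddCommMonoid (Q k)] [∀ k, Module R (Q k)] [Subsingleton (Q 0)] :
    (⨁ τ, Q (V τ)) ≃ₗ[R] ⨁ k, (Fin (Fintype.card {τ // V τ = k + 1}) → Q (k + 1)) :=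
  (lequivCongrLeft R (Equiv.sigmaFiberEquiv V).symm).trans <|
    (DFinsupp.mapRange.linearEquiv fun x => LinearEquiv.cast (M := Q) x.2.2).trans <|
      (sigmaLcurryEquiv R (δ := fun k (_ : {τ // V τ = k}) => Q k)).trans <|
        (DFinsupp.mapRange.linearEquiv fun k =>
          (lequivCongrLeft R (Fintype.equivFin {τ // V τ = k})).trans
            (linearEquivFunOnFintype R _ _)).trans <|
          lequivShiftOfSubsingleton R _

end DirectSum

theorem Submodule.exists_lift_of_quotient_linearEquiv_pi {R M ι : Type*} [CommRing R]
    [AddCommGroup M] [Module R M] [Fintype ι] [DecidableEq ι] {N : Submodule R M} {I : Ideal R}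
    (φ : (M ⧸ N) ≃ₗ[R] (ι → R ⧸ I)) :
    ∃ b : ι → M, (∀ a : ι → R, ∑ i, a i • b i ∈ N ↔ ∀ i, a i ∈ I) ∧
      ∀ x, ∃ a : ι → R, x - ∑ i, a i • b i ∈ N := by
  choose b hb using fun i => N.mkQ_surjective (φ.symm (Pi.single i 1))
  have hφ : ∀ a : ι → R, φ (N.mkQ (∑ i, a i • b i)) = fun i => Ideal.Quotient.mk I (a i) := by
    intro a
    simp only [map_sum, map_smul, hb, LinearEquiv.apply_symm_apply]
    rw [← Finset.univ_sum_single (fun i => Ideal.Quotient.mk I (a i))]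
    refine sum_congr rfl fun i _ => ?_
    rw [← Pi.single_smul, Algebra.smul_def, mul_one]
    rfl
  refine ⟨b, fun a => ?_, fun x => ?_⟩
  · rw [← Submodule.Quotient.mk_eq_zero, ← Submodule.mkQ_apply, ← φ.map_eq_zero_iff, hφ,
      funext_iff]
    simp only [Pi.zero_apply, Ideal.Quotient.eq_zero_iff_mem]
  · choose a ha using fun i => Ideal.Quotient.mk_surjective (φ (N.mkQ x) i)
    refine ⟨a, ?_⟩
    rw [← Submodule.Quotient.mk_eq_zero, Submodule.Quotient.mk_sub, sub_eq_zero,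
      ← Submodule.mkQ_apply, ← Submodule.mkQ_apply]
    apply φ.injective
    rw [hφ]
    exact funext fun i => (ha i).symm

section DVR

variable {R : Type*} [CommRing R] [IsDomain R] [IsDiscreteValuationRing R]

lemma Irreducible.mem_maximalIdeal_pow_iff {ϖ : R} (hϖ : Irreducible ϖ) {x : R} {k : ℕ} :
    x ∈ maximalIdeal R ^ k ↔ ϖ ^ k ∣ x := by
  rw [hϖ.maximalIdeal_eq, Ideal.span_singleton_pow, Ideal.mem_span_singleton]

lemma mul_mem_maximalIdeal_pow_add_iff {x y : R} {k l : ℕ}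
    (hx : Ideal.span {x} = maximalIdeal R ^ k) :
    x * y ∈ maximalIdeal R ^ (k + l) ↔ y ∈ maximalIdeal R ^ l := by
  obtain ⟨ϖ, hϖ⟩ := IsDiscreteValuationRing.exists_irreducible R
  rw [hϖ.maximalIdeal_eq, Ideal.span_singleton_pow, Ideal.span_singleton_eq_span_singleton] at hx
  obtain ⟨u, rfl⟩ := hx.symm
  rw [hϖ.mem_maximalIdeal_pow_iff, hϖ.mem_maximalIdeal_pow_iff, pow_add, mul_assoc,
    mul_dvd_mul_iff_left (pow_ne_zero _ hϖ.ne_zero), Units.dvd_mul_left]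

end DVR

section Extension

variable {𝔬 𝔒 : Type*} [CommRing 𝔬] [CommRing 𝔒] [IsDomain 𝔒] [IsDiscreteValuationRing 𝔒]
  [Algebra 𝔬 𝔒]
  {ι : Type*} [Fintype ι] {e : ℕ} {ϖ : 𝔒} {b : ι → 𝔒}

local notation "𝔭" => maximalIdeal 𝔬
local notation "𝔓" => maximalIdeal 𝔒

variable (e) in
def towerFamily (ϖ : 𝔒) (b : ι → 𝔒) (p : Fin e × ι) : 𝔒 := ϖ ^ (p.1 : ℕ) * b p.2

lemma maximalIdeal_pow_le_span_sup (hϖ : Irreducible ϖ)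
    (hb : ∀ x, ∃ a : ι → 𝔬, x - ∑ i, a i • b i ∈ 𝔓) (t : Fin e) :
    (𝔓 ^ (t : ℕ)).restrictScalars 𝔬 ≤
      Submodule.span 𝔬 (Set.range (towerFamily e ϖ b)) ⊔ (𝔓 ^ ((t : ℕ) + 1)).restrictScalars 𝔬 := by
  intro x hx
  rw [Submodule.restrictScalars_mem, hϖ.mem_maximalIdeal_pow_iff] at hx
  obtain ⟨z, rfl⟩ := hx
  obtain ⟨a, ha⟩ := hb z
  have hx : ϖ ^ (t : ℕ) * z =
      ∑ i, a i • towerFamily e ϖ b (t, i) + ϖ ^ (t : ℕ) * (z - ∑ i, a i • b i) := by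
    simp only [towerFamily, mul_sub, mul_sum, mul_smul_comm]
    abel
  rw [hx]
  refine add_mem (Submodule.mem_sup_left (sum_mem fun i _ => Submodule.smul_mem _ _
    (Submodule.subset_span ⟨(t, i), rfl⟩))) (Submodule.mem_sup_right ?_)
  rw [Submodule.restrictScalars_mem, pow_succ]
  exact Ideal.mul_mem_mul (hϖ.mem_maximalIdeal_pow_iff.mpr dvd_rfl) ha

lemma top_le_span_sup_maximalIdeal_pow (hϖ : Irreducible ϖ)
    (hb : ∀ x, ∃ a : ι → 𝔬, x - ∑ i, a i • b i ∈ 𝔓) {k : ℕ} (hk : k ≤ e) :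
    ⊤ ≤ Submodule.span 𝔬 (Set.range (towerFamily e ϖ b)) ⊔ (𝔓 ^ k).restrictScalars 𝔬 := by
  induction k with
  | zero => simp
  | succ k ih =>
    calc ⊤ ≤ _ := ih (by omega)
      _ ≤ _ := sup_le_sup_left (maximalIdeal_pow_le_span_sup hϖ hb ⟨k, hk⟩) _
      _ = _ := sup_left_idem ..

variable [IsDomain 𝔬] [IsDiscreteValuationRing 𝔬]

lemma span_towerFamily_eq_top [Module.Finite 𝔬 𝔒]
    (heram : Ideal.map (algebraMap 𝔬 𝔒) 𝔭 = 𝔓 ^ e) (hϖ : Irreducible ϖ)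
    (hb : ∀ x, ∃ a : ι → 𝔬, x - ∑ i, a i • b i ∈ 𝔓) :
    Submodule.span 𝔬 (Set.range (towerFamily e ϖ b)) = ⊤ := by
  have h := top_le_span_sup_maximalIdeal_pow hϖ hb (le_refl e)
  rw [← heram, ← Ideal.smul_top_eq_map] at h
  exact top_le_iff.mp <| Submodule.le_of_le_smul_of_le_jacobson_bot Module.Finite.fg_top
    (jacobson_eq_maximalIdeal ⊥ bot_ne_top).ge h

lemma smul_pow_mul_mem_maximalIdeal_pow (he : 0 < e)
    (heram : Ideal.map (algebraMap 𝔬 𝔒) 𝔭 = 𝔓 ^ e) (hϖ : ϖ ∈ 𝔓) {a : 𝔬} {m t : ℕ}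
    (ha : a ∈ 𝔭 ^ ((m - t) ⌈/⌉ e)) (y : 𝔒) : a • (ϖ ^ t * y) ∈ 𝔓 ^ m := by
  have h₁ : algebraMap 𝔬 𝔒 a ∈ 𝔓 ^ (e * ((m - t) ⌈/⌉ e)) := by
    rw [pow_mul, ← heram, ← Ideal.map_pow]
    exact Ideal.mem_map_of_mem _ ha
  have h₂ := Ideal.mul_mem_mul h₁ (Ideal.pow_mem_pow hϖ t)
  rw [← pow_add] at h₂
  rw [Algebra.smul_def, ← mul_assoc]
  exact Ideal.mul_mem_right _ _ (Ideal.pow_le_pow_right (Nat.le_mul_ceilDiv_sub_add he m t) h₂)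

lemma coeff_mem_maximalIdeal_pow_succ (heram : Ideal.map (algebraMap 𝔬 𝔒) 𝔭 = 𝔓 ^ e)
    (hϖ : Irreducible ϖ) (hb : ∀ a : ι → 𝔬, ∑ i, a i • b i ∈ 𝔓 ↔ ∀ i, a i ∈ 𝔭)
    {a : ι → 𝔬} {q t : ℕ} (ha : ∀ i, a i ∈ 𝔭 ^ q)
    (hrow : ∑ i, a i • (ϖ ^ t * b i) ∈ 𝔓 ^ (e * q + t + 1)) (i : ι) : a i ∈ 𝔭 ^ (q + 1) := by
  obtain ⟨π, hπ⟩ := IsDiscreteValuationRing.exists_irreducible 𝔬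
  choose c hc using fun i => hπ.mem_maximalIdeal_pow_iff.mp (ha i)
  have hspan : Ideal.span {algebraMap 𝔬 𝔒 (π ^ q) * ϖ ^ t} = 𝔓 ^ (e * q + t) := by
    rw [← Ideal.span_singleton_mul_span_singleton, ← Ideal.span_singleton_pow ϖ,
      ← hϖ.maximalIdeal_eq, pow_add, pow_mul, ← heram, ← Ideal.map_pow, hπ.maximalIdeal_eq, Ideal.span_singleton_pow,
      Ideal.map_span, Set.image_singleton]
  have hsum : ∑ i, a i • (ϖ ^ t * b i) = algebraMap 𝔬 𝔒 (π ^ q) * ϖ ^ t * ∑ i, c i • b i := by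
    simp only [hc, mul_sum, Algebra.smul_def, map_mul]
    exact sum_congr rfl fun i _ => by ring
  rw [hsum, mul_mem_maximalIdeal_pow_add_iff hspan, pow_one, hb] at hrow
  rw [hc i, pow_succ]
  exact Ideal.mul_mem_mul (hπ.mem_maximalIdeal_pow_iff.mpr dvd_rfl) (hrow i)

theorem coeff_mem_of_sum_smul_towerFamily_mem (he : 0 < e)
    (heram : Ideal.map (algebraMap 𝔬 𝔒) 𝔭 = 𝔓 ^ e)
    (hϖ : Irreducible ϖ) (hb : ∀ a : ι → 𝔬, ∑ i, a i • b i ∈ 𝔓 ↔ ∀ i, a i ∈ 𝔭) (m : ℕ)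
    (a : Fin e × ι → 𝔬) (hsum : ∑ p, a p • towerFamily e ϖ b p ∈ 𝔓 ^ m) (p : Fin e × ι) :
    a p ∈ 𝔭 ^ ((m - p.1) ⌈/⌉ e) := by
  induction m generalizing p with
  | zero => simp
  | succ m ih =>
    -- Only the row `t₀ = m % e` needs a higher power of `𝔭` at level `m + 1` than at level `m`;
    -- the other rows already lie in `𝔓 ^ (m + 1)`, hence so does that row.
    have hprev := ih (Ideal.pow_le_pow_right m.le_succ hsum)
    have hϖ𝔓 : ϖ ∈ 𝔓 := (mem_maximalIdeal ϖ).mpr hϖ.not_isUnit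
    set t₀ : Fin e := ⟨m % e, Nat.mod_lt _ he⟩
    have hsplit : ∑ p, a p • towerFamily e ϖ b p = ∑ i, a (t₀, i) • (ϖ ^ (m % e) * b i) +
        ∑ t ∈ univ.erase t₀, ∑ i, a (t, i) • towerFamily e ϖ b (t, i) := by
      rw [Fintype.sum_prod_type, ← add_sum_erase _ _ (mem_univ t₀)]
      rfl
    have hrest : ∑ t ∈ univ.erase t₀, ∑ i, a (t, i) • towerFamily e ϖ b (t, i) ∈ 𝔓 ^ (m + 1) :=
      sum_mem fun t ht => sum_mem fun i _ => smul_pow_mul_mem_maximalIdeal_pow he heram hϖ𝔓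
        (Ideal.pow_le_pow_right (Nat.succ_sub_ceilDiv_le_of_ne_mod he t.2
          (fun h => ne_of_mem_erase ht (Fin.ext h))) (hprev (t, i))) _
    have hrow : ∑ i, a (t₀, i) • (ϖ ^ (m % e) * b i) ∈ 𝔓 ^ (e * (m / e) + m % e + 1) := by
      rw [Nat.div_add_mod]
      simpa [hsplit] using sub_mem hsum hrest
    have hrow_coeff := coeff_mem_maximalIdeal_pow_succ heram hϖ hb
      (fun i => Nat.sub_mod_ceilDiv he m ▸ hprev (t₀, i)) hrow
    obtain ⟨t, i⟩ := p
    by_cases ht : t = t₀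
    · subst ht
      exact Ideal.pow_le_pow_right (Nat.succ_sub_mod_ceilDiv_le he m) (hrow_coeff i)
    · exact Ideal.pow_le_pow_right (Nat.succ_sub_ceilDiv_le_of_ne_mod he t.2
        (fun h => ht (Fin.ext h))) (hprev (t, i))

theorem sum_smul_towerFamily_mem_pow_iff (he : 0 < e)
    (heram : Ideal.map (algebraMap 𝔬 𝔒) 𝔭 = 𝔓 ^ e)
    (hϖ : Irreducible ϖ) (hb : ∀ a : ι → 𝔬, ∑ i, a i • b i ∈ 𝔓 ↔ ∀ i, a i ∈ 𝔭) (m : ℕ)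
    (a : Fin e × ι → 𝔬) :
    ∑ p, a p • towerFamily e ϖ b p ∈ 𝔓 ^ m ↔ ∀ p, a p ∈ 𝔭 ^ ((m - p.1) ⌈/⌉ e) :=
  ⟨coeff_mem_of_sum_smul_towerFamily_mem he heram hϖ hb m a, fun ha => sum_mem fun p _ =>
    smul_pow_mul_mem_maximalIdeal_pow he heram ((mem_maximalIdeal ϖ).mpr hϖ.not_isUnit) (ha p) _⟩

lemma linearIndependent_towerFamily (he : 0 < e)
    (heram : Ideal.map (algebraMap 𝔬 𝔒) 𝔭 = 𝔓 ^ e)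
    (hϖ : Irreducible ϖ) (hb : ∀ a : ι → 𝔬, ∑ i, a i • b i ∈ 𝔓 ↔ ∀ i, a i ∈ 𝔭) :
    LinearIndependent 𝔬 (towerFamily e ϖ b) := by
  refine Fintype.linearIndependent_iff.mpr fun a ha p => ?_
  have hpow (k : ℕ) : a p ∈ 𝔭 ^ k := by
    simpa [Nat.mul_ceilDiv_cancel_left he] using
      coeff_mem_of_sum_smul_towerFamily_mem he heram hϖ hb (e * k + p.1) a (ha ▸ zero_mem _) p
  have h := Submodule.mem_iInf _ |>.mpr hpow
  rwa [Ideal.iInf_pow_eq_bot_of_isLocalRing _ (maximalIdeal.isMaximal 𝔬).ne_top] at h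

theorem nonempty_quotient_maximalIdeal_pow_linearEquiv [Module.Finite 𝔬 𝔒] [DecidableEq ι]
    (he : 0 < e) (heram : Ideal.map (algebraMap 𝔬 𝔒) 𝔭 = 𝔓 ^ e)
    (φ : (𝔒 ⧸ 𝔓) ≃ₗ[𝔬] (ι → 𝔬 ⧸ 𝔭)) (m : ℕ) :
    Nonempty ((𝔒 ⧸ 𝔓 ^ m) ≃ₗ[𝔬] Π p : Fin e × ι, 𝔬 ⧸ 𝔭 ^ ((m - p.1) ⌈/⌉ e)) := by
  obtain ⟨ϖ, hϖ⟩ := IsDiscreteValuationRing.exists_irreducible 𝔒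
  obtain ⟨b, hb, hb_span⟩ := Submodule.exists_lift_of_quotient_linearEquiv_pi
    ((Submodule.Quotient.restrictScalarsEquiv 𝔬 𝔓).trans φ)
  let B := Module.Basis.mk (linearIndependent_towerFamily he heram hϖ hb)
    (span_towerFamily_eq_top heram hϖ hb_span).ge
  have hmap : (Submodule.pi Set.univ fun p : Fin e × ι => 𝔭 ^ ((m - p.1) ⌈/⌉ e)).map
      B.equivFun.symm.toLinearMap = (𝔓 ^ m).restrictScalars 𝔬 := by
    ext x
    have hx : x = ∑ p, B.equivFun x p • towerFamily e ϖ b p := by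
      simpa [B] using (B.sum_equivFun x).symm
    conv_rhs =>
      rw [Submodule.restrictScalars_mem, hx, sum_smul_towerFamily_mem_pow_iff he heram hϖ hb]
    simp [Submodule.map_equiv_eq_comap_symm, Submodule.mem_pi]
  exact ⟨(Submodule.Quotient.restrictScalarsEquiv 𝔬 _).symm ≪≫ₗ
    (Submodule.Quotient.equiv _ _ _ hmap).symm ≪≫ₗ Submodule.quotientPi _⟩

end Extension

theorem stmt_2_general
    (𝔬 𝔒 : Type) [CommRing 𝔬] [CommRing 𝔒] [IsDomain 𝔬] [IsDomain 𝔒]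
    [IsDiscreteValuationRing 𝔬] [IsDiscreteValuationRing 𝔒]
    [Algebra 𝔬 𝔒]
    [Module.Finite 𝔬 𝔒]
    (e d : ℕ) (he : 1 ≤ e)
    (heram : Ideal.map (algebraMap 𝔬 𝔒) (IsLocalRing.maximalIdeal 𝔬) =
      (IsLocalRing.maximalIdeal 𝔒) ^ e)
    (hd : Nonempty ((𝔒 ⧸ IsLocalRing.maximalIdeal 𝔒) ≃ₗ[𝔬]
      (Fin d → 𝔬 ⧸ IsLocalRing.maximalIdeal 𝔬)))
    (M : Type) [AddCommGroup M] [Module 𝔒 M] [Module 𝔬 M] [IsScalarTower 𝔬 𝔒 M]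
    (s : ℕ) (n : Fin s → ℕ)
    (hiso : Nonempty (M ≃ₗ[𝔒] ⨁ i : Fin s, 𝔒 ⧸ (IsLocalRing.maximalIdeal 𝔒) ^ (n i))) :
    Nonempty (M ≃ₗ[𝔬]
      ⨁ i : ℕ, (Fin (fEL e (i + 1) n * d) → 𝔬 ⧸ (IsLocalRing.maximalIdeal 𝔬) ^ (i + 1))) := by
  obtain ⟨φ⟩ := hd
  obtain ⟨ψ⟩ := hiso
  have : Subsingleton (𝔬 ⧸ maximalIdeal 𝔬 ^ 0) :=
    Ideal.Quotient.subsingleton_iff.mpr ((pow_zero _).trans Ideal.one_eq_top)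
  exact ⟨ψ.restrictScalars 𝔬 ≪≫ₗ
    DFinsupp.mapRange.linearEquiv (fun j =>
      (nonempty_quotient_maximalIdeal_pow_linearEquiv he heram φ (n j)).some ≪≫ₗ
        (linearEquivFunOnFintype 𝔬 _ _).symm) ≪≫ₗ
    (sigmaLcurryEquiv 𝔬).symm ≪≫ₗ
    lequivFiberwise 𝔬 (fun x : Σ _ : Fin s, Fin e × Fin d => (n x.1 - x.2.1) ⌈/⌉ e)
      (fun c => 𝔬 ⧸ maximalIdeal 𝔬 ^ c) ≪≫ₗ
    DFinsupp.mapRange.linearEquiv (fun k => LinearEquiv.funCongrLeft 𝔬 _ (finCongr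
      (by rw [card_sigma_ceilDiv_sub_eq_succ he, Fintype.card_fin])).symm)⟩

/-- With `𝔬 ⊆ 𝔒` discrete valuation rings as in the context
(residue degree `d`, ramification index `e`), a finitely generated torsion
`𝔒`-module `M` of partition `λ = (n_1 ≥ … ≥ n_s)` satisfies, as an `𝔬`-module,
`M ≅ ⊕_{i ≥ 1} (𝔬/𝔭^i)^(f_{e,i}(λ)·d)`. -/
theorem stmt_2
    (𝔬 𝔒 : Type) [CommRing 𝔬] [CommRing 𝔒] [IsDomain 𝔬] [IsDomain 𝔒]
    [IsDiscreteValuationRing 𝔬] [IsDiscreteValuationRing 𝔒]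
    [Algebra 𝔬 𝔒]
    (hinj : Function.Injective (algebraMap 𝔬 𝔒))
    [Module.Finite 𝔬 𝔒]
    (e d : ℕ) (he : 1 ≤ e)
    (heram : Ideal.map (algebraMap 𝔬 𝔒) (IsLocalRing.maximalIdeal 𝔬) =
      (IsLocalRing.maximalIdeal 𝔒) ^ e)
    (hd : Nonempty ((𝔒 ⧸ IsLocalRing.maximalIdeal 𝔒) ≃ₗ[𝔬]
      (Fin d → 𝔬 ⧸ IsLocalRing.maximalIdeal 𝔬)))
    (M : Type) [AddCommGroup M] [Module 𝔒 M] [Module 𝔬 M] [IsScalarTower 𝔬 𝔒 M]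
    [Module.Finite 𝔒 M] (htor : Module.IsTorsion 𝔒 M)
    (s : ℕ) (n : Fin s → ℕ) (hanti : Antitone n) (hpos : ∀ i, 1 ≤ n i)
    (hiso : Nonempty (M ≃ₗ[𝔒] ⨁ i : Fin s, 𝔒 ⧸ (IsLocalRing.maximalIdeal 𝔒) ^ (n i))) :
    Nonempty (M ≃ₗ[𝔬]
      ⨁ i : ℕ, (Fin (fEL e (i + 1) n * d) → 𝔬 ⧸ (IsLocalRing.maximalIdeal 𝔬) ^ (i + 1))) :=
  stmt_2_general 𝔬 𝔒 e d he heram hd M s n hiso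
end

section
/- Let n ≥ 1 and write n = l(p−1) + r with 0 < r ≤ p−1. Then, as abelian groups, 𝔒/𝔓^{n} ≅ (ℤ/p^{l+1}ℤ)^{r} ⊕ (ℤ/p^{l}ℤ)^{p−r−1}. -/
/-!
`𝔒` is free over `ℤ_[p]` with basis `1, π, …, π ^ (p - 2)`. Since `g = X ^ (p - 1) + p (1 + X w)`,
we get `p (1 + π w) = -π ^ (p - 1)`; as `1 + π w` is invertible modulo `π ^ (p - 1)`, the
elements `p` and `π ^ (p - 1)` divide each other. Hence `𝔓 ^ n = (p ^ l π ^ r)`, and an element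
lies in it iff its `π ^ i`-coordinate is divisible by `p ^ (l + 1)` for `i < r` and by `p ^ l`
for `i ≥ r`. Reducing the coordinates modulo these powers identifies `𝔒 / 𝔓 ^ n` with the product.
-/

open Polynomial

theorem pow_dvd_of_pow_dvd_mul_one_add_mul {A : Type*} [CommRing A] {π x w : A} {m : ℕ}
    (h : π ^ m ∣ x * (1 + π * w)) : π ^ m ∣ x := by
  have hgeom := mul_neg_geom_sum (π * -w) m
  rw [mul_pow] at hgeom
  have hx : x = x * (1 + π * w) * ∑ i ∈ Finset.range m, (π * -w) ^ i + π ^ m * (x * (-w) ^ m) := by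
    linear_combination (-x) * hgeom
  rw [hx]
  exact dvd_add (h.mul_right _) (dvd_mul_right _ _)

theorem Ideal.nonempty_quotient_addEquiv_of_surjective {A B : Type*} [CommRing A] [AddCommGroup B]
    {I : Ideal A} (φ : A →+ B) (hφ : Function.Surjective φ) (hI : ∀ x, φ x = 0 ↔ x ∈ I) :
    Nonempty ((A ⧸ I) ≃+ B) := by
  have hker : I.toAddSubgroup = φ.ker := by ext x; exact (hI x).symm
  exact ⟨(QuotientAddGroup.quotientAddEquivOfEq hker).trans
    (QuotientAddGroup.quotientKerEquivOfSurjective φ hφ)⟩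

namespace Module.Basis

variable {ι R M : Type*} [CommRing R] [AddCommGroup M] [Module R M]

def dvdCoords (b : Basis ι R M) (d : ι → R) : Submodule R M where
  carrier := {x | ∀ i, d i ∣ b.repr x i}
  add_mem' hx hy i := by simpa using dvd_add (hx i) (hy i)
  zero_mem' i := by simp
  smul_mem' c x hx i := by simpa using (hx i).mul_left c

theorem smul_mem_dvdCoords (b : Basis ι R M) {d : ι → R} {c : R} (h : ∀ i, d i ∣ c) (x : M) :
    c • x ∈ b.dvdCoords d := fun i => by
  simpa using (h i).mul_right _

end Module.Basis

namespace PowerBasis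

variable {R A : Type*} [CommRing R] [CommRing A] [Algebra R A] (pb : PowerBasis R A) {q : R}
  (l r : ℕ)

theorem smul_gen_pow_mem_dvdCoords (hq : algebraMap R A q ∣ pb.gen ^ pb.dim) {k : ℕ}
    (hk : r ≤ k) :
    q ^ l • pb.gen ^ k ∈ pb.basis.dvdCoords fun i => q ^ if (i : ℕ) < r then l + 1 else l := by
  by_cases hkd : k < pb.dim
  · intro i
    rw [map_smul, show pb.gen ^ k = pb.basis ⟨k, hkd⟩ by simp, pb.basis.repr_self]
    by_cases hi : i = ⟨k, hkd⟩
    · subst hi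
      simp [show ¬ k < r by omega]
    · simp [Ne.symm hi]
  · obtain ⟨v, hv⟩ := hq
    have hsplit : q ^ l • pb.gen ^ k = q ^ (l + 1) • (v * pb.gen ^ (k - pb.dim)) := by
      simp only [Algebra.smul_def, map_pow, ← pow_sub_mul_pow pb.gen (not_lt.1 hkd), hv]
      ring
    rw [hsplit]
    exact pb.basis.smul_mem_dvdCoords (fun i => pow_dvd_pow _ (by split_ifs <;> omega)) _

theorem smul_gen_pow_mul_mem_dvdCoords (hq : algebraMap R A q ∣ pb.gen ^ pb.dim) (x : A) :
    q ^ l • (pb.gen ^ r * x) ∈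
      pb.basis.dvdCoords fun i => q ^ if (i : ℕ) < r then l + 1 else l := by
  rw [← pb.basis.sum_repr x, Finset.mul_sum, Finset.smul_sum]
  refine Submodule.sum_mem _ fun j _ => ?_
  rw [mul_smul_comm, smul_comm, pb.coe_basis, ← pow_add]
  exact Submodule.smul_mem _ _ (pb.smul_gen_pow_mem_dvdCoords l r hq (Nat.le_add_right r j))

theorem gen_pow_dvd_algebraMap_pow_mul (hq : pb.gen ^ pb.dim ∣ algebraMap R A q)
    (hr : r ≤ pb.dim) (k : ℕ) :
    pb.gen ^ (l * pb.dim + r) ∣ algebraMap R A q ^ (if k < r then l + 1 else l) * pb.gen ^ k := by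
  split_ifs with hk
  · refine dvd_mul_of_dvd_left ?_ _
    calc pb.gen ^ (l * pb.dim + r) ∣ pb.gen ^ (pb.dim * (l + 1)) := pow_dvd_pow _ (by nlinarith)
      _ ∣ algebraMap R A q ^ (l + 1) := by rw [pow_mul]; exact pow_dvd_pow_of_dvd hq _
  · rw [pow_add, mul_comm l, pow_mul]
    exact mul_dvd_mul (pow_dvd_pow_of_dvd hq _) (pow_dvd_pow _ (by omega))

theorem gen_pow_dvd_iff (hq : algebraMap R A q ∣ pb.gen ^ pb.dim)
    (hq' : pb.gen ^ pb.dim ∣ algebraMap R A q) (hr : r ≤ pb.dim) (x : A) :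
    pb.gen ^ (l * pb.dim + r) ∣ x ↔
      ∀ i : Fin pb.dim, q ^ (if (i : ℕ) < r then l + 1 else l) ∣ pb.basis.repr x i := by
  constructor
  · rintro ⟨c, rfl⟩
    obtain ⟨v, hv⟩ := hq
    have hfactor : pb.gen ^ (l * pb.dim + r) * c = q ^ l • (pb.gen ^ r * (v ^ l * c)) := by
      rw [Algebra.smul_def, map_pow, pow_add, mul_comm l, pow_mul, hv]
      ring
    rw [hfactor]
    exact pb.smul_gen_pow_mul_mem_dvdCoords l r ⟨v, hv⟩ _
  · intro hx
    rw [← pb.basis.sum_repr x]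
    refine Finset.dvd_sum fun i _ => ?_
    obtain ⟨c, hc⟩ := hx i
    rw [hc, pb.coe_basis, Algebra.smul_def, map_mul, map_pow, mul_right_comm]
    exact dvd_mul_of_dvd_left (pb.gen_pow_dvd_algebraMap_pow_mul l r hq' hr i) _

end PowerBasis

/-- `((X + 1) ^ p - 1) / X`, which is the cyclotomic polynomial `Φ_p (X + 1)` when `p` is prime. -/
noncomputable def shiftedCyclotomic (R : Type*) [CommSemiring R] (p : ℕ) : R[X] :=
  ∑ i ∈ Finset.Icc 1 p, C (p.choose i : R) * X ^ (i - 1)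

section ShiftedCyclotomic

variable (R : Type*) [CommRing R] {p : ℕ}

theorem shiftedCyclotomic_eq_X_pow_add (hp : 1 ≤ p) :
    shiftedCyclotomic R p =
      X ^ (p - 1) + ∑ i ∈ Finset.Ico 1 p, C (p.choose i : R) * X ^ (i - 1) := by
  rw [shiftedCyclotomic, ← Finset.Ico_insert_right hp, Finset.sum_insert (by simp)]
  simp

theorem degree_sum_Ico_choose_lt (p : ℕ) :
    (∑ i ∈ Finset.Ico 1 p, C (p.choose i : R) * X ^ (i - 1)).degree < ↑(p - 1) := by
  refine (degree_sum_le _ _).trans_lt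
    ((Finset.sup_lt_iff (WithBot.bot_lt_coe _)).2 fun i hi => ?_)
  refine (degree_C_mul_X_pow_le _ _).trans_lt ?_
  rw [Finset.mem_Ico] at hi
  exact_mod_cast (by omega : i - 1 < p - 1)

theorem monic_shiftedCyclotomic (hp : 1 ≤ p) : (shiftedCyclotomic R p).Monic := by
  rw [shiftedCyclotomic_eq_X_pow_add R hp]
  exact monic_X_pow_add (degree_sum_Ico_choose_lt R p)

theorem natDegree_shiftedCyclotomic [Nontrivial R] (hp : 1 ≤ p) :
    (shiftedCyclotomic R p).natDegree = p - 1 := by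
  rw [shiftedCyclotomic_eq_X_pow_add R hp, natDegree_add_eq_left_of_degree_lt, natDegree_X_pow]
  simpa using degree_sum_Ico_choose_lt R p

variable {A : Type*} [CommRing A] [Algebra R A] {π : A}

theorem exists_natCast_mul_one_add_mul_add_pow_eq_zero (hp : p.Prime)
    (hπ : aeval π (shiftedCyclotomic R p) = 0) :
    ∃ w : A, (p : A) * (1 + π * w) + π ^ (p - 1) = 0 := by
  refine ⟨∑ i ∈ Finset.Ico 2 p, ((p.choose i / p : ℕ) : A) * π ^ (i - 2), ?_⟩
  rw [shiftedCyclotomic_eq_X_pow_add R hp.one_le, map_add, map_sum,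
    Finset.sum_eq_sum_Ico_succ_bot hp.one_lt] at hπ
  have hterm : ∀ i ∈ Finset.Ico 2 p, aeval π (C (p.choose i : R) * X ^ (i - 1)) =
      p * π * (((p.choose i / p : ℕ) : A) * π ^ (i - 2)) := by
    intro i hi
    rw [Finset.mem_Ico] at hi
    obtain ⟨c, hc⟩ := hp.dvd_choose_self (k := i) (by omega) (by omega)
    rw [hc, Nat.mul_div_cancel_left c hp.pos, show i - 1 = i - 2 + 1 by omega]
    simp only [map_mul, map_natCast, map_pow, aeval_X, Nat.cast_mul]
    ring
  rw [Finset.sum_congr rfl hterm, ← Finset.mul_sum] at hπ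
  simp only [map_natCast, Nat.choose_one_right, map_pow, aeval_X, Nat.sub_self, pow_zero,
    mul_one] at hπ
  linear_combination hπ

theorem natCast_dvd_pow_of_aeval_shiftedCyclotomic (hp : p.Prime)
    (hπ : aeval π (shiftedCyclotomic R p) = 0) : (p : A) ∣ π ^ (p - 1) := by
  obtain ⟨w, hw⟩ := exists_natCast_mul_one_add_mul_add_pow_eq_zero R hp hπ
  exact ⟨-(1 + π * w), by linear_combination hw⟩

theorem pow_dvd_natCast_of_aeval_shiftedCyclotomic (hp : p.Prime)
    (hπ : aeval π (shiftedCyclotomic R p) = 0) : π ^ (p - 1) ∣ (p : A) := by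
  obtain ⟨w, hw⟩ := exists_natCast_mul_one_add_mul_add_pow_eq_zero R hp hπ
  exact pow_dvd_of_pow_dvd_mul_one_add_mul (w := w) ⟨-1, by linear_combination hw⟩

end ShiftedCyclotomic

theorem PadicInt.toZModPow_eq_zero_iff {p : ℕ} [Fact p.Prime] {n : ℕ} {z : ℤ_[p]} :
    toZModPow n z = 0 ↔ (p : ℤ_[p]) ^ n ∣ z := by
  rw [← RingHom.mem_ker, ker_toZModPow, Ideal.mem_span_singleton]

namespace Module.Basis

variable {p : ℕ} [Fact p.Prime] {M : Type*} [AddCommGroup M] [Module ℤ_[p] M] {r s : ℕ}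

noncomputable def toZModPowCoords (b : Basis (Fin (r + s)) ℤ_[p] M) (a a' : ℕ) :
    M →+ (Fin r → ZMod (p ^ a)) × (Fin s → ZMod (p ^ a')) where
  toFun x := (fun i => PadicInt.toZModPow a (b.repr x (Fin.castAdd s i)),
    fun j => PadicInt.toZModPow a' (b.repr x (Fin.natAdd r j)))
  map_zero' := by ext <;> simp
  map_add' x y := by ext <;> simp

theorem toZModPowCoords_surjective (b : Basis (Fin (r + s)) ℤ_[p] M) (a a' : ℕ) :
    Function.Surjective (b.toZModPowCoords a a') := by
  rintro ⟨t, t'⟩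
  choose c hc using fun i => ZMod.ringHom_surjective (PadicInt.toZModPow a) (t i)
  choose c' hc' using fun j => ZMod.ringHom_surjective (PadicInt.toZModPow a') (t' j)
  refine ⟨b.equivFun.symm (Fin.append c c'), ?_⟩
  have hrepr : ∀ i, b.repr (b.equivFun.symm (Fin.append c c')) i = Fin.append c c' i :=
    fun i => b.coord_equivFun_symm i _
  ext <;> simp only [toZModPowCoords, AddMonoidHom.coe_mk, ZeroHom.coe_mk, hrepr] <;>
    simp [hc, hc']

theorem toZModPowCoords_eq_zero_iff (b : Basis (Fin (r + s)) ℤ_[p] M) (a a' : ℕ) (x : M) :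
    b.toZModPowCoords a a' x = 0 ↔
      ∀ i : Fin (r + s), (p : ℤ_[p]) ^ (if (i : ℕ) < r then a else a') ∣ b.repr x i := by
  simp [toZModPowCoords, Prod.ext_iff, funext_iff, Fin.forall_fin_add,
    PadicInt.toZModPow_eq_zero_iff]

end Module.Basis

theorem stmt_4_general (p : ℕ) [Fact p.Prime]
    (g : ℤ_[p][X]) (hg : g = ∑ i ∈ Finset.Icc 1 p, C (p.choose i : ℤ_[p]) * X ^ (i - 1))
    (n l r : ℕ) (hn : n = l * (p - 1) + r) (hrp : r ≤ p - 1) :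
    Nonempty (((ℤ_[p][X] ⧸ Ideal.span {g}) ⧸
        (Ideal.span {Ideal.Quotient.mk (Ideal.span {g}) X}) ^ n) ≃+
      ((Fin r → ZMod (p ^ (l + 1))) × (Fin (p - r - 1) → ZMod (p ^ l)))) := by
  have hp : p.Prime := Fact.out
  replace hg : g = shiftedCyclotomic ℤ_[p] p := hg
  subst hg
  set π := AdjoinRoot.root (shiftedCyclotomic ℤ_[p] p)
  show Nonempty ((AdjoinRoot _ ⧸ Ideal.span {π} ^ n) ≃+ _)
  have hπ : aeval π (shiftedCyclotomic ℤ_[p] p) = 0 := by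
    rw [AdjoinRoot.aeval_eq, AdjoinRoot.mk_self]
  let pb := AdjoinRoot.powerBasis' (monic_shiftedCyclotomic ℤ_[p] hp.one_le)
  have hgen : pb.gen = π := AdjoinRoot.powerBasis'_gen _
  have hdim : pb.dim = p - 1 := natDegree_shiftedCyclotomic ℤ_[p] hp.one_le
  have hq : algebraMap ℤ_[p] _ (p : ℤ_[p]) ∣ pb.gen ^ pb.dim := by
    rw [hgen, hdim, map_natCast]
    exact natCast_dvd_pow_of_aeval_shiftedCyclotomic ℤ_[p] hp hπ
  have hq' : pb.gen ^ pb.dim ∣ algebraMap ℤ_[p] _ (p : ℤ_[p]) := by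
    rw [hgen, hdim, map_natCast]
    exact pow_dvd_natCast_of_aeval_shiftedCyclotomic ℤ_[p] hp hπ
  let e := finCongr (show pb.dim = r + (p - r - 1) by omega)
  let b := pb.basis.reindex e
  refine Ideal.nonempty_quotient_addEquiv_of_surjective (b.toZModPowCoords (l + 1) l)
    (b.toZModPowCoords_surjective _ _) fun x => ?_
  rw [b.toZModPowCoords_eq_zero_iff, Ideal.span_singleton_pow, Ideal.mem_span_singleton, hn,
    ← hdim, ← hgen, pb.gen_pow_dvd_iff l r hq hq' (hdim ▸ hrp), ← e.symm.forall_congr_right]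
  simp [b, e]

/-- Let `𝔒 = ℤ_p[X]/(g)` where `g = Σ_{i=1}^p C(p,i) X^(i-1)`,
a discrete valuation ring with maximal ideal `𝔓 = (π)`, `π` the image of `X`.
If `n = l(p-1) + r` with `0 < r ≤ p-1`, then as abelian groups
`𝔒/𝔓^n ≅ (ℤ/p^(l+1)ℤ)^r ⊕ (ℤ/p^lℤ)^(p-r-1)`. -/
theorem stmt_4 (p : ℕ) [Fact p.Prime]
    (g : ℤ_[p][X]) (hg : g = ∑ i ∈ Finset.Icc 1 p, C (p.choose i : ℤ_[p]) * X ^ (i - 1))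
    (n l r : ℕ) (hn : n = l * (p - 1) + r) (hr0 : 0 < r) (hrp : r ≤ p - 1) :
    Nonempty (((ℤ_[p][X] ⧸ Ideal.span {g}) ⧸
        (Ideal.span {Ideal.Quotient.mk (Ideal.span {g}) X}) ^ n) ≃+
      ((Fin r → ZMod (p ^ (l + 1))) × (Fin (p - r - 1) → ZMod (p ^ l)))) :=
  stmt_4_general p g hg n l r hn hrp
end

section
/- For every integer n ≥ 1, the (n+1)-st term of the lower central series of H satisfies γ_{n+1}(H) = { a·(x−1)^n : a ∈ A }, the image of A under the n-fold iterate of the map a ↦ [a,x]. -/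
/-!
Since `A` is abelian and normal, `δ a = [a, x]` is an endomorphism of `A`, and for every
subgroup `B ≤ A` normal in `H` the commutator `⁅B, H⁆` is exactly `δ(B)`: this image is a normal
subgroup (it is stable under `x` and centralised by `A`), and modulo it every `b ∈ B` commutes
with `x` and with `A`, hence with all of `H = ⟨A, x⟩`. The same generation argument gives
`⁅H, H⁆ = ⁅A, H⁆`, and induction on `n` finishes the proof.
-/

open Subgroup
open scoped commutatorElement

section Generators

variable {G : Type*} [Group G] {S : Set G}

theorem commutatorElement_mem_iff_commute {N : Subgroup G} [N.Normal] {g h : G} :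
    ⁅g, h⁆ ∈ N ↔ Commute (g : G ⧸ N) h := by
  rw [← QuotientGroup.eq_one_iff, ← commutatorElement_eq_one_iff_commute]
  exact Iff.of_eq (congrArg (· = 1) (map_commutatorElement (QuotientGroup.mk' N) g h))

theorem commutatorElement_mem_comm {N : Subgroup G} {g h : G} : ⁅g, h⁆ ∈ N ↔ ⁅h, g⁆ ∈ N := by
  rw [← inv_mem_iff, commutatorElement_inv]

theorem commutatorElement_mem_of_closure_eq_top (hS : closure S = ⊤) {N : Subgroup G} [N.Normal]
    {g : G} (hg : ∀ s ∈ S, ⁅g, s⁆ ∈ N) (h : G) : ⁅g, h⁆ ∈ N := by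
  have hle : closure S ≤ (centralizer {(g : G ⧸ N)}).comap (QuotientGroup.mk' N) :=
    closure_le _ |>.2 fun s hs =>
      mem_centralizer_singleton_iff.2 (commutatorElement_mem_iff_commute.1 (hg s hs)).symm
  rw [hS] at hle
  exact commutatorElement_mem_iff_commute.2 (mem_centralizer_singleton_iff.1 (hle (mem_top h))).symm

theorem commutator_le_of_closure_eq_top (hS : closure S = ⊤) {N : Subgroup G} [N.Normal]
    {K : Subgroup G} (hK : ∀ k ∈ K, ∀ s ∈ S, ⁅k, s⁆ ∈ N) : ⁅K, ⊤⁆ ≤ N :=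
  commutator_le.2 fun k hk h _ => commutatorElement_mem_of_closure_eq_top hS (hK k hk) h

theorem commutator_top_top_le_of_closure_eq_top (hS : closure S = ⊤) {N : Subgroup G} [N.Normal]
    (hSN : ∀ s ∈ S, ∀ t ∈ S, ⁅s, t⁆ ∈ N) : ⁅(⊤ : Subgroup G), ⊤⁆ ≤ N :=
  commutator_le_of_closure_eq_top hS fun g _ s hs =>
    commutatorElement_mem_comm.1 (commutatorElement_mem_of_closure_eq_top hS (hSN s hs) g)

theorem normal_of_closure_eq_top (hS : closure S = ⊤) {K : Subgroup G}
    (hK : ∀ s ∈ S, ∀ k ∈ K, s * k * s⁻¹ ∈ K ∧ s⁻¹ * k * s ∈ K) : K.Normal := by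
  refine normalizer_eq_top_iff.1 (top_le_iff.1 (hS ▸ closure_le _ |>.2 fun s hs => ?_))
  refine mem_normalizer_iff.2 fun k => ⟨fun hk => (hK s hs k hk).1, fun hk => ?_⟩
  simpa [mul_assoc] using (hK s hs _ hk).2

theorem commutator_top_top_eq_of_closure_union_singleton {A : Subgroup G} [A.Normal] {x : G}
    (hgen : closure ((A : Set G) ∪ {x}) = ⊤) : ⁅(⊤ : Subgroup G), ⊤⁆ = ⁅A, (⊤ : Subgroup G)⁆ := by
  refine le_antisymm (commutator_top_top_le_of_closure_eq_top hgen ?_)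
    (commutator_mono le_top (le_refl (⊤ : Subgroup G)))
  rintro s (hs | rfl) t ht
  · exact commutator_mem_commutator hs (mem_top t)
  · rcases ht with ht | rfl
    · exact commutatorElement_mem_comm.1 (commutator_mem_commutator ht (mem_top s))
    · rw [commutatorElement_self]
      exact one_mem _

end Generators

namespace AbelianByCyclic

variable {H : Type*} [Group H]

/-- The paper's `a·(x−1) = [a, x] = a⁻¹x⁻¹ax`; in Mathlib's convention this is `⁅a⁻¹, x⁻¹⁆`. -/
def delta (x a : H) : H := a⁻¹ * x⁻¹ * a * x

theorem delta_eq_commutatorElement (x a : H) : delta x a = ⁅a⁻¹, x⁻¹⁆ := by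
  simp only [delta, commutatorElement_def, inv_inv]

theorem conj_delta (g x a : H) : g * delta x a * g⁻¹ = delta (g * x * g⁻¹) (g * a * g⁻¹) := by
  simp only [delta]; group

theorem commutatorElement_eq_inv_delta (b x : H) : ⁅b, x⁆ = (delta x (x * b⁻¹ * x⁻¹))⁻¹ := by
  simp only [delta, commutatorElement_def]; group

theorem delta_mem {N : Subgroup H} [N.Normal] (x : H) {a : H} (ha : a ∈ N) : delta x a ∈ N := by
  rw [delta_eq_commutatorElement]
  exact commutator_le_left N ⊤ (commutator_mem_commutator (inv_mem ha) (mem_top _))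

variable {A : Subgroup H} [A.Normal]

theorem delta_mul (hA : ∀ a ∈ A, ∀ b ∈ A, a * b = b * a) (x : H) {a b : H} (ha : a ∈ A)
    (hb : b ∈ A) : delta x (a * b) = delta x a * delta x b := by
  have hcomm : b⁻¹ * delta x a = delta x a * b⁻¹ := hA _ (inv_mem hb) _ (delta_mem x ha)
  calc delta x (a * b) = b⁻¹ * delta x a * (x⁻¹ * b * x) := by simp only [delta]; group
    _ = delta x a * b⁻¹ * (x⁻¹ * b * x) := by rw [hcomm]
    _ = delta x a * delta x b := by simp only [delta]; group

theorem delta_inv (hA : ∀ a ∈ A, ∀ b ∈ A, a * b = b * a) (x : H) {a : H} (ha : a ∈ A) :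
    delta x a⁻¹ = (delta x a)⁻¹ :=
  eq_inv_of_mul_eq_one_left <| by
    rw [← delta_mul hA x (inv_mem ha) ha, inv_mul_cancel]
    simp [delta]

def deltaImage (hA : ∀ a ∈ A, ∀ b ∈ A, a * b = b * a) (x : H) (B : Subgroup H) (hBA : B ≤ A) :
    Subgroup H where
  carrier := delta x '' B
  mul_mem' := by
    rintro _ _ ⟨a, ha, rfl⟩ ⟨b, hb, rfl⟩
    exact ⟨a * b, mul_mem ha hb, delta_mul hA x (hBA ha) (hBA hb)⟩
  one_mem' := ⟨1, one_mem B, by simp [delta]⟩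
  inv_mem' := by
    rintro _ ⟨a, ha, rfl⟩
    exact ⟨a⁻¹, inv_mem ha, delta_inv hA x (hBA ha)⟩

section DeltaImage

variable (hA : ∀ a ∈ A, ∀ b ∈ A, a * b = b * a) (x : H) {B : Subgroup H} (hBA : B ≤ A)

theorem coe_deltaImage : (deltaImage hA x B hBA : Set H) = delta x '' B := rfl

theorem deltaImage_le : deltaImage hA x B hBA ≤ A := by
  rintro _ ⟨b, hb, rfl⟩
  exact delta_mem x (hBA hb)

theorem deltaImage_le_commutator : deltaImage hA x B hBA ≤ ⁅B, ⊤⁆ := by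
  rintro _ ⟨b, hb, rfl⟩
  rw [delta_eq_commutatorElement]
  exact commutator_mem_commutator (inv_mem hb) (mem_top _)

theorem conj_mem_deltaImage [B.Normal] {g : H} (hg : Commute g x) {c : H}
    (hc : c ∈ deltaImage hA x B hBA) : g * c * g⁻¹ ∈ deltaImage hA x B hBA := by
  obtain ⟨b, hb, rfl⟩ := hc
  refine ⟨g * b * g⁻¹, ‹B.Normal›.conj_mem b hb g, ?_⟩
  rw [conj_delta, hg.eq, mul_inv_cancel_right]

theorem deltaImage_normal [B.Normal] (hgen : closure ((A : Set H) ∪ {x}) = ⊤) :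
    (deltaImage hA x B hBA).Normal := by
  refine normal_of_closure_eq_top hgen ?_
  rintro s (hs | rfl) c hc
  · have hcs : s * c = c * s := hA s hs c (deltaImage_le hA x hBA hc)
    constructor
    · rwa [hcs, mul_inv_cancel_right]
    · rwa [mul_assoc, ← hcs, inv_mul_cancel_left]
  · exact ⟨conj_mem_deltaImage hA s hBA (Commute.refl s) hc,
      by simpa using conj_mem_deltaImage hA s hBA (Commute.refl s).inv_left hc⟩

theorem commutatorElement_mem_deltaImage [B.Normal] {b s : H} (hb : b ∈ B)
    (hs : s ∈ (A : Set H) ∪ {x}) : ⁅b, s⁆ ∈ deltaImage hA x B hBA := by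
  rcases hs with hs | rfl
  · rw [commutatorElement_eq_one_iff_commute.2 (hA b (hBA hb) s hs)]
    exact one_mem _
  · rw [commutatorElement_eq_inv_delta]
    exact inv_mem ⟨_, ‹B.Normal›.conj_mem _ (inv_mem hb) s, rfl⟩

theorem commutator_eq_deltaImage [B.Normal] (hgen : closure ((A : Set H) ∪ {x}) = ⊤) :
    ⁅B, ⊤⁆ = deltaImage hA x B hBA :=
  haveI := deltaImage_normal hA x hBA hgen
  le_antisymm (commutator_le_of_closure_eq_top hgen fun _ hb _ hs =>
      commutatorElement_mem_deltaImage hA x hBA hb hs)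
    (deltaImage_le_commutator hA x hBA)

end DeltaImage

theorem lowerCentralSeries_le {x : H} (hgen : closure ((A : Set H) ∪ {x}) = ⊤) {n : ℕ}
    (hn : 1 ≤ n) :
    (⊤ : Subgroup H).lowerCentralSeries n ≤ A :=
  calc (⊤ : Subgroup H).lowerCentralSeries n ≤ (⊤ : Subgroup H).lowerCentralSeries 1 :=
        Subgroup.lowerCentralSeries_antitone _ hn
    _ = ⁅A, (⊤ : Subgroup H)⁆ := commutator_top_top_eq_of_closure_union_singleton hgen
    _ ≤ A := commutator_le_left A ⊤

theorem coe_lowerCentralSeries_succ (hA : ∀ a ∈ A, ∀ b ∈ A, a * b = b * a) (x : H)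
    (hgen : closure ((A : Set H) ∪ {x}) = ⊤) (n : ℕ) :
    ((⊤ : Subgroup H).lowerCentralSeries (n + 1) : Set H) = (delta x)^[n + 1] '' A := by
  induction n with
  | zero =>
    rw [Subgroup.lowerCentralSeries_succ, Subgroup.lowerCentralSeries_zero,
      commutator_top_top_eq_of_closure_union_singleton hgen,
      commutator_eq_deltaImage hA x le_rfl hgen, coe_deltaImage, Function.iterate_one]
  | succ n ih =>
    rw [Subgroup.lowerCentralSeries_succ,
      commutator_eq_deltaImage hA x (lowerCentralSeries_le hgen n.succ_pos) hgen,
      coe_deltaImage, ih, ← Set.image_comp, ← Function.iterate_succ']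

end AbelianByCyclic

theorem stmt_5_general
    (H : Type) [Group H] (A : Subgroup H) [A.Normal]
    (hab : ∀ a ∈ A, ∀ b ∈ A, a * b = b * a)
    (x : H)
    (hgen : Subgroup.closure ((A : Set H) ∪ {x}) = ⊤) :
    ∀ n : ℕ, 1 ≤ n →
      (((⊤ : Subgroup H).lowerCentralSeries n : Subgroup H) : Set H) =
        (fun a : H => a⁻¹ * x⁻¹ * a * x)^[n] '' (A : Set H) := by
  intro n hn
  obtain ⟨m, rfl⟩ := Nat.exists_eq_add_of_le' hn
  exact AbelianByCyclic.coe_lowerCentralSeries_succ hab x hgen m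

/-- Let `A` be a finite abelian normal `p`-subgroup of a group `H`,
and `x ∈ H` such that `H = ⟨A, x⟩`, the image of `x` generates `H/A` and has
`p`-power order, and `∏_{i=0}^{p-1} x^{-i} a x^{i} = 1` for all `a ∈ A` (splitting
condition).  Then for every `n ≥ 1`, `γ_{n+1}(H) = A·(x-1)^n`, the image of `A`
under the `n`-fold iterate of `a ↦ [a,x] = a⁻¹x⁻¹ax`.
(Here `lowerCentralSeries H n = γ_{n+1}(H)` in the paper's numbering.) -/
theorem stmt_5 (p : ℕ) (hp : p.Prime)
    (H : Type) [Group H] (A : Subgroup H) [A.Normal] [Finite A]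
    (hab : ∀ a ∈ A, ∀ b ∈ A, a * b = b * a)
    (hpgrp : IsPGroup p A)
    (x : H)
    (hgen : Subgroup.closure ((A : Set H) ∪ {x}) = ⊤)
    (hxgen : ∀ q : H ⧸ A, q ∈ Subgroup.zpowers (QuotientGroup.mk x : H ⧸ A))
    (hord : ∃ k : ℕ, orderOf (QuotientGroup.mk x : H ⧸ A) = p ^ k)
    (hsplit : ∀ a ∈ A, ((List.range p).map (fun i => (x ^ i)⁻¹ * a * x ^ i)).prod = 1) :
    ∀ n : ℕ, 1 ≤ n →
      (((⊤ : Subgroup H).lowerCentralSeries n : Subgroup H) : Set H) =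
        (fun a : H => a⁻¹ * x⁻¹ * a * x)^[n] '' (A : Set H) :=
  stmt_5_general H A hab x hgen
end

section
/- Suppose A is nontrivial. Then H is nilpotent of nilpotency class n_1 (the largest part of λ), and the exponent of A is p^{m}, where m = ⌈ n_1/(p−1) ⌉ is the smallest integer ≥ n_1/(p−1). -/
/-!
In `𝔒 = ℤ_p[X]/(g)` we have `X · g = (X + 1)^p - 1`, so `(1 + π)^p = 1`, and the Eisenstein shape
of `g` gives `p · (1 + π t) = -π^(p-1)` for some `t`; as `1 + π t` is a unit modulo every power
of `𝔓`, `p^t ∈ 𝔓^N ↔ N ≤ t (p - 1)`, and `g` being Eisenstein makes `𝔒` a domain in which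
`π^j ∈ 𝔓^N ↔ N ≤ j`.

Every `y ∈ H` is `x^j b` with `b ∈ A`, so conjugation by `y` acts on `M = ⊕ 𝔒/𝔓^(n_i)` as
multiplication by `(1 + π)^j ≡ 1 (mod π)`. Hence `θ ⁅a, y⁆ ∈ π · 𝔒 θ a` for `a ∈ A`, and by
induction `γ_(k+1)(H)` lies in `θ⁻¹(π^(k+1) M)`; as `π^(n_1)` kills `M`, `γ_(n_1 + 1)(H) = 1`.
Conversely `θ ⁅x⁻¹, c⁆ = π θ c`, so iterating from `θ⁻¹(1 ∈ 𝔒/𝔓^(n_1))` gives an element of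
`γ_(n_1)(H)` with image `π^(n_1 - 1) ≠ 0`. The exponent of `A ≅ M` is the least `p^t` with
`p^t ∈ 𝔓^(n_1)`, i.e. with `n_1 ≤ t (p - 1)`.
-/

open DirectSum Polynomial
open scoped commutatorElement

section SpanPow

variable {R : Type*} [CommRing R] {π : R}

theorem mul_mem_span_pow_iff_of_sub_one_mem {a u : R} (hu : u - 1 ∈ Ideal.span {π}) (N : ℕ) :
    a * u ∈ Ideal.span {π} ^ N ↔ a ∈ Ideal.span {π} ^ N := by
  set q := Ideal.Quotient.mk (Ideal.span {π} ^ N)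
  have hnil : IsNilpotent (q (u - 1)) := by
    obtain ⟨r, hr⟩ := Ideal.mem_span_singleton'.1 hu
    refine ⟨N, ?_⟩
    rw [← hr, ← map_pow, Ideal.Quotient.eq_zero_iff_mem, mul_pow]
    exact Ideal.mul_mem_left _ _ (Ideal.pow_mem_pow (Ideal.mem_span_singleton_self π) N)
  have hunit : IsUnit (q u) := by simpa using hnil.isUnit_one_add
  simp only [← Ideal.Quotient.eq_zero_iff_mem, map_mul]
  exact hunit.mul_left_eq_zero

theorem pow_mem_span_pow_iff_of_mul_one_add_eq {c v : R} {e : ℕ}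
    (h : c * (1 + π * v) = -π ^ e) (t N : ℕ) :
    c ^ t ∈ Ideal.span {π} ^ N ↔ π ^ (t * e) ∈ Ideal.span {π} ^ N := by
  have hu : (1 + π * v) ^ t - 1 ∈ Ideal.span {π} := by
    rw [Ideal.mem_span_singleton, ← one_pow t]
    exact (dvd_mul_right π v).trans (by simpa using sub_dvd_pow_sub_pow (1 + π * v) 1 t)
  rw [← mul_mem_span_pow_iff_of_sub_one_mem hu, ← mul_pow, h, neg_pow, ← pow_mul, mul_comm e,
    Ideal.unit_mul_mem_iff_mem _ (isUnit_one.neg.pow t)]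

theorem pow_mem_span_pow_iff [IsDomain R] (hπ : π ≠ 0) (hπu : ¬IsUnit π) (j N : ℕ) :
    π ^ j ∈ Ideal.span {π} ^ N ↔ N ≤ j := by
  rw [Ideal.span_singleton_pow, Ideal.mem_span_singleton]
  exact pow_dvd_pow_iff hπ hπu

end SpanPow

section DirectSumQuotient

variable {ι R : Type*} [DecidableEq ι] [CommRing R] (I : ι → Ideal R)

theorem DirectSum.smul_of_one_eq_zero_iff (r : R) (i : ι) :
    r • DirectSum.of (fun i => R ⧸ I i) i 1 = 0 ↔ r ∈ I i := by
  rw [← DirectSum.of_smul, map_eq_zero_iff _ (DirectSum.of_injective i),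
    ← map_one (Ideal.Quotient.mk (I i)), ← Ideal.Quotient.mk_eq_mk, ← Submodule.Quotient.mk_smul,
    smul_eq_mul, mul_one, Submodule.Quotient.mk_eq_zero]

theorem DirectSum.smul_eq_zero_of_forall_mem {r : R} (hr : ∀ i, r ∈ I i) (v : ⨁ i, R ⧸ I i) :
    r • v = 0 := by
  induction v using DirectSum.induction_on with
  | zero => exact smul_zero r
  | of i y =>
    obtain ⟨y, rfl⟩ := Ideal.Quotient.mk_surjective y
    rw [← DirectSum.of_smul, ← Ideal.Quotient.mk_eq_mk, ← Submodule.Quotient.mk_smul, smul_eq_mul,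
      (Submodule.Quotient.mk_eq_zero _).2 (Ideal.mul_mem_right _ _ (hr i)), map_zero]
  | add v w hv hw => rw [smul_add, hv, hw, add_zero]

theorem DirectSum.forall_smul_eq_zero_iff {i₀ : ι} (h : ∀ i, I i₀ ≤ I i) (r : R) :
    (∀ v : ⨁ i, R ⧸ I i, r • v = 0) ↔ r ∈ I i₀ :=
  ⟨fun hr => (smul_of_one_eq_zero_iff I r i₀).1 (hr _),
    fun hr => smul_eq_zero_of_forall_mem I fun i => h i hr⟩

end DirectSumQuotient

noncomputable def binomialQuotient (R : Type*) [Semiring R] (p : ℕ) : R[X] :=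
  ∑ i ∈ Finset.Icc 1 p, C (p.choose i : R) * X ^ (i - 1)

section BinomialQuotient

variable (R : Type*) (p : ℕ)

theorem coeff_binomialQuotient [Semiring R] (j : ℕ) :
    (binomialQuotient R p).coeff j = if j < p then (p.choose (j + 1) : R) else 0 := by
  have : binomialQuotient R p = ∑ j ∈ Finset.range p, C (p.choose (j + 1) : R) * X ^ j := by
    rw [binomialQuotient, ← Finset.Ico_add_one_right_eq_Icc, Finset.sum_Ico_eq_sum_range]
    simp [add_comm 1]
  simp [this, finsetSum_coeff, coeff_X_pow]

theorem X_mul_binomialQuotient [CommRing R] : X * binomialQuotient R p = (X + 1) ^ p - 1 := by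
  ext (_ | j)
  · simp [coeff_X_add_one_pow]
  · rw [coeff_X_mul, coeff_binomialQuotient, coeff_sub, coeff_X_add_one_pow, coeff_one,
      if_neg j.succ_ne_zero, sub_zero]
    split_ifs with h
    · rfl
    · rw [Nat.choose_eq_zero_of_lt (by omega), Nat.cast_zero]

variable {p} (hp : p.Prime)
include hp

theorem coeff_binomialQuotient_sub_one [Semiring R] :
    (binomialQuotient R p).coeff (p - 1) = 1 := by
  rw [coeff_binomialQuotient, if_pos (Nat.sub_lt hp.pos one_pos), Nat.sub_add_cancel hp.one_le,
    Nat.choose_self, Nat.cast_one]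

theorem natDegree_binomialQuotient [Semiring R] [Nontrivial R] :
    (binomialQuotient R p).natDegree = p - 1 := by
  refine natDegree_eq_of_le_of_coeff_ne_zero ?_ (by simp [coeff_binomialQuotient_sub_one R hp])
  rw [natDegree_le_iff_coeff_eq_zero]
  intro j hj
  rw [coeff_binomialQuotient, if_neg (by omega)]

theorem monic_binomialQuotient [Semiring R] [Nontrivial R] : (binomialQuotient R p).Monic := by
  rw [Monic, leadingCoeff, natDegree_binomialQuotient R hp, coeff_binomialQuotient_sub_one R hp]

theorem exists_binomialQuotient_eq [CommRing R] :
    ∃ h : R[X], binomialQuotient R p = X ^ (p - 1) + C (p : R) * (1 + X * h) := by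
  set f := binomialQuotient R p - X ^ (p - 1) - C (p : R)
  obtain ⟨f', hf'⟩ : X ∣ f := by
    rw [X_dvd_iff]
    simp [f, coeff_binomialQuotient, hp.pos, coeff_X_pow, (Nat.sub_pos_of_lt hp.one_lt).ne]
  obtain ⟨h, hh⟩ : C (p : R) ∣ f' := by
    rw [C_dvd_iff_dvd_coeff]
    intro j
    have := congrArg (coeff · (j + 1)) hf'
    simp only [coeff_X_mul] at this
    rw [← this]
    simp only [f, coeff_sub, coeff_binomialQuotient, coeff_X_pow, coeff_C, if_neg j.succ_ne_zero,
      sub_zero]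
    rcases lt_trichotomy (j + 2) p with hj | rfl | hj
    · rw [if_pos (by omega), if_neg (by omega), sub_zero]
      exact Nat.cast_dvd_cast (hp.dvd_choose_self (by omega) hj)
    · simp
    · rw [if_neg (by omega), if_neg (by omega), sub_zero]
      exact dvd_zero _
  exact ⟨h, by linear_combination hf' + X * hh⟩

end BinomialQuotient

section CyclotomicIntegers

variable {p : ℕ} [hp : Fact p.Prime]

local notation "𝔒" => ℤ_[p][X] ⧸ Ideal.span {binomialQuotient ℤ_[p] p}
local notation "π" => Ideal.Quotient.mk (Ideal.span {binomialQuotient ℤ_[p] p}) X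
local notation "𝔓" => Ideal.span {π}

theorem isEisensteinAt_binomialQuotient :
    (binomialQuotient ℤ_[p] p).IsEisensteinAt (Ideal.span {(p : ℤ_[p])}) := by
  refine (monic_binomialQuotient _ hp.out).isEisensteinAt_of_mem_of_notMem ?_
    (fun {j} hj => ?_) ?_
  · rw [← PadicInt.maximalIdeal_eq_span_p]
    exact (IsLocalRing.maximalIdeal.isMaximal ℤ_[p]).ne_top
  · rw [natDegree_binomialQuotient _ hp.out] at hj
    rw [coeff_binomialQuotient, if_pos (by omega), Ideal.mem_span_singleton]
    exact Nat.cast_dvd_cast (hp.out.dvd_choose_self (by omega) (by omega))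
  · rw [coeff_binomialQuotient, if_pos hp.out.pos, Nat.choose_one_right, Ideal.span_singleton_pow,
      Ideal.mem_span_singleton, pow_two]
    intro h
    refine PadicInt.p_nonunit (p := p) (isUnit_of_dvd_one ?_)
    exact (mul_dvd_mul_iff_left (Nat.cast_ne_zero.2 hp.out.ne_zero)).1 (by simpa using h)

instance : IsDomain 𝔒 := by
  have hirr := isEisensteinAt_binomialQuotient.irreducible
    (by rw [← PadicInt.maximalIdeal_eq_span_p]; exact Ideal.IsMaximal.isPrime' _)
    (monic_binomialQuotient _ hp.out).isPrimitive
    (by rw [natDegree_binomialQuotient _ hp.out]; exact Nat.sub_pos_of_lt hp.out.one_lt)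
  rw [Ideal.Quotient.isDomain_iff_prime, Ideal.span_singleton_prime hirr.ne_zero]
  exact hirr.prime

theorem one_add_pi_pow : (1 + π) ^ p = 1 := by
  have h := congrArg (Ideal.Quotient.mk (Ideal.span {binomialQuotient ℤ_[p] p}))
    (X_mul_binomialQuotient ℤ_[p] p)
  rw [map_mul, Ideal.Quotient.mk_singleton_self, mul_zero, map_sub, map_pow, map_add, map_one,
    add_comm] at h
  exact sub_eq_zero.1 h.symm

theorem exists_natCast_mul_one_add_eq : ∃ t : 𝔒, (p : 𝔒) * (1 + π * t) = -π ^ (p - 1) := by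
  obtain ⟨h, hh⟩ := exists_binomialQuotient_eq ℤ_[p] hp.out
  refine ⟨Ideal.Quotient.mk _ h, ?_⟩
  have := congrArg (Ideal.Quotient.mk (Ideal.span {binomialQuotient ℤ_[p] p})) hh
  rw [Ideal.Quotient.mk_singleton_self, C_eq_natCast] at this
  simp only [map_add, map_mul, map_pow, map_one, map_natCast] at this
  linear_combination -this

theorem not_isUnit_pi : ¬IsUnit π := by
  rintro ⟨u, hu⟩
  obtain ⟨f, hf⟩ := Ideal.Quotient.mk_surjective (u⁻¹ : Units 𝔒).val
  have : binomialQuotient ℤ_[p] p ∣ X * f - 1 := by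
    rw [← Ideal.mem_span_singleton, ← Ideal.Quotient.eq_zero_iff_mem, map_sub, map_mul, hf, ← hu,
      map_one, u.mul_inv, sub_self]
  have h0 := eval_dvd (x := 0) this
  rw [← coeff_zero_eq_eval_zero, coeff_binomialQuotient, if_pos hp.out.pos,
    Nat.choose_one_right] at h0
  exact PadicInt.p_nonunit (p := p) (isUnit_of_dvd_one (by simpa using h0))

theorem pi_ne_zero : π ≠ 0 := by
  intro h0
  obtain ⟨t, ht⟩ := exists_natCast_mul_one_add_eq (p := p)
  rw [h0, zero_mul, add_zero, mul_one, zero_pow (Nat.sub_pos_of_lt hp.out.one_lt).ne', neg_zero,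
    ← map_natCast (Ideal.Quotient.mk _), Ideal.Quotient.eq_zero_iff_mem,
    Ideal.mem_span_singleton] at ht
  have := natDegree_le_of_dvd ht (Nat.cast_ne_zero.2 hp.out.ne_zero)
  rw [natDegree_binomialQuotient _ hp.out, natDegree_natCast] at this
  exact (Nat.sub_pos_of_lt hp.out.one_lt).ne' (Nat.le_zero.1 this)

theorem pi_pow_mem_span_pow_iff (j N : ℕ) : π ^ j ∈ 𝔓 ^ N ↔ N ≤ j :=
  pow_mem_span_pow_iff pi_ne_zero not_isUnit_pi j N

theorem natCast_pow_mem_span_pow_iff (t N : ℕ) : (p : 𝔒) ^ t ∈ 𝔓 ^ N ↔ N ≤ t * (p - 1) := by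
  obtain ⟨_, h⟩ := exists_natCast_mul_one_add_eq (p := p)
  rw [pow_mem_span_pow_iff_of_mul_one_add_eq h, pi_pow_mem_span_pow_iff]

end CyclotomicIntegers

section AdditiveMap

variable {H : Type*} [Group H] {A : Subgroup H} {M : Type*} [AddGroup M] {θ : A → M}
  (hadd : ∀ a b : A, θ (a * b) = θ a + θ b)
include hadd

theorem map_one_of_map_mul : θ 1 = 0 :=
  (AddMonoidHom.mk' (fun a : Additive A => θ a.toMul) hadd).map_zero

theorem map_inv_of_map_mul (a : A) : θ a⁻¹ = -θ a :=
  (AddMonoidHom.mk' (fun a : Additive A => θ a.toMul) hadd).map_neg (Additive.ofMul a)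

theorem map_pow_of_map_mul (a : A) (k : ℕ) : θ (a ^ k) = k • θ a :=
  map_nsmul (AddMonoidHom.mk' (fun a : Additive A => θ a.toMul) hadd) k (Additive.ofMul a)

theorem forall_pow_eq_one_iff_of_map_mul (hθ : Function.Bijective θ) (k : ℕ) :
    (∀ a : A, a ^ k = 1) ↔ ∀ v : M, k • v = 0 := by
  rw [hθ.surjective.forall]
  refine forall_congr' fun a => ?_
  rw [← map_pow_of_map_mul hadd, ← map_one_of_map_mul hadd, hθ.injective.eq_iff]

end AdditiveMap

theorem exists_zpow_inv_mul_mem {H : Type*} [Group H] {A : Subgroup H} [A.Normal] {x : H}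
    (hxgen : ∀ q : H ⧸ A, q ∈ Subgroup.zpowers (QuotientGroup.mk x : H ⧸ A)) (y : H) :
    ∃ j : ℤ, (x ^ j)⁻¹ * y ∈ A := by
  obtain ⟨j, hj⟩ := hxgen y
  exact ⟨j, QuotientGroup.eq.1 (by simpa using hj)⟩

theorem Units.val_zpow_sub_one_mem {R : Type*} [CommRing R] {I : Ideal R} {u : Rˣ}
    (hu : (u : R) - 1 ∈ I) (j : ℤ) : ((u ^ j : Rˣ) : R) - 1 ∈ I := by
  have h1 : Units.map (Ideal.Quotient.mk I : R →* R ⧸ I) u = 1 :=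
    Units.ext (by simpa [sub_eq_zero] using Ideal.Quotient.eq_zero_iff_mem.2 hu)
  rw [← Ideal.Quotient.eq_zero_iff_mem, map_sub, map_one, sub_eq_zero]
  have hj := congrArg (· ^ j) h1
  rw [← map_zpow, one_zpow] at hj
  exact (Units.coe_map _ _).symm.trans (congrArg Units.val hj)

section Conjugation

variable {H : Type*} [Group H] {A : Subgroup H} [A.Normal] {R M : Type*} [CommRing R]
  [AddCommGroup M] [Module R M] {θ : A → M} {π : R} {x : H}
  (hint : ∀ (a : H) (ha : a ∈ A) (hb : x⁻¹ * a * x ∈ A),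
    θ ⟨x⁻¹ * a * x, hb⟩ = (1 + π) • θ ⟨a, ha⟩)
  (hadd : ∀ a b : A, θ (a * b) = θ a + θ b)
include hint

theorem conj_zpow_eq_smul (hunit : IsUnit (1 + π)) (j : ℤ) (a : H) (ha : a ∈ A)
    (hb : (x ^ j)⁻¹ * a * x ^ j ∈ A) :
    θ ⟨(x ^ j)⁻¹ * a * x ^ j, hb⟩ = ((hunit.unit ^ j : Rˣ) : R) • θ ⟨a, ha⟩ := by
  induction j using Int.induction_on with
  | zero => simp
  | succ i ih =>
    have hmem : (x ^ (i : ℤ))⁻¹ * a * x ^ (i : ℤ) ∈ A := by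
      simpa using ‹A.Normal›.conj_mem a ha (x ^ (i : ℤ))⁻¹
    have e : (⟨(x ^ ((i : ℤ) + 1))⁻¹ * a * x ^ ((i : ℤ) + 1), hb⟩ : A)
        = ⟨x⁻¹ * ((x ^ (i : ℤ))⁻¹ * a * x ^ (i : ℤ)) * x,
            by simpa [zpow_add_one, mul_assoc] using hb⟩ :=
      Subtype.ext (by group)
    rw [e, hint _ hmem, ih hmem, smul_smul, zpow_add_one, Units.val_mul, IsUnit.unit_spec,
      mul_comm]
  | pred i ih =>
    have hmem : (x ^ (-(i : ℤ)))⁻¹ * a * x ^ (-(i : ℤ)) ∈ A := by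
      simpa using ‹A.Normal›.conj_mem a ha (x ^ (-(i : ℤ)))⁻¹
    have e : (⟨(x ^ (-(i : ℤ)))⁻¹ * a * x ^ (-(i : ℤ)), hmem⟩ : A)
        = ⟨x⁻¹ * ((x ^ (-(i : ℤ) - 1))⁻¹ * a * x ^ (-(i : ℤ) - 1)) * x,
            by simpa [zpow_sub_one, mul_assoc] using hmem⟩ :=
      Subtype.ext (by group)
    have h := ih hmem
    rw [e, hint _ hb] at h
    rw [zpow_sub_one hunit.unit, Units.val_mul, mul_comm, mul_smul, ← h, smul_smul,
      hunit.val_inv_mul, one_smul]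

theorem exists_conj_eq_smul (hab : ∀ a ∈ A, ∀ b ∈ A, a * b = b * a)
    (hxgen : ∀ q : H ⧸ A, q ∈ Subgroup.zpowers (QuotientGroup.mk x : H ⧸ A))
    (hunit : IsUnit (1 + π)) (y : H) :
    ∃ s : R, s - 1 ∈ Ideal.span {π} ∧
      ∀ (a : H) (ha : a ∈ A) (hb : y⁻¹ * a * y ∈ A), θ ⟨y⁻¹ * a * y, hb⟩ = s • θ ⟨a, ha⟩ := by
  obtain ⟨j, hj⟩ := exists_zpow_inv_mul_mem hxgen y
  obtain ⟨b, hbA, rfl⟩ : ∃ b ∈ A, y = x ^ j * b := ⟨_, hj, (mul_inv_cancel_left _ _).symm⟩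
  have hu : (hunit.unit : R) - 1 ∈ Ideal.span {π} := by
    rw [hunit.unit_spec, add_sub_cancel_left]
    exact Ideal.mem_span_singleton_self π
  refine ⟨_, Units.val_zpow_sub_one_mem hu j, fun a ha hb => ?_⟩
  have hmem : (x ^ j)⁻¹ * a * x ^ j ∈ A := by simpa using ‹A.Normal›.conj_mem a ha (x ^ j)⁻¹
  have e : (x ^ j * b)⁻¹ * a * (x ^ j * b) = (x ^ j)⁻¹ * a * x ^ j :=
    calc _ = b⁻¹ * ((x ^ j)⁻¹ * a * x ^ j * b) := by group
      _ = _ := by rw [hab _ hmem _ hbA, inv_mul_cancel_left]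
  rw [show (⟨_, hb⟩ : A) = ⟨_, hmem⟩ from Subtype.ext e, conj_zpow_eq_smul hint hunit]

include hadd in
theorem exists_mem_lowerCentralSeries_smul_eq (a : A) (k : ℕ) :
    ∃ (c : H) (hc : c ∈ A), c ∈ (⊤ : Subgroup H).lowerCentralSeries k ∧
      θ ⟨c, hc⟩ = π ^ k • θ a := by
  induction k with
  | zero => exact ⟨a, a.2, Subgroup.mem_top _, by simp⟩
  | succ k ih =>
    obtain ⟨c, hc, hlcs, hθc⟩ := ih
    have hmem : x⁻¹ * c * x ∈ A := by simpa using ‹A.Normal›.conj_mem c hc x⁻¹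
    have e : ⁅x⁻¹, c⁆ = x⁻¹ * c * x * c⁻¹ := by group
    refine ⟨⁅x⁻¹, c⁆, e ▸ A.mul_mem hmem (A.inv_mem hc), ?_, ?_⟩
    · rw [← commutatorElement_inv]
      exact inv_mem (Subgroup.commutator_mem_commutator hlcs (Subgroup.mem_top _))
    · rw [show (⟨⁅x⁻¹, c⁆, _⟩ : A) = ⟨_, hmem⟩ * (⟨c, hc⟩ : A)⁻¹ from Subtype.ext e, hadd,
        map_inv_of_map_mul hadd, hint _ hc, hθc, pow_succ']
      module

include hadd in
theorem lowerCentralSeries_ne_bot_of_pow_smul_ne_zero {a : A} {k : ℕ}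
    (h : π ^ k • θ a ≠ 0) : (⊤ : Subgroup H).lowerCentralSeries k ≠ ⊥ := by
  obtain ⟨c, hc, hlcs, hθc⟩ := exists_mem_lowerCentralSeries_smul_eq hint hadd a k
  intro hbot
  rw [hbot, Subgroup.mem_bot] at hlcs
  subst hlcs
  exact h (hθc ▸ map_one_of_map_mul hadd)

end Conjugation

section Filtration

variable {H : Type*} [Group H] {A : Subgroup H} {R M : Type*} [CommRing R] [AddCommGroup M]
  [Module R M] {θ : A → M} (hadd : ∀ a b : A, θ (a * b) = θ a + θ b)
include hadd

def smulFiltration (π : R) (k : ℕ) : Subgroup H where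
  carrier := {h | ∃ (hA : h ∈ A) (v : M), θ ⟨h, hA⟩ = π ^ k • v}
  one_mem' := ⟨A.one_mem, 0, by rw [smul_zero]; exact map_one_of_map_mul hadd⟩
  mul_mem' := by
    rintro a b ⟨ha, v, hv⟩ ⟨hb, w, hw⟩
    exact ⟨A.mul_mem ha hb, v + w, by rw [smul_add, ← hv, ← hw, ← hadd]; rfl⟩
  inv_mem' := by
    rintro a ⟨ha, v, hv⟩
    exact ⟨A.inv_mem ha, -v, by rw [smul_neg, ← hv, ← map_inv_of_map_mul hadd]; rfl⟩

variable [A.Normal] {π : R}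
  (hconj : ∀ y : H, ∃ s : R, s - 1 ∈ Ideal.span {π} ∧
    ∀ (a : H) (ha : a ∈ A) (hb : y⁻¹ * a * y ∈ A), θ ⟨y⁻¹ * a * y, hb⟩ = s • θ ⟨a, ha⟩)
include hconj

theorem conj_mem_smulFiltration {k : ℕ} {z : H} (hz : z ∈ smulFiltration hadd π k) (y : H) :
    y * z * y⁻¹ ∈ smulFiltration hadd π k := by
  obtain ⟨hzA, v, hv⟩ := hz
  obtain ⟨s, -, hs⟩ := hconj y⁻¹
  have hmem : y⁻¹⁻¹ * z * y⁻¹ ∈ A := by simpa using ‹A.Normal›.conj_mem z hzA y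
  refine ⟨by simpa using hmem, s • v, ?_⟩
  rw [smul_comm, ← hv, ← hs _ hzA hmem]
  simp

theorem commutator_mem_smulFiltration_succ {k : ℕ} {a : H} (ha : a ∈ smulFiltration hadd π k)
    (y : H) : ⁅a, y⁆ ∈ smulFiltration hadd π (k + 1) := by
  obtain ⟨haA, v, hv⟩ := ha
  obtain ⟨s, hs1, hs⟩ := hconj y⁻¹
  obtain ⟨q, hq⟩ := Ideal.mem_span_singleton'.1 hs1
  have hmem : y⁻¹⁻¹ * a⁻¹ * y⁻¹ ∈ A := by simpa using ‹A.Normal›.conj_mem _ (A.inv_mem haA) y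
  have hcomm : ⁅a, y⁆ = a * (y⁻¹⁻¹ * a⁻¹ * y⁻¹) := by group
  refine ⟨hcomm ▸ A.mul_mem haA hmem, -q • v, ?_⟩
  have : (⟨⁅a, y⁆, hcomm ▸ A.mul_mem haA hmem⟩ : A) = ⟨a, haA⟩ * ⟨_, hmem⟩ := Subtype.ext hcomm
  have hinv : (⟨a⁻¹, A.inv_mem haA⟩ : A) = (⟨a, haA⟩ : A)⁻¹ := rfl
  rw [this, hadd, hs _ (A.inv_mem haA), hinv, map_inv_of_map_mul hadd, hv,
    show s = 1 + q * π by rw [hq]; ring]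
  module

variable {x : H} (hxgen : ∀ q : H ⧸ A, q ∈ Subgroup.zpowers (QuotientGroup.mk x : H ⧸ A))
include hxgen

theorem commutator_le_smulFiltration_one : ⁅(⊤ : Subgroup H), ⊤⁆ ≤ smulFiltration hadd π 1 := by
  have hA0 {b : H} (hb : b ∈ A) : b ∈ smulFiltration hadd π 0 :=
    ⟨hb, θ ⟨b, hb⟩, by rw [pow_zero, one_smul]⟩
  have key (j : ℤ) {b : H} (hb : b ∈ A) (g : H) (h : ⁅x ^ j, g⁆ ∈ smulFiltration hadd π 1) :
      ⁅x ^ j * b, g⁆ ∈ smulFiltration hadd π 1 := by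
    rw [commutatorElement_mul_left_eq_conj_mul]
    exact mul_mem (conj_mem_smulFiltration hadd hconj
      (commutator_mem_smulFiltration_succ hadd hconj (hA0 hb) g) _) h
  rw [Subgroup.commutator_le]
  intro g₁ _ g₂ _
  obtain ⟨j, hj⟩ := exists_zpow_inv_mul_mem hxgen g₁
  obtain ⟨l, hl⟩ := exists_zpow_inv_mul_mem hxgen g₂
  rw [← mul_inv_cancel_left (x ^ j) g₁]
  refine key j hj _ ?_
  rw [← commutatorElement_inv, ← mul_inv_cancel_left (x ^ l) g₂]
  refine inv_mem (key l hl _ ?_)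
  rw [commutatorElement_eq_one_iff_commute.2 ((Commute.refl x).zpow_zpow l j)]
  exact one_mem _

theorem lowerCentralSeries_succ_le_smulFiltration (k : ℕ) :
    (⊤ : Subgroup H).lowerCentralSeries (k + 1) ≤ smulFiltration hadd π (k + 1) := by
  induction k with
  | zero => exact commutator_le_smulFiltration_one hadd hconj hxgen
  | succ k ih =>
    rw [Subgroup.lowerCentralSeries_succ, Subgroup.commutator_le]
    exact fun a ha y _ => commutator_mem_smulFiltration_succ hadd hconj (ih ha) y

theorem lowerCentralSeries_succ_eq_bot_of_pow_smul_eq_zero (hθ : Function.Injective θ) {k : ℕ}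
    (hk : ∀ v : M, π ^ (k + 1) • v = 0) : (⊤ : Subgroup H).lowerCentralSeries (k + 1) = ⊥ := by
  refine eq_bot_iff.2 fun c hc => ?_
  obtain ⟨hcA, v, hv⟩ := lowerCentralSeries_succ_le_smulFiltration hadd hconj hxgen k hc
  rw [hk, ← map_one_of_map_mul hadd] at hv
  exact congrArg Subtype.val (hθ hv)

end Filtration

theorem Monoid.exponent_eq_prime_pow_of_forall_pow_eq_one_iff {G : Type*} [Monoid G] {p m : ℕ}
    (hp : p.Prime) (h : ∀ t, (∀ g : G, g ^ p ^ t = 1) ↔ m ≤ t) : Monoid.exponent G = p ^ m := by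
  obtain ⟨k, hk, hexp⟩ :=
    (Nat.dvd_prime_pow hp).1 (Monoid.exponent_dvd_of_forall_pow_eq_one ((h m).2 le_rfl))
  rw [hexp, le_antisymm hk ((h k).1 (hexp ▸ Monoid.pow_exponent_eq_one))]

theorem stmt_6_general (p : ℕ) [Fact p.Prime]
    (H : Type) [Group H] (A : Subgroup H) [A.Normal]
    (hab : ∀ a ∈ A, ∀ b ∈ A, a * b = b * a)
    (x : H)
    (hxgen : ∀ q : H ⧸ A, q ∈ Subgroup.zpowers (QuotientGroup.mk x : H ⧸ A))
    (g : ℤ_[p][X]) (hg : g = ∑ i ∈ Finset.Icc 1 p, C (p.choose i : ℤ_[p]) * X ^ (i - 1))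
    (s : ℕ) (hs : 0 < s) (n : Fin s → ℕ) (hanti : Antitone n) (hpos : ∀ i, 1 ≤ n i)
    (θ : A → ⨁ i : Fin s, (ℤ_[p][X] ⧸ Ideal.span {g}) ⧸
        (Ideal.span {Ideal.Quotient.mk (Ideal.span {g}) X}) ^ (n i))
    (hbij : Function.Bijective θ)
    (hadd : ∀ a b : A, θ (a * b) = θ a + θ b)
    (hint : ∀ (a : H) (ha : a ∈ A) (hb : x⁻¹ * a * x ∈ A),
      θ ⟨x⁻¹ * a * x, hb⟩ = (1 + Ideal.Quotient.mk (Ideal.span {g}) X) • θ ⟨a, ha⟩) :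
    (⊤ : Subgroup H).lowerCentralSeries (n ⟨0, hs⟩) = ⊥ ∧
    (⊤ : Subgroup H).lowerCentralSeries (n ⟨0, hs⟩ - 1) ≠ ⊥ ∧
    Monoid.exponent A = p ^ ((n ⟨0, hs⟩ + p - 2) / (p - 1)) := by
  obtain rfl : g = binomialQuotient ℤ_[p] p := hg
  have hp := (Fact.out : p.Prime)
  have hp2 := hp.two_le
  obtain ⟨k, hk⟩ : ∃ k, n ⟨0, hs⟩ = k + 1 := ⟨_, (Nat.succ_pred_eq_of_pos (hpos _)).symm⟩
  have hker := DirectSum.forall_smul_eq_zero_iff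
    (fun i => Ideal.span {Ideal.Quotient.mk (Ideal.span {binomialQuotient ℤ_[p] p}) X} ^ n i)
    (fun i => Ideal.pow_le_pow_right (hanti (show (⟨0, hs⟩ : Fin s) ≤ i from Nat.zero_le _)))
  -- instance search finds no `AddCommGroup` on the target of `θ`; this one extends its monoid
  let := Module.addCommMonoidToAddCommGroup (ℤ_[p][X] ⧸ Ideal.span {binomialQuotient ℤ_[p] p})
    (M := ⨁ i : Fin s, _ ⧸
      Ideal.span {Ideal.Quotient.mk (Ideal.span {binomialQuotient ℤ_[p] p}) X} ^ n i)
  have hconj := exists_conj_eq_smul (θ := θ) hint hab hxgen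
    (IsUnit.of_pow_eq_one one_add_pi_pow hp.ne_zero)
  refine ⟨?_, ?_, ?_⟩
  · rw [hk]
    refine lowerCentralSeries_succ_eq_bot_of_pow_smul_eq_zero hadd hconj hxgen hbij.injective ?_
    exact (hker _).2 ((pi_pow_mem_span_pow_iff _ _).2 hk.le)
  · obtain ⟨a, ha⟩ := hbij.surjective (DirectSum.of _ ⟨0, hs⟩ 1)
    refine lowerCentralSeries_ne_bot_of_pow_smul_ne_zero
      (π := Ideal.Quotient.mk (Ideal.span {binomialQuotient ℤ_[p] p}) X) hint hadd (a := a) ?_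
    rw [ha, Ne, DirectSum.smul_of_one_eq_zero_iff, pi_pow_mem_span_pow_iff]
    omega
  · refine Monoid.exponent_eq_prime_pow_of_forall_pow_eq_one_iff hp fun t => ?_
    rw [forall_pow_eq_one_iff_of_map_mul hadd hbij]
    simp_rw [← Nat.cast_smul_eq_nsmul (ℤ_[p][X] ⧸ Ideal.span {binomialQuotient ℤ_[p] p}),
      Nat.cast_pow]
    rw [hker, natCast_pow_mem_span_pow_iff,
      show n ⟨0, hs⟩ + p - 2 = n ⟨0, hs⟩ + (p - 1) - 1 by omega, ← Nat.ceilDiv_eq_add_pred_div,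
      ceilDiv_le_iff_le_mul (by omega), mul_comm]

/-- Let `A` be a nontrivial finite abelian normal `p`-subgroup of a
group `H` and `x ∈ H` as in the context (`H = ⟨A, x⟩`, the image of `x` generates `H/A`
with `p`-power order, splitting condition).  Let `𝔒 = ℤ_p[X]/(g)` with
`g = Σ_{i=1}^p C(p,i) X^(i-1)`, `π` the image of `X`, `𝔓 = (π)`, and suppose
`θ : A ≅ ⊕_{i=1}^s 𝔒/𝔓^(n_i)` (as abelian groups) intertwines conjugation by `x` with
multiplication by `1 + π`;  `λ = (n_1 ≥ … ≥ n_s)`.  Then `H` is nilpotent of class `n_1`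
(i.e. `γ_{n_1+1}(H) = 1 ≠ γ_{n_1}(H)`, in Mathlib numbering
`lowerCentralSeries H n_1 = ⊥` and `lowerCentralSeries H (n_1 - 1) ≠ ⊥`),
and `A` has exponent `p^m` with `m = ⌈n_1/(p-1)⌉ = (n_1 + p - 2)/(p - 1)`. -/
theorem stmt_6 (p : ℕ) [Fact p.Prime]
    (H : Type) [Group H] (A : Subgroup H) [A.Normal] [Finite A]
    (hab : ∀ a ∈ A, ∀ b ∈ A, a * b = b * a)
    (hpgrp : IsPGroup p A) (hA : A ≠ ⊥)
    (x : H)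
    (hgen : Subgroup.closure ((A : Set H) ∪ {x}) = ⊤)
    (hxgen : ∀ q : H ⧸ A, q ∈ Subgroup.zpowers (QuotientGroup.mk x : H ⧸ A))
    (hord : ∃ k : ℕ, orderOf (QuotientGroup.mk x : H ⧸ A) = p ^ k)
    (hsplit : ∀ a ∈ A, ((List.range p).map (fun i => (x ^ i)⁻¹ * a * x ^ i)).prod = 1)
    (g : ℤ_[p][X]) (hg : g = ∑ i ∈ Finset.Icc 1 p, C (p.choose i : ℤ_[p]) * X ^ (i - 1))
    (s : ℕ) (hs : 0 < s) (n : Fin s → ℕ) (hanti : Antitone n) (hpos : ∀ i, 1 ≤ n i)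
    (θ : A → ⨁ i : Fin s, (ℤ_[p][X] ⧸ Ideal.span {g}) ⧸
        (Ideal.span {Ideal.Quotient.mk (Ideal.span {g}) X}) ^ (n i))
    (hbij : Function.Bijective θ)
    (hadd : ∀ a b : A, θ (a * b) = θ a + θ b)
    (hint : ∀ (a : H) (ha : a ∈ A) (hb : x⁻¹ * a * x ∈ A),
      θ ⟨x⁻¹ * a * x, hb⟩ = (1 + Ideal.Quotient.mk (Ideal.span {g}) X) • θ ⟨a, ha⟩) :
    (⊤ : Subgroup H).lowerCentralSeries (n ⟨0, hs⟩) = ⊥ ∧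
    (⊤ : Subgroup H).lowerCentralSeries (n ⟨0, hs⟩ - 1) ≠ ⊥ ∧
    Monoid.exponent A = p ^ ((n ⟨0, hs⟩ + p - 2) / (p - 1)) :=
  stmt_6_general p H A hab x hxgen g hg s hs n hanti hpos θ hbij hadd hint
end

section
/- For every integer j ≥ 2, the quotient γ_j(H)/γ_{j+1}(H) of consecutive terms of the lower central series of H is elementary abelian (an abelian group of exponent dividing p) of rank d_j, where d_j = #{ i : 1 ≤ i ≤ s, n_i ≥ j } is the number of parts of λ that are ≥ j. -/
/-!
Transport subgroups of `A` to additive subgroups of `T = ⊕ᵢ 𝔒/𝔓^{nᵢ}` along `θ`. Conjugation by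
`x` acts on `T` as the unit `1 + π`, so `θ ⁅x⁻¹, a⁆ = π • θ a`, while `A` is abelian; since `A`
and `x` generate `H`, this gives `⁅θ⁻¹ M, H⁆ = θ⁻¹ (π • M)` for every submodule `M`, and hence
`γ_{k+2}(H) = θ⁻¹ (π^{k+1} T)` (in Mathlib's numbering, `lowerCentralSeries (k + 1)`).
The factor `π^m T / π^{m+1} T` is computed componentwise: on `𝔒/𝔓^n` it is `𝔒/𝔓 ≅ ℤ/p` when
`m < n` and zero otherwise; here `X g = (1 + X)^p - 1` gives `g(0) = p`, so `π` is a
non-zero-divisor of `𝔒` and `𝔒/(π) ≅ ℤ_p/(p)`.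
-/

open DirectSum Polynomial

open scoped commutatorElement Pointwise

theorem X_mul_sum_choose_mul_X_pow (R : Type*) [CommRing R] (p : ℕ) :
    X * ∑ i ∈ Finset.Icc 1 p, C (p.choose i : R) * X ^ (i - 1) = (1 + X) ^ p - 1 := by
  rw [add_comm, add_pow, Finset.sum_range_succ', ← Finset.Ico_add_one_right_eq_Icc,
    Finset.sum_Ico_eq_sum_range, Finset.mul_sum]
  simp only [add_tsub_cancel_right, add_tsub_cancel_left, one_pow, mul_one, pow_zero,
    Nat.choose_zero_right, Nat.cast_one, add_sub_cancel_right, C_eq_natCast]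
  refine Finset.sum_congr rfl fun k _ => ?_
  rw [add_comm 1 k]
  ring

section QuotientByPolynomial

variable {R : Type*} [CommRing R] {g : R[X]}

theorem coeff_zero_eq_of_X_mul_eq {p : ℕ} (h : X * g = (1 + X) ^ p - 1) : g.coeff 0 = p := by
  simpa [coeff_one_add_X_pow, coeff_one] using congrArg (coeff · 1) h

theorem one_add_mk_X_pow_eq_one {p : ℕ} (h : X * g = (1 + X) ^ p - 1) :
    (1 + Ideal.Quotient.mk (Ideal.span {g}) X) ^ p = 1 := by
  have := congrArg (Ideal.Quotient.mk (Ideal.span {g})) h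
  rw [map_mul, Ideal.Quotient.mk_singleton_self, mul_zero, map_sub, map_pow, map_add,
    map_one] at this
  exact sub_eq_zero.mp this.symm

theorem isLeftRegular_mk_X (hg : g.coeff 0 ∈ nonZeroDivisors R) :
    IsLeftRegular (Ideal.Quotient.mk (Ideal.span {g}) X) := by
  refine (isLeftRegular_iff_right_eq_zero_of_mul).mpr fun r hr => ?_
  obtain ⟨q, rfl⟩ := Ideal.Quotient.mk_surjective r
  rw [← map_mul, Ideal.Quotient.eq_zero_iff_mem, Ideal.mem_span_singleton] at hr
  rw [Ideal.Quotient.eq_zero_iff_mem, Ideal.mem_span_singleton]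
  obtain ⟨c, hc⟩ := hr
  have hc0 : c.coeff 0 = 0 := by
    have := congrArg (coeff · 0) hc
    simp only [mul_coeff_zero, coeff_X_zero, zero_mul] at this
    exact (mem_nonZeroDivisors_iff.mp hg).2 _ (by rw [mul_comm, this])
  obtain ⟨d, rfl⟩ := X_dvd_iff.mpr hc0
  exact ⟨d, isRegular_X.left (show X * q = X * (g * d) by rw [hc]; ring)⟩

variable {F : Type*} [CommRing F]

noncomputable def residueMap (φ : R →+* F) (hφ : φ (g.coeff 0) = 0) :
    R[X] ⧸ Ideal.span {g} →+* F :=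
  Ideal.Quotient.lift _ (eval₂RingHom φ 0) fun a ha => by
    obtain ⟨c, rfl⟩ := Ideal.mem_span_singleton'.mp ha
    simp [eval₂_at_zero, hφ]

theorem residueMap_mk {φ : R →+* F} (hφ : φ (g.coeff 0) = 0) (q : R[X]) :
    residueMap φ hφ (Ideal.Quotient.mk _ q) = φ (q.coeff 0) := by
  simp [residueMap, eval₂_at_zero]

theorem residueMap_surjective {φ : R →+* F} (hφ : φ (g.coeff 0) = 0)
    (hs : Function.Surjective φ) :
    Function.Surjective (residueMap φ hφ) := by
  intro y
  obtain ⟨r, rfl⟩ := hs y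
  exact ⟨Ideal.Quotient.mk _ (C r), by rw [residueMap_mk, coeff_C_zero]⟩

theorem ker_residueMap {φ : R →+* F} (hφ : φ (g.coeff 0) = 0)
    (hker : RingHom.ker φ = Ideal.span {g.coeff 0}) :
    RingHom.ker (residueMap φ hφ) = Ideal.span {Ideal.Quotient.mk (Ideal.span {g}) X} := by
  refine le_antisymm (fun r hr => ?_) ((Ideal.span_singleton_le_iff_mem _).mpr
    (by rw [RingHom.mem_ker, residueMap_mk, coeff_X_zero, map_zero]))
  obtain ⟨q, rfl⟩ := Ideal.Quotient.mk_surjective r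
  rw [RingHom.mem_ker, residueMap_mk, ← RingHom.mem_ker, hker, Ideal.mem_span_singleton] at hr
  obtain ⟨c, hc⟩ := hr
  refine Ideal.mem_span_singleton.mpr ⟨Ideal.Quotient.mk _ (q.divX - C c * g.divX), ?_⟩
  rw [← map_mul, Ideal.Quotient.eq, Ideal.mem_span_singleton]
  refine ⟨C c, ?_⟩
  -- `q ≡ C (q.coeff 0) = C c * C (g.coeff 0) ≡ C c * g` modulo `X`
  have hq := X_mul_divX_add q
  rw [hc, C_mul] at hq
  linear_combination -hq + C c * X_mul_divX_add g

end QuotientByPolynomial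

theorem DirectSum.exists_smul_eq_iff {R ι : Type*} [Semiring R] [Fintype ι] {M : ι → Type*}
    [∀ i, AddCommMonoid (M i)] [∀ i, Module R (M i)] (b : R) (x : ⨁ i, M i) :
    (∃ y : ⨁ i, M i, b • y = x) ↔ ∀ i, ∃ c : M i, b • c = x i := by
  refine ⟨fun ⟨y, hy⟩ i => ⟨y i, by rw [← DirectSum.smul_apply, hy]⟩, fun h => ?_⟩
  choose c hc using h
  exact ⟨DFinsupp.equivFunOnFintype.symm c, DirectSum.ext fun i => by
    rw [DirectSum.smul_apply]; exact hc i⟩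

section GradedPieces

variable {O F : Type*} [CommRing O] [Ring F] {π : O}

theorem exists_pow_smul_mk_eq_pow_succ_smul_iff (hπ : IsLeftRegular π) {n m : ℕ} (r : O) :
    (∃ c : O ⧸ Ideal.span {π} ^ n, π ^ m • Ideal.Quotient.mk _ r = π ^ (m + 1) • c) ↔
      n ≤ m ∨ π ∣ r := by
  have hsmul (a b : O) :
      a • Ideal.Quotient.mk (Ideal.span {π} ^ n) b = Ideal.Quotient.mk _ (a * b) := by
    rw [Algebra.smul_def, Ideal.Quotient.algebraMap_eq, map_mul]
  constructor
  · rintro ⟨c, hc⟩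
    obtain ⟨c, rfl⟩ := Ideal.Quotient.mk_surjective c
    rw [hsmul, hsmul, Ideal.Quotient.eq, Ideal.span_singleton_pow, Ideal.mem_span_singleton] at hc
    refine or_iff_not_imp_left.mpr fun hnm => ?_
    obtain ⟨d, hd⟩ := hc
    obtain ⟨l, rfl⟩ := Nat.exists_eq_add_of_lt (not_le.mp hnm)
    have hcancel : r - π * c = π ^ (l + 1) * d := hπ.pow m (by linear_combination hd)
    exact ⟨c + π ^ l * d, by linear_combination hcancel⟩
  · rintro (hnm | ⟨c, rfl⟩)
    · refine ⟨0, ?_⟩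
      rw [smul_zero, hsmul, Ideal.Quotient.eq_zero_iff_mem, Ideal.span_singleton_pow,
        Ideal.mem_span_singleton]
      exact (pow_dvd_pow π hnm).mul_right r
    · exact ⟨Ideal.Quotient.mk _ c, by rw [hsmul, hsmul, pow_succ, mul_assoc]⟩

variable {ν : O →+* F} (hν : RingHom.ker ν = Ideal.span {π})

include hν in
theorem apply_eq_zero_of_mem_span_pow {n : ℕ} (hn : n ≠ 0) :
    ∀ a ∈ Ideal.span {π} ^ n, ν a = 0 := fun a ha => by
  rw [← RingHom.mem_ker, hν]
  exact Ideal.pow_le_self hn ha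

variable {ι : Type*} (n : ι → ℕ)

/-- Identifies `π ^ m • ⊤ / π ^ (m + 1) • ⊤` with `F ^ #{i | m < n i}` (see
`gradedResidue_eq_zero_iff`). -/
noncomputable def gradedResidue (m : ℕ) :
    (⨁ i, O ⧸ Ideal.span {π} ^ n i) →+ ({i // m < n i} → F) :=
  AddMonoidHom.pi fun i => (Ideal.Quotient.lift _ ν (apply_eq_zero_of_mem_span_pow hν
    (Nat.ne_zero_of_lt i.2))).toAddMonoidHom.comp (DirectSum.component O ι _ i.1).toAddMonoidHom

theorem gradedResidue_apply_mk {m : ℕ} (t : ⨁ i, O ⧸ Ideal.span {π} ^ n i) (i : {i // m < n i})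
    (r : O) (hr : Ideal.Quotient.mk _ r = t i) : gradedResidue hν n m t i = ν r := by
  change Ideal.Quotient.lift _ ν (apply_eq_zero_of_mem_span_pow hν (Nat.ne_zero_of_lt i.2)) (t i)
    = ν r
  rw [← hr, Ideal.Quotient.lift_mk]

theorem gradedResidue_surjective [Fintype ι] (hs : Function.Surjective ν) (m : ℕ) :
    Function.Surjective (gradedResidue hν n m) := by
  intro w
  choose r hr using fun i => hs (w i)
  classical
  refine ⟨DFinsupp.equivFunOnFintype.symm fun i =>
    if h : m < n i then Ideal.Quotient.mk _ (r ⟨i, h⟩) else 0, funext fun i => ?_⟩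
  rw [gradedResidue_apply_mk hν n _ i (r i) (by change _ = dite (m < n i) _ _; rw [dif_pos i.2]),
    hr]

theorem gradedResidue_eq_zero_iff [Fintype ι] (hπ : IsLeftRegular π) {m : ℕ}
    (t : ⨁ i, O ⧸ Ideal.span {π} ^ n i) :
    gradedResidue hν n m t = 0 ↔
      π ^ m • t ∈ π ^ (m + 1) • (⊤ : Submodule O (⨁ i, O ⧸ Ideal.span {π} ^ n i)) := by
  choose r hr using fun i => Ideal.Quotient.mk_surjective (t i)
  simp only [Submodule.mem_smul_pointwise_iff_exists, Submodule.mem_top, true_and,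
    DirectSum.exists_smul_eq_iff, DirectSum.smul_apply, funext_iff, Pi.zero_apply,
    gradedResidue_apply_mk hν n t _ _ (hr _)]
  simp only [← hr, eq_comm (a := π ^ (m + 1) • _), exists_pow_smul_mk_eq_pow_succ_smul_iff hπ]
  simp only [← RingHom.mem_ker, hν, Ideal.mem_span_singleton, Subtype.forall,
    or_iff_not_imp_left, not_le]

end GradedPieces

theorem Subgroup.commutator_closure_le {G : Type*} [Group G] {N : Subgroup G} [N.Normal]
    {S T : Set G} (h : ∀ s ∈ S, ∀ t ∈ T, ⁅s, t⁆ ∈ N) : ⁅closure S, closure T⁆ ≤ N := by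
  rw [← QuotientGroup.ker_mk' N, ← Subgroup.map_eq_bot_iff, Subgroup.map_commutator,
    MonoidHom.map_closure, MonoidHom.map_closure, Subgroup.commutator_eq_bot_iff_le_centralizer,
    Subgroup.centralizer_closure, Subgroup.closure_le]
  rintro _ ⟨s, hs, rfl⟩ _ ⟨t, ht, rfl⟩
  rw [eq_comm, ← commutatorElement_eq_one_iff_mul_comm, ← map_commutatorElement,
    QuotientGroup.mk'_apply, QuotientGroup.eq_one_iff]
  exact h s hs t ht

section Pullback

variable {H T : Type*} [Group H] [AddCommGroup T] {A : Subgroup H}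

def pullback (θ : A ≃* Multiplicative T) (M : AddSubgroup T) : Subgroup H :=
  (M.toSubgroup.comap θ.toMonoidHom).map A.subtype

noncomputable def mulEquivOfAddBijective (θ : A → T) (hθ : ∀ a b, θ (a * b) = θ a + θ b)
    (hbij : Function.Bijective θ) : A ≃* Multiplicative T :=
  MulEquiv.ofBijective (MonoidHom.mk' (fun a => Multiplicative.ofAdd (θ a)) hθ) hbij

theorem mem_pullback {θ : A ≃* Multiplicative T} {M : AddSubgroup T} {h : H} :
    h ∈ pullback θ M ↔ ∃ ha : h ∈ A, (θ ⟨h, ha⟩).toAdd ∈ M := by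
  simp [pullback]

theorem pullback_le (θ : A ≃* Multiplicative T) (M : AddSubgroup T) : pullback θ M ≤ A :=
  fun _ h => (mem_pullback.mp h).1

theorem pullback_top (θ : A ≃* Multiplicative T) : pullback θ ⊤ = A := by
  ext h; simp [mem_pullback]

theorem mem_pullback_smul_top {R : Type*} [CommRing R] [Module R T] {θ : A ≃* Multiplicative T}
    {a : R} {h : H} : h ∈ pullback θ (a • (⊤ : Submodule R T)).toAddSubgroup ↔
      ∃ ha : h ∈ A, (θ ⟨h, ha⟩).toAdd ∈ (DistribSMul.toAddMonoidHom T a).range := by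
  simp only [mem_pullback, Submodule.mem_toAddSubgroup, Submodule.mem_smul_pointwise_iff_exists,
    Submodule.mem_top, true_and, AddMonoidHom.mem_range, DistribSMul.toAddMonoidHom_apply]

theorem nonempty_quotient_pullback_mulEquiv {R V : Type*} [CommRing R] [Module R T]
    [AddCommGroup V] (θ : A ≃* Multiplicative T) (a : R) {M : Submodule R T} (ψ : T →+ V)
    (hψ : Function.Surjective ψ) (hker : ∀ t, ψ t = 0 ↔ a • t ∈ M) {B₁ B₂ : Subgroup H}
    [(B₂.subgroupOf B₁).Normal] (hB₁ : B₁ = pullback θ (a • (⊤ : Submodule R T)).toAddSubgroup)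
    (hB₂ : B₂ = pullback θ M.toAddSubgroup) :
    Nonempty (B₁ ⧸ B₂.subgroupOf B₁ ≃* Multiplicative V) := by
  subst hB₁ hB₂
  set σ := DistribSMul.toAddMonoidHom T a
  let φ : σ.range →+ V := σ.rangeRestrict.liftOfSurjective σ.rangeRestrict_surjective
    ⟨ψ, fun t ht => (hker t).2 (by simp_all [σ])⟩
  have hφ (t : T) : φ (σ.rangeRestrict t) = ψ t :=
    AddMonoidHom.liftOfRightInverse_comp_apply _ _ _ _ t
  let f : pullback θ (a • (⊤ : Submodule R T)).toAddSubgroup →* Multiplicative V :=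
    MonoidHom.mk' (fun b => .ofAdd (φ ⟨_, (mem_pullback_smul_top.mp b.2).2⟩)) fun b c => by
      rw [← ofAdd_add, ← map_add]
      congr 2
      exact Subtype.ext (congrArg Multiplicative.toAdd (map_mul θ ⟨b, _⟩ ⟨c, _⟩))
  have hf (b : pullback θ (a • (⊤ : Submodule R T)).toAddSubgroup) (t : T)
      (ht : σ t = (θ ⟨b, (mem_pullback_smul_top.mp b.2).1⟩).toAdd) :
      f b = .ofAdd (ψ t) := by
    rw [← hφ]
    exact congrArg (fun y => Multiplicative.ofAdd (φ y)) (Subtype.ext ht.symm)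
  have hsurj : Function.Surjective f := by
    intro v
    obtain ⟨t, rfl⟩ := hψ v.toAdd
    set b := θ.symm (.ofAdd (a • t))
    have hb : (b : H) ∈ pullback θ (a • (⊤ : Submodule R T)).toAddSubgroup :=
      mem_pullback_smul_top.mpr ⟨b.2, t, by simp [b]⟩
    exact ⟨⟨b, hb⟩, hf _ t (by simp [b, σ])⟩
  have hkerf : f.ker = (pullback θ M.toAddSubgroup).subgroupOf
      (pullback θ (a • (⊤ : Submodule R T)).toAddSubgroup) := by
    ext b
    obtain ⟨hb, t, ht⟩ := mem_pullback_smul_top.mp b.2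
    rw [MonoidHom.mem_ker, hf b t ht, Subgroup.mem_subgroupOf, mem_pullback]
    simp [hker, ← ht, hb]
  exact ⟨(QuotientGroup.quotientMulEquivOfEq hkerf.symm).trans
    (QuotientGroup.quotientKerEquivOfSurjective f hsurj)⟩

end Pullback

section LowerCentralSeries

variable {H T R : Type*} [Group H] [AddCommGroup T] [CommRing R] [Module R T]
  {A : Subgroup H} [A.Normal] {x : H} {θ : A ≃* Multiplicative T} {π : R}
  (hx : ∀ (a : H) (ha : a ∈ A) (hxa : x⁻¹ * a * x ∈ A),
    (θ ⟨x⁻¹ * a * x, hxa⟩).toAdd = (1 + π) • (θ ⟨a, ha⟩).toAdd)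

include hx in
theorem toAdd_commutatorElement_inv {a : H} (ha : a ∈ A) (hc : ⁅x⁻¹, a⁆ ∈ A) :
    (θ ⟨⁅x⁻¹, a⁆, hc⟩).toAdd = π • (θ ⟨a, ha⟩).toAdd := by
  have hxa : x⁻¹ * a * x ∈ A := ‹A.Normal›.conj_mem' a ha x
  have hsplit : (⟨⁅x⁻¹, a⁆, hc⟩ : A) = ⟨x⁻¹ * a * x, hxa⟩ * (⟨a, ha⟩ : A)⁻¹ :=
    Subtype.ext (by simp [commutatorElement_def])
  rw [hsplit, map_mul, map_inv, toAdd_mul, toAdd_inv, hx a ha hxa, add_smul, one_smul]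
  abel

variable (hab : ∀ a ∈ A, ∀ b ∈ A, a * b = b * a)
  (hgen : Subgroup.closure ((A : Set H) ∪ {x}) = ⊤) (hu : IsUnit (1 + π))

include hx hab hgen hu in
theorem pullback_normal (M : Submodule R T) : (pullback θ M.toAddSubgroup).Normal := by
  rw [← Subgroup.normalizer_eq_top_iff, eq_top_iff, ← hgen, Subgroup.closure_le]
  rintro z (hz | hz)
  · refine Subgroup.mem_normalizer_iff.mpr fun h => ?_
    by_cases hh : h ∈ A
    · rw [hab z hz h hh, mul_inv_cancel_right]
    · have hconj : z * h * z⁻¹ ∉ A := fun h' => hh (by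
        simpa [mul_assoc] using A.mul_mem (A.mul_mem (A.inv_mem hz) h') hz)
      exact iff_of_false (fun h' => hh (pullback_le θ _ h'))
        (fun h' => hconj (pullback_le θ _ h'))
  · rw [Set.mem_singleton_iff.mp hz]
    refine Subgroup.mem_normalizer_iff''.mpr fun h => ?_
    simp only [mem_pullback, Submodule.mem_toAddSubgroup]
    constructor
    · rintro ⟨ha, hM⟩
      exact ⟨‹A.Normal›.conj_mem' h ha _, by rw [hx h ha]; exact M.smul_mem _ hM⟩
    · rintro ⟨hxa, hM⟩
      have ha : h ∈ A := by simpa [mul_assoc] using ‹A.Normal›.conj_mem _ hxa x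
      exact ⟨ha, (M.smul_mem_iff_of_isUnit hu).mp (hx h ha hxa ▸ hM)⟩

include hx hab hgen hu in
theorem commutator_pullback_top (M : Submodule R T) :
    ⁅pullback θ M.toAddSubgroup, ⊤⁆ = pullback θ (π • M).toAddSubgroup := by
  have hN := pullback_normal hx hab hgen hu (π • M)
  have hcA {a : H} (ha : a ∈ A) : ⁅x⁻¹, a⁆ ∈ A :=
    Subgroup.commutator_le_right ⊤ A (Subgroup.commutator_mem_commutator (Subgroup.mem_top _) ha)
  refine le_antisymm ?_ fun b hb => ?_
  · rw [← hgen, ← Subgroup.closure_eq (pullback θ M.toAddSubgroup)]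
    refine Subgroup.commutator_closure_le fun a ha z hz => ?_
    obtain ⟨ha', hM⟩ := mem_pullback.mp ha
    rcases hz with hz | hz
    · rw [commutatorElement_eq_one_iff_mul_comm.mpr (hab a ha' z hz)]
      exact one_mem _
    · rw [Set.mem_singleton_iff.mp hz]
      have hc : ⁅x⁻¹, a⁆ ∈ pullback θ (π • M).toAddSubgroup :=
        mem_pullback.mpr ⟨hcA ha', by
          rw [toAdd_commutatorElement_inv hx ha']
          exact Submodule.smul_mem_pointwise_smul _ _ _ hM⟩
      simpa [commutatorElement_def, mul_assoc] using hN.conj_mem _ hc x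
  · obtain ⟨hb', hπM⟩ := mem_pullback.mp hb
    obtain ⟨m, hm, hbm⟩ := (Submodule.mem_smul_pointwise_iff_exists _ _ _).mp hπM
    set a := θ.symm (Multiplicative.ofAdd m)
    have ha : (a : H) ∈ pullback θ M.toAddSubgroup :=
      mem_pullback.mpr ⟨a.2, by simpa [a] using hm⟩
    have hcomm : ⁅x⁻¹, (a : H)⁆ = b := by
      have := toAdd_commutatorElement_inv hx a.2 (hcA a.2)
      simp only [Subtype.coe_eta, a, MulEquiv.apply_symm_apply, toAdd_ofAdd] at this
      exact congrArg Subtype.val (θ.injective (Multiplicative.toAdd.injective (this.trans hbm)))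
    rw [← hcomm, Subgroup.commutator_comm]
    exact Subgroup.commutator_mem_commutator (Subgroup.mem_top _) ha

include hx hab hgen hu in
theorem lowerCentralSeries_succ_eq_pullback (k : ℕ) :
    (⊤ : Subgroup H).lowerCentralSeries (k + 1) =
      pullback θ (π ^ (k + 1) • (⊤ : Submodule R T)).toAddSubgroup := by
  induction k with
  | zero =>
    have hN := pullback_normal hx hab hgen hu (π • ⊤)
    have hA := commutator_pullback_top hx hab hgen hu ⊤
    rw [Submodule.top_toAddSubgroup, pullback_top] at hA
    rw [zero_add, pow_one, Subgroup.lowerCentralSeries_succ, Subgroup.lowerCentralSeries_zero]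
    refine le_antisymm ?_ (hA ▸ Subgroup.commutator_mono le_top le_rfl)
    have hAx {a : H} (ha : a ∈ A) : ⁅a, x⁆ ∈ pullback θ (π • ⊤ : Submodule R T).toAddSubgroup :=
      hA ▸ Subgroup.commutator_mem_commutator ha (Subgroup.mem_top x)
    rw [← hgen]
    refine Subgroup.commutator_closure_le fun s hs t ht => ?_
    rcases hs with hs | rfl <;> rcases ht with ht | rfl
    · rw [commutatorElement_eq_one_iff_mul_comm.mpr (hab s hs t ht)]
      exact one_mem _
    · exact hAx hs
    · rw [← commutatorElement_inv]
      exact inv_mem (hAx ht)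
    · rw [commutatorElement_self]
      exact one_mem _
  | succ k ih =>
    rw [Subgroup.lowerCentralSeries_succ, ih, commutator_pullback_top hx hab hgen hu, smul_smul,
      ← pow_succ']

end LowerCentralSeries

theorem stmt_8_general (p : ℕ) [Fact p.Prime]
    (H : Type) [Group H] (A : Subgroup H) [A.Normal]
    (hab : ∀ a ∈ A, ∀ b ∈ A, a * b = b * a)
    (x : H)
    (hgen : Subgroup.closure ((A : Set H) ∪ {x}) = ⊤)
    (g : ℤ_[p][X]) (hg : g = ∑ i ∈ Finset.Icc 1 p, C (p.choose i : ℤ_[p]) * X ^ (i - 1))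
    (s : ℕ) (n : Fin s → ℕ)
    (θ : A → ⨁ i : Fin s, (ℤ_[p][X] ⧸ Ideal.span {g}) ⧸
        (Ideal.span {Ideal.Quotient.mk (Ideal.span {g}) X}) ^ (n i))
    (hbij : Function.Bijective θ)
    (hadd : ∀ a b : A, θ (a * b) = θ a + θ b)
    (hint : ∀ (a : H) (ha : a ∈ A) (hb : x⁻¹ * a * x ∈ A),
      θ ⟨x⁻¹ * a * x, hb⟩ = (1 + Ideal.Quotient.mk (Ideal.span {g}) X) • θ ⟨a, ha⟩) :
    ∀ j : ℕ, 2 ≤ j →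
      Nonempty ((↥((⊤ : Subgroup H).lowerCentralSeries (j - 1)) ⧸
          (((⊤ : Subgroup H).lowerCentralSeries j).subgroupOf ((⊤ : Subgroup H).lowerCentralSeries (j - 1)))) ≃*
        Multiplicative
          (Fin ((Finset.univ.filter (fun i : Fin s => j ≤ n i)).card) → ZMod p)) := by
  intro j hj
  obtain ⟨k, rfl⟩ : ∃ k, j = k + 2 := ⟨j - 2, by omega⟩
  have hXg : X * g = (1 + X) ^ p - 1 := hg ▸ X_mul_sum_choose_mul_X_pow ℤ_[p] p
  have hg0 : g.coeff 0 = p := coeff_zero_eq_of_X_mul_eq hXg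
  have hker : RingHom.ker PadicInt.toZMod = Ideal.span {g.coeff 0} := by
    rw [hg0, PadicInt.ker_toZMod, PadicInt.maximalIdeal_eq_span_p]
  have hφ : PadicInt.toZMod (g.coeff 0) = 0 :=
    RingHom.mem_ker.mp (hker ▸ Ideal.mem_span_singleton_self _)
  have hπ := isLeftRegular_mk_X (hg0 ▸ mem_nonZeroDivisors_of_ne_zero PadicInt.prime_p.ne_zero)
  have hu := IsUnit.of_pow_eq_one (one_add_mk_X_pow_eq_one hXg) (Fact.out : p.Prime).ne_zero
  -- instance search does not find this family by itself, hence not the group structure on `⨁`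
  let (i : Fin s) : AddCommGroup
      ((ℤ_[p][X] ⧸ Ideal.span {g}) ⧸ Ideal.span {Ideal.Quotient.mk (Ideal.span {g}) X} ^ n i) :=
    inferInstance
  let θ' := mulEquivOfAddBijective θ hadd hbij
  have hlcs := lowerCentralSeries_succ_eq_pullback (θ := θ') hint hab hgen hu
  have hν := ker_residueMap hφ hker
  obtain ⟨φ⟩ := nonempty_quotient_pullback_mulEquiv θ' _ _
    (gradedResidue_surjective hν n (residueMap_surjective hφ (ZMod.ringHom_surjective _)) (k + 1))
    (gradedResidue_eq_zero_iff hν n hπ) (hlcs k) (hlcs (k + 1))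
  let e := (Fintype.equivFinOfCardEq (Fintype.card_subtype fun i => k + 2 ≤ n i)).symm
  exact ⟨φ.trans (LinearEquiv.funCongrLeft (ZMod p) (ZMod p) e).toAddEquiv.toMultiplicative⟩

/-- With `H`, `A`, `x`, `𝔒 = ℤ_p[X]/(g)`, `𝔓 = (π)` and
`θ : A ≅ ⊕_{i=1}^s 𝔒/𝔓^(n_i)` as in the context, for every `j ≥ 2` the factor
`γ_j(H)/γ_{j+1}(H)` of the lower central series (in Mathlib numbering
`lowerCentralSeries H (j-1) / lowerCentralSeries H j`) is elementary abelian of rank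
`d_j = #{i | n_i ≥ j}`, i.e. isomorphic to `(ℤ/pℤ)^(d_j)`. -/
theorem stmt_8 (p : ℕ) [Fact p.Prime]
    (H : Type) [Group H] (A : Subgroup H) [A.Normal] [Finite A]
    (hab : ∀ a ∈ A, ∀ b ∈ A, a * b = b * a)
    (hpgrp : IsPGroup p A)
    (x : H)
    (hgen : Subgroup.closure ((A : Set H) ∪ {x}) = ⊤)
    (hxgen : ∀ q : H ⧸ A, q ∈ Subgroup.zpowers (QuotientGroup.mk x : H ⧸ A))
    (hord : ∃ k : ℕ, orderOf (QuotientGroup.mk x : H ⧸ A) = p ^ k)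
    (hsplit : ∀ a ∈ A, ((List.range p).map (fun i => (x ^ i)⁻¹ * a * x ^ i)).prod = 1)
    (g : ℤ_[p][X]) (hg : g = ∑ i ∈ Finset.Icc 1 p, C (p.choose i : ℤ_[p]) * X ^ (i - 1))
    (s : ℕ) (n : Fin s → ℕ) (hanti : Antitone n) (hpos : ∀ i, 1 ≤ n i)
    (θ : A → ⨁ i : Fin s, (ℤ_[p][X] ⧸ Ideal.span {g}) ⧸
        (Ideal.span {Ideal.Quotient.mk (Ideal.span {g}) X}) ^ (n i))
    (hbij : Function.Bijective θ)
    (hadd : ∀ a b : A, θ (a * b) = θ a + θ b)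
    (hint : ∀ (a : H) (ha : a ∈ A) (hb : x⁻¹ * a * x ∈ A),
      θ ⟨x⁻¹ * a * x, hb⟩ = (1 + Ideal.Quotient.mk (Ideal.span {g}) X) • θ ⟨a, ha⟩) :
    ∀ j : ℕ, 2 ≤ j →
      Nonempty ((↥((⊤ : Subgroup H).lowerCentralSeries (j - 1)) ⧸
          (((⊤ : Subgroup H).lowerCentralSeries j).subgroupOf ((⊤ : Subgroup H).lowerCentralSeries (j - 1)))) ≃*
        Multiplicative
          (Fin ((Finset.univ.filter (fun i : Fin s => j ≤ n i)).card) → ZMod p)) :=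
  stmt_8_general p H A hab x hgen g hg s n θ hbij hadd hint
end

section
/- The quotient A/γ_2(H) is elementary abelian of rank s = ℓ(λ), and the minimal number of generators d(A) of A satisfies d(A) = Σ_{j=1}^{p−1} d_j, where d_j = #{ i : 1 ≤ i ≤ s, n_i ≥ j } is the number of parts of λ that are ≥ j. -/
/-!
Conjugation by `x` acts on `A ≅ M = ⊕ᵢ 𝔒/𝔓^{nᵢ}` as multiplication by `1 + π`, so the commutators
`[x⁻¹, b]` (`b ∈ A`) are exactly the elements of `πM`. As `A` is abelian and `H = ⟨A, x⟩`, the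
subgroup `πM` is normal with abelian quotient, hence `γ₂(H) = πM` and
`A/γ₂(H) ≅ ⊕ᵢ 𝔒/𝔓 ≅ 𝔽_p^s`.

For the rank, `pM` consists of non-generators of the finite abelian `p`-group `M` (a Nakayama
argument), so `d(A) = dim_{𝔽_p} M/pM`. Writing `g = p(1 + X t) + X^{p-1}` gives `p𝔒 = 𝔓^{p-1}` and
`𝔒/𝔓^m ≅ 𝔽_p[X]/(X^m)` for `m ≤ p - 1`; hence `M/pM ≅ ⊕ᵢ 𝔒/𝔓^{min(nᵢ, p-1)}` has dimension
`Σᵢ min(nᵢ, p - 1) = Σⱼ dⱼ`.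
-/

open DirectSum Polynomial
open scoped commutatorElement Pointwise

namespace Subgroup

variable {G : Type*} [Group G]

theorem commutator_le_of_closure_eq_top {S : Set G} (hS : closure S = ⊤) {N : Subgroup G}
    [N.Normal] (hSN : ∀ a ∈ S, ∀ b ∈ S, ⁅a, b⁆ ∈ N) : _root_.commutator G ≤ N := by
  have hmk := QuotientGroup.mk'_surjective N
  have hQ : closure (QuotientGroup.mk' N '' S) = ⊤ := by
    rw [← MonoidHom.map_closure, hS, map_top_of_surjective _ hmk]
  have hcenter : center (G ⧸ N) = ⊤ := by
    rw [eq_top_iff, ← hQ, closure_le, center_eq_iInf hQ]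
    rintro _ ⟨a, ha, rfl⟩
    simp only [SetLike.mem_coe, mem_iInf, mem_centralizer_singleton_iff]
    rintro _ ⟨b, hb, rfl⟩
    rw [← commute_iff_eq, ← commutatorElement_eq_one_iff_commute, ← map_commutatorElement,
      QuotientGroup.mk'_apply, QuotientGroup.eq_one_iff]
    exact hSN a ha b hb
  rw [← QuotientGroup.ker_mk' N, ← map_eq_bot_iff, _root_.commutator_def, map_commutator,
    map_top_of_surjective _ hmk, ← _root_.commutator_def, commutator_eq_bot_iff_center_eq_top]
  exact hcenter

variable {A : Subgroup G} [A.Normal]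

theorem conjNormal_apply_eq_self_of_mem {b : G} (hb : b ∈ A) (hA : ∀ a ∈ A, ∀ b ∈ A, a * b = b * a)
    (a : A) : MulAut.conjNormal b a = a := by
  ext
  rw [MulAut.conjNormal_apply, hA b hb a a.2, mul_inv_cancel_right]

theorem map_conjNormal_eq_of_closure_eq_top (hA : ∀ a ∈ A, ∀ b ∈ A, a * b = b * a) {x : G}
    (hgen : closure ((A : Set G) ∪ {x}) = ⊤) {Q : Type*} [Group Q] (Ψ : A →* Q)
    (hΨ : ∀ a, Ψ (MulAut.conjNormal x a) = Ψ a) (h : G) (a : A) :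
    Ψ (MulAut.conjNormal h a) = Ψ a := by
  have hh : h ∈ closure ((A : Set G) ∪ {x}) := hgen ▸ mem_top h
  induction hh using closure_induction generalizing a with
  | mem y hy =>
    rcases hy with hy | rfl
    · rw [conjNormal_apply_eq_self_of_mem hy hA]
    · exact hΨ a
  | one => rw [map_one, MulAut.one_apply]
  | mul y z _ _ hy hz => rw [map_mul, MulAut.mul_apply, hy, hz]
  | inv y _ hy => rw [← hy, map_inv, MulAut.apply_inv_self]

theorem commutator_le_map_ker (hA : ∀ a ∈ A, ∀ b ∈ A, a * b = b * a) {x : G}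
    (hgen : closure ((A : Set G) ∪ {x}) = ⊤) {Q : Type*} [Group Q] (Ψ : A →* Q)
    (hΨ : ∀ a, Ψ (MulAut.conjNormal x a) = Ψ a) : _root_.commutator G ≤ Ψ.ker.map A.subtype := by
  have hinv := map_conjNormal_eq_of_closure_eq_top hA hgen Ψ hΨ
  have : (Ψ.ker.map A.subtype).Normal := ⟨by
    rintro _ ⟨a, ha, rfl⟩ h
    refine ⟨MulAut.conjNormal h a, ?_, MulAut.conjNormal_apply h a⟩
    rwa [SetLike.mem_coe, MonoidHom.mem_ker, hinv]⟩
  have hcomm : ∀ a ∈ A, ∀ h : G, ⁅a, h⁆ ∈ Ψ.ker.map A.subtype := by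
    intro a ha h
    refine ⟨⟨a, ha⟩ * MulAut.conjNormal h ⟨a, ha⟩⁻¹, ?_, ?_⟩
    · rw [SetLike.mem_coe, MonoidHom.mem_ker, map_mul, hinv, map_inv, mul_inv_cancel]
    · simp [MulAut.conjNormal_apply, commutatorElement_def, mul_assoc]
  refine commutator_le_of_closure_eq_top hgen ?_
  rintro a (ha | rfl) b (hb | rfl)
  · rw [commutatorElement_eq_one_iff_mul_comm.mpr (hA a ha b hb)]
    exact one_mem _
  · exact hcomm a ha _
  · rw [← commutatorElement_inv]
    exact inv_mem (hcomm b hb _)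
  · rw [commutatorElement_self]
    exact one_mem _

end Subgroup

section ReductionModSMul

variable {G : Type*} [Group G] {A : Subgroup G} {R M : Type*} [CommRing R] [AddCommGroup M]
  [Module R M]

def reductionModSMul (e : Additive A ≃+ M) (r : R) : A →* Multiplicative (QuotSMulTop r M) :=
  AddMonoidHom.toMultiplicativeRight
    ((r • ⊤ : Submodule R M).mkQ.toAddMonoidHom.comp e.toAddMonoidHom)

theorem reductionModSMul_apply (e : Additive A ≃+ M) (r : R) (a : A) :
    reductionModSMul e r a = .ofAdd (Submodule.Quotient.mk (e (.ofMul a))) :=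
  rfl

theorem mem_ker_reductionModSMul {e : Additive A ≃+ M} {r : R} {a : A} :
    a ∈ (reductionModSMul e r).ker ↔ ∃ v, r • v = e (.ofMul a) := by
  rw [MonoidHom.mem_ker, reductionModSMul_apply, ofAdd_eq_one, Submodule.Quotient.mk_eq_zero,
    Submodule.mem_smul_pointwise_iff_exists]
  simp

theorem reductionModSMul_surjective (e : Additive A ≃+ M) (r : R) :
    Function.Surjective (reductionModSMul e r) := by
  intro q
  obtain ⟨v, hv⟩ := Submodule.mkQ_surjective _ q.toAdd
  refine ⟨(e.symm v).toMul, ?_⟩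
  rw [reductionModSMul_apply, ofMul_toMul, AddEquiv.apply_symm_apply]
  exact congrArg Multiplicative.ofAdd hv

theorem commutator_subgroupOf_eq_ker_reductionModSMul [A.Normal]
    (hA : ∀ a ∈ A, ∀ b ∈ A, a * b = b * a) {x : G}
    (hgen : Subgroup.closure ((A : Set G) ∪ {x}) = ⊤) (e : Additive A ≃+ M) {π : R}
    (he : ∀ a : A, e (.ofMul (MulAut.conjNormal x⁻¹ a)) = (1 + π) • e (.ofMul a)) :
    (commutator G).subgroupOf A = (reductionModSMul e π).ker := by
  set Ψ := reductionModSMul e π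
  apply le_antisymm
  · have hΨ : ∀ a, Ψ (MulAut.conjNormal x a) = Ψ a := by
      intro a
      have h := he (MulAut.conjNormal x a)
      rw [← MulAut.mul_apply, ← map_mul, inv_mul_cancel, map_one, MulAut.one_apply] at h
      rw [reductionModSMul_apply, reductionModSMul_apply, EmbeddingLike.apply_eq_iff_eq,
        Submodule.Quotient.eq, Submodule.mem_smul_pointwise_iff_exists]
      exact ⟨-e (.ofMul (MulAut.conjNormal x a)), Submodule.mem_top, by rw [h]; module⟩
    intro a ha
    rw [Subgroup.mem_subgroupOf] at ha
    exact (Subgroup.mem_map_iff_mem A.subtype_injective).mp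
      (Subgroup.commutator_le_map_ker hA hgen Ψ hΨ ha)
  · intro a ha
    obtain ⟨v, hv⟩ := mem_ker_reductionModSMul.mp ha
    obtain ⟨b, rfl⟩ := e.surjective v
    have hab : MulAut.conjNormal x⁻¹ b.toMul * b.toMul⁻¹ = a := by
      apply (Additive.ofMul.trans e.toEquiv).injective
      simp only [Equiv.trans_apply, AddEquiv.toEquiv_eq_coe, EquivLike.coe_coe, ofMul_mul,
        ofMul_inv, map_add, map_neg, he, ← hv]
      simp only [ofMul_toMul]
      module
    have hcomm : ((MulAut.conjNormal x⁻¹ b.toMul * b.toMul⁻¹ : A) : G) = ⁅x⁻¹, (b.toMul : G)⁆ := by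
      simp [commutatorElement_def]
    rw [Subgroup.mem_subgroupOf, ← hab, hcomm]
    exact Subgroup.commutator_mem_commutator (Subgroup.mem_top _) (Subgroup.mem_top _)

end ReductionModSMul

namespace Ideal

variable {R : Type*} [CommRing R] {ι : Type*} (I : ι → Ideal R) (r : R)

def piQuotientReduce : (Π i, R ⧸ I i) →ₗ[R] Π i, R ⧸ (I i ⊔ span {r}) :=
  LinearMap.pi fun i => Submodule.factor (le_sup_left : I i ≤ I i ⊔ span {r}) ∘ₗ LinearMap.proj i

theorem smul_quotient_sup_span_eq_zero (J : Ideal R) (q : R ⧸ (J ⊔ span {r})) : r • q = 0 := by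
  obtain ⟨c, rfl⟩ := Quotient.mk_surjective q
  rw [Algebra.smul_def, Quotient.algebraMap_eq, ← map_mul, Quotient.eq_zero_iff_mem]
  exact mem_sup_right (mem_span_singleton.mpr (dvd_mul_right r c))

theorem piQuotientReduce_surjective : Function.Surjective (piQuotientReduce I r) := by
  intro v
  choose u hu using fun i => Submodule.factor_surjective (le_sup_left : I i ≤ I i ⊔ span {r})
    (v i)
  exact ⟨u, funext hu⟩

theorem ker_piQuotientReduce : LinearMap.ker (piQuotientReduce I r) = r • ⊤ := by
  ext v
  rw [LinearMap.mem_ker, Submodule.mem_smul_pointwise_iff_exists]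
  constructor
  · intro hv
    have hvi : ∀ i, ∃ c : R, r • Quotient.mk (I i) c = v i := by
      intro i
      obtain ⟨w, hw⟩ := Quotient.mk_surjective (v i)
      have h0 : Quotient.mk (I i ⊔ span {r}) w = 0 := by
        rw [← Pi.zero_apply (M := fun i => R ⧸ (I i ⊔ span {r})) i, ← hv]
        simp only [piQuotientReduce, LinearMap.pi_apply, LinearMap.comp_apply,
          LinearMap.proj_apply, ← hw]
        rfl
      obtain ⟨a, ha, b, hb, rfl⟩ := Submodule.mem_sup.mp (Quotient.eq_zero_iff_mem.mp h0)
      obtain ⟨c, rfl⟩ := mem_span_singleton.mp hb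
      refine ⟨c, ?_⟩
      rw [← hw, map_add, Quotient.eq_zero_iff_mem.mpr ha, zero_add, map_mul, Algebra.smul_def,
        Quotient.algebraMap_eq]
    choose c hc using hvi
    exact ⟨fun i => Quotient.mk (I i) (c i), Submodule.mem_top, funext hc⟩
  · rintro ⟨u, -, rfl⟩
    rw [map_smul]
    exact funext fun i => smul_quotient_sup_span_eq_zero r _ _

noncomputable def quotSMulTopPiEquiv :
    QuotSMulTop r (Π i, R ⧸ I i) ≃ₗ[R] Π i, R ⧸ (I i ⊔ span {r}) :=
  (Submodule.quotEquivOfEq _ _ (ker_piQuotientReduce I r).symm).trans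
    ((piQuotientReduce I r).quotKerEquivOfSurjective (piQuotientReduce_surjective I r))

end Ideal

theorem Group.rank_eq_sInf (G : Type*) [Group G] [Group.FG G] :
    Group.rank G = sInf {k | ∃ S : Finset G, S.card = k ∧ Subgroup.closure (S : Set G) = ⊤} := by
  set gens := {k | ∃ S : Finset G, S.card = k ∧ Subgroup.closure (S : Set G) = ⊤}
  obtain ⟨S, hS, hcl⟩ := Group.rank_spec G
  have hne : gens.Nonempty := ⟨_, S, rfl, hcl⟩
  refine le_antisymm ?_ (hS ▸ Nat.sInf_le ⟨S, rfl, hcl⟩)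
  obtain ⟨T, hT, hTcl⟩ := Nat.sInf_mem hne
  exact hT ▸ Group.rank_le hTcl

theorem AddGroup.rank_additive (G : Type*) [Group G] [Group.FG G] :
    AddGroup.rank (Additive G) = Group.rank G := by
  have key (S : Finset G) :
      AddSubgroup.closure (S.map Additive.ofMul.toEmbedding : Set (Additive G)) = ⊤ ↔
        Subgroup.closure (S : Set G) = ⊤ := by
    have hS : (S.map Additive.ofMul.toEmbedding : Set (Additive G)) = Additive.toMul ⁻¹' S := by
      ext; simp
    rw [← Subgroup.toAddSubgroup.injective.eq_iff, Subgroup.toAddSubgroup_closure, map_top, hS]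
  apply le_antisymm
  · obtain ⟨S, hS, hcl⟩ := Group.rank_spec G
    exact (AddGroup.rank_le ((key S).mpr hcl)).trans (by simp [hS])
  · obtain ⟨T, hT, hcl⟩ := AddGroup.rank_spec (Additive G)
    have hTS : (T.map Additive.toMul.toEmbedding).map Additive.ofMul.toEmbedding = T := by
      ext; simp
    rw [← hTS, key] at hcl
    exact (Group.rank_le hcl).trans (by simp [hT])

theorem AddSubgroup.eq_top_of_forall_mem_add_nsmul {M : Type*} [AddCommGroup M] {p e : ℕ}
    (hexp : ∀ v : M, p ^ e • v = 0) {K : AddSubgroup M}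
    (hK : ∀ v, ∃ k ∈ K, ∃ w, v = k + p • w) : K = ⊤ := by
  have hKj : ∀ j : ℕ, ∀ v, ∃ k ∈ K, ∃ w, v = k + p ^ j • w := by
    intro j
    induction j with
    | zero => exact fun v => ⟨0, zero_mem _, v, by simp⟩
    | succ j ih =>
      intro v
      obtain ⟨k, hk, w, rfl⟩ := ih v
      obtain ⟨k', hk', w', rfl⟩ := hK w
      refine ⟨k + p ^ j • k', add_mem hk (nsmul_mem hk' _), w', ?_⟩
      rw [smul_add, ← add_assoc, smul_smul, pow_succ]
  rw [eq_top_iff']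
  intro v
  obtain ⟨k, hk, w, rfl⟩ := hKj e v
  rwa [hexp, add_zero]

theorem AddGroup.rank_eq_of_surjective_of_ker {M Q : Type*} [AddCommGroup M] [AddGroup Q]
    [AddGroup.FG M] [AddGroup.FG Q] {p e : ℕ} (hexp : ∀ v : M, p ^ e • v = 0) (f : M →+ Q)
    (hf : Function.Surjective f) (hker : ∀ v, f v = 0 → ∃ w, v = p • w) :
    AddGroup.rank Q = AddGroup.rank M := by
  classical
  refine le_antisymm (AddGroup.rank_le_of_surjective f hf) ?_
  obtain ⟨S, hS, hcl⟩ := AddGroup.rank_spec Q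
  choose lift hlift using hf
  set T := S.image lift
  have hT : AddSubgroup.closure (T : Set M) = ⊤ := by
    refine AddSubgroup.eq_top_of_forall_mem_add_nsmul hexp fun v => ?_
    have hmap : AddSubgroup.map f (AddSubgroup.closure (T : Set M)) = ⊤ := by
      rw [AddMonoidHom.map_closure, Finset.coe_image, Set.image_image]
      simpa only [hlift, Set.image_id'] using hcl
    obtain ⟨k, hk, hkv⟩ := hmap.symm ▸ AddSubgroup.mem_top (f v)
    obtain ⟨w, hw⟩ := hker (v - k) (by rw [map_sub, hkv, sub_self])
    exact ⟨k, hk, w, by rw [← hw, add_sub_cancel]⟩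
  exact (AddGroup.rank_le hT).trans (Finset.card_image_le.trans hS.le)

theorem Submodule.toAddSubgroup_span_zmod {n : ℕ} {V : Type*} [AddCommGroup V] [Module (ZMod n) V]
    (S : Set V) : (Submodule.span (ZMod n) S).toAddSubgroup = AddSubgroup.closure S := by
  refine le_antisymm ?_ (AddSubgroup.closure_le _ |>.mpr Submodule.subset_span)
  exact show Submodule.span (ZMod n) S ≤ AddSubgroup.toZModSubmodule n (AddSubgroup.closure S) from
    Submodule.span_le.mpr AddSubgroup.subset_closure

theorem AddGroup.rank_eq_of_natCard_eq_pow {V : Type*} [AddCommGroup V] [Finite V] {p k : ℕ}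
    [Fact p.Prime] [Module (ZMod p) V] (hcard : Nat.card V = p ^ k) : AddGroup.rank V = k := by
  classical
  have hspan (S : Set V) : AddSubgroup.closure S = ⊤ ↔ Submodule.span (ZMod p) S = ⊤ := by
    rw [← Submodule.toAddSubgroup_span_zmod (n := p), ← Submodule.top_toAddSubgroup (R := ZMod p),
      Submodule.toAddSubgroup_inj]
  have hfinrank : Module.finrank (ZMod p) V = k := by
    refine Nat.pow_right_injective (Fact.out : p.Prime).two_le ?_
    have h := Module.natCard_eq_pow_finrank (K := ZMod p) (V := V)
    rw [Nat.card_zmod, hcard] at h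
    exact h.symm
  rw [← hfinrank]
  apply le_antisymm
  · let b := Module.finBasis (ZMod p) V
    have hb : AddSubgroup.closure ((Finset.univ.image b : Finset V) : Set V) = ⊤ := by
      rw [hspan, Finset.coe_image, Finset.coe_univ, Set.image_univ, b.span_eq]
    exact (AddGroup.rank_le hb).trans (Finset.card_image_le.trans (by simp))
  · obtain ⟨S, hS, hcl⟩ := AddGroup.rank_spec V
    rw [hspan] at hcl
    have h := finrank_span_le_card (R := ZMod p) (S : Set V)
    rwa [hcl, finrank_top, Finset.toFinset_coe, hS] at h

theorem Ideal.span_singleton_eq_span_singleton_pow {S : Type*} [CommRing S] {a π u : S} {d : ℕ}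
    (h : a * (1 + π * u) + π ^ d = 0) : Ideal.span {a} = Ideal.span {π} ^ d := by
  have ha : ∀ k ≤ d, a ∈ Ideal.span {π} ^ k := by
    intro k
    induction k with
    | zero => simp
    | succ k ih =>
      intro hk
      have hrec : a = π * (-(a * u)) + -π ^ d := by linear_combination h
      rw [hrec]
      refine add_mem ?_ (neg_mem (Ideal.pow_le_pow_right hk (Ideal.pow_mem_pow
        (Ideal.mem_span_singleton_self π) d)))
      rw [pow_succ']
      exact Ideal.mul_mem_mul (Ideal.mem_span_singleton_self π)
        (neg_mem (Ideal.mul_mem_right _ _ (ih (by omega))))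
  refine le_antisymm (Ideal.span_le.mpr (by simpa using ha d le_rfl)) ?_
  rw [Ideal.span_singleton_pow, Ideal.span_singleton_le_span_singleton]
  exact ⟨-(1 + π * u), by linear_combination h⟩

theorem Ideal.span_sup_span_pow_eq {S : Type*} [CommRing S] (c x t : S) {d m : ℕ} (hm : m ≤ d) :
    Ideal.span {c * (1 + x * t) + x ^ d} ⊔ Ideal.span {x ^ m} =
      Ideal.span {c} ⊔ Ideal.span {x ^ m} := by
  set J := Ideal.span {c * (1 + x * t) + x ^ d} ⊔ Ideal.span {x ^ m}
  have hxm : x ^ m ∈ J := Ideal.mem_sup_right (Ideal.mem_span_singleton_self _)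
  have hxd : x ^ d ∈ Ideal.span {x ^ m} :=
    Ideal.mem_span_singleton.mpr (pow_dvd_pow x hm)
  refine le_antisymm (sup_le ?_ le_sup_right) (sup_le ?_ le_sup_right)
  · rw [Ideal.span_singleton_le_iff_mem]
    exact add_mem (Ideal.mul_mem_right _ _ (Ideal.mem_sup_left (Ideal.mem_span_singleton_self c)))
      (Ideal.mem_sup_right hxd)
  · -- modulo `J`, `x` is nilpotent, so `1 + x * t` is a unit
    rw [Ideal.span_singleton_le_iff_mem, ← Ideal.Quotient.eq_zero_iff_mem]
    have hnil : IsNilpotent (Ideal.Quotient.mk J x * Ideal.Quotient.mk J t) :=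
      (Commute.all _ _).isNilpotent_mul_right
        ⟨m, by rw [← map_pow, Ideal.Quotient.eq_zero_iff_mem]; exact hxm⟩
    have hg : Ideal.Quotient.mk J (c * (1 + x * t) + x ^ d) = 0 :=
      Ideal.Quotient.eq_zero_iff_mem.mpr (Ideal.mem_sup_left (Ideal.mem_span_singleton_self _))
    have hd : Ideal.Quotient.mk J (x ^ d) = 0 :=
      Ideal.Quotient.eq_zero_iff_mem.mpr (Ideal.mem_sup_right hxd)
    rw [map_add, hd, add_zero, map_mul, map_add, map_one, map_mul] at hg
    exact (hnil.isUnit_one_add.mul_left_eq_zero).mp hg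

theorem exists_sum_choose_eq (p : ℕ) [hp : Fact p.Prime] : ∃ t : ℤ_[p][X],
    ∑ i ∈ Finset.Icc 1 p, C (p.choose i : ℤ_[p]) * X ^ (i - 1) =
      C (p : ℤ_[p]) * (1 + X * t) + X ^ (p - 1) := by
  have hp2 := hp.out.two_le
  refine ⟨∑ i ∈ Finset.Icc 2 (p - 1), C ((p.choose i / p : ℕ) : ℤ_[p]) * X ^ (i - 2), ?_⟩
  have hsplit : Finset.Icc 1 p = insert 1 (insert p (Finset.Icc 2 (p - 1))) := by
    ext; simp only [Finset.mem_Icc, Finset.mem_insert]; omega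
  have hterm : ∀ i ∈ Finset.Icc 2 (p - 1), C (p.choose i : ℤ_[p]) * X ^ (i - 1) =
      C (p : ℤ_[p]) * (X * (C ((p.choose i / p : ℕ) : ℤ_[p]) * X ^ (i - 2))) := by
    intro i hi
    rw [Finset.mem_Icc] at hi
    have hdvd : p ∣ p.choose i := hp.out.dvd_choose_self (by omega) (by omega)
    have hcast : (p.choose i : ℤ_[p]) = p * (p.choose i / p : ℕ) := by
      rw [← Nat.cast_mul, Nat.mul_div_cancel' hdvd]
    rw [show i - 1 = i - 2 + 1 by omega, hcast, map_mul]
    ring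
  rw [hsplit, Finset.sum_insert (by simp; omega), Finset.sum_insert (by simp; omega),
    Finset.sum_congr rfl hterm, ← Finset.mul_sum, ← Finset.mul_sum, Nat.choose_one_right,
    Nat.choose_self, Nat.sub_self, pow_zero, Nat.cast_one, map_one]
  ring

section EisensteinQuotient

variable {p : ℕ} [Fact p.Prime]

theorem PadicInt.ker_mapRingHom_toZMod :
    RingHom.ker (mapRingHom (PadicInt.toZMod (p := p))) = Ideal.span {C (p : ℤ_[p])} := by
  rw [ker_mapRingHom, PadicInt.ker_toZMod, PadicInt.maximalIdeal_eq_span_p, Ideal.map_span,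
    Set.image_singleton]

variable {g t : ℤ_[p][X]} {d : ℕ}

theorem span_natCast_eq_span_X_pow (hg : g = C (p : ℤ_[p]) * (1 + X * t) + X ^ d) :
    Ideal.span {(p : ℤ_[p][X] ⧸ Ideal.span {g})} =
      Ideal.span {Ideal.Quotient.mk (Ideal.span {g}) X} ^ d := by
  refine Ideal.span_singleton_eq_span_singleton_pow (u := Ideal.Quotient.mk _ t) ?_
  have h0 : Ideal.Quotient.mk (Ideal.span {g}) (C (p : ℤ_[p]) * (1 + X * t) + X ^ d) = 0 := by
    rw [← hg, Ideal.Quotient.eq_zero_iff_mem]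
    exact Ideal.mem_span_singleton_self g
  rwa [map_add, map_mul, map_add, map_one, map_mul, map_pow, Polynomial.C_eq_natCast,
    map_natCast] at h0

theorem span_sup_span_X_pow_eq_ker (hg : g = C (p : ℤ_[p]) * (1 + X * t) + X ^ d) {m : ℕ}
    (hm : m ≤ d) : Ideal.span {g} ⊔ Ideal.span {X ^ m} = RingHom.ker
      ((Ideal.Quotient.mk (Ideal.span {X ^ m})).comp (mapRingHom (PadicInt.toZMod (p := p)))) := by
  have hXm : Ideal.span {(X : (ZMod p)[X]) ^ m} =
      (Ideal.span {X ^ m}).map (mapRingHom (PadicInt.toZMod (p := p))) := by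
    rw [Ideal.map_span, Set.image_singleton, map_pow, coe_mapRingHom, Polynomial.map_X]
  rw [← RingHom.comap_ker, Ideal.mk_ker, hXm, Ideal.comap_map_of_surjective _
    (Polynomial.map_surjective _ (ZMod.ringHom_surjective _)), ← RingHom.ker_eq_comap_bot,
    PadicInt.ker_mapRingHom_toZMod, hg, Ideal.span_sup_span_pow_eq _ _ _ hm, sup_comm]

noncomputable def quotientSpanXPowEquiv (hg : g = C (p : ℤ_[p]) * (1 + X * t) + X ^ d) {m : ℕ}
    (hm : m ≤ d) :
    (ℤ_[p][X] ⧸ Ideal.span {g}) ⧸ Ideal.span {Ideal.Quotient.mk (Ideal.span {g}) X} ^ m ≃+*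
      (ZMod p)[X] ⧸ Ideal.span {(X : (ZMod p)[X]) ^ m} :=
  (Ideal.quotEquivOfEq (by rw [Ideal.span_singleton_pow, Ideal.map_span, Set.image_singleton,
      map_pow])).trans <|
    (DoubleQuot.quotQuotEquivQuotSup _ _).trans <|
      (Ideal.quotEquivOfEq (span_sup_span_X_pow_eq_ker hg hm)).trans <|
        RingHom.quotientKerEquivOfSurjective <| (Ideal.Quotient.mk_surjective).comp
          (Polynomial.map_surjective _ (ZMod.ringHom_surjective _))

theorem natCard_quotient_span_X_pow (m : ℕ) :
    Nat.card ((ZMod p)[X] ⧸ Ideal.span {(X : (ZMod p)[X]) ^ m}) = p ^ m := by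
  let b := AdjoinRoot.powerBasis (K := ZMod p) (pow_ne_zero m X_ne_zero)
  have hdim : b.dim = m := by simp [b, AdjoinRoot.powerBasis]
  change Nat.card (AdjoinRoot (X ^ m)) = _
  rw [Nat.card_congr b.basis.equivFun.toEquiv, Nat.card_fun, Nat.card_zmod, Nat.card_fin, hdim]

theorem natCard_quotient_span_X_pow_of_le (hg : g = C (p : ℤ_[p]) * (1 + X * t) + X ^ d) {m : ℕ}
    (hm : m ≤ d) : Nat.card ((ℤ_[p][X] ⧸ Ideal.span {g}) ⧸
      Ideal.span {Ideal.Quotient.mk (Ideal.span {g}) X} ^ m) = p ^ m := by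
  rw [Nat.card_congr (quotientSpanXPowEquiv hg hm).toEquiv, natCard_quotient_span_X_pow]

noncomputable def quotientSpanXEquivZMod (hg : g = C (p : ℤ_[p]) * (1 + X * t) + X ^ d)
    (hd : 1 ≤ d) : (ℤ_[p][X] ⧸ Ideal.span {g}) ⧸ Ideal.span {Ideal.Quotient.mk (Ideal.span {g}) X}
      ≃+* ZMod p :=
  (Ideal.quotEquivOfEq (pow_one (Ideal.span {Ideal.Quotient.mk (Ideal.span {g}) X})).symm).trans <|
    (quotientSpanXPowEquiv hg hd).trans <|
      (Ideal.quotEquivOfEq (show Ideal.span {(X : (ZMod p)[X]) ^ 1} = Ideal.span {X - C 0} by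
        rw [pow_one, map_zero, sub_zero])).trans
        (quotientSpanXSubCAlgEquiv (0 : ZMod p)).toRingEquiv

end EisensteinQuotient

theorem Finset.sum_min_eq_sum_card_filter_le {ι : Type*} [Fintype ι] (n : ι → ℕ) (m : ℕ) :
    ∑ i, min (n i) m = ∑ j ∈ Finset.Icc 1 m, (Finset.univ.filter fun i => j ≤ n i).card := by
  simp only [Finset.card_filter]
  rw [Finset.sum_comm]
  refine Finset.sum_congr rfl fun i _ => ?_
  have hfilter : (Finset.Icc 1 m).filter (· ≤ n i) = Finset.Icc 1 (min (n i) m) := by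
    ext j
    simp only [Finset.mem_filter, Finset.mem_Icc, le_min_iff]
    omega
  rw [← Finset.card_filter, hfilter, Nat.card_Icc, Nat.add_sub_cancel]

theorem AddGroup.rank_pi_quotient_span_pow {R : Type*} [CommRing R] {p : ℕ} [Fact p.Prime] {π : R}
    {d : ℕ} (hp : Ideal.span {(p : R)} = Ideal.span {π} ^ d)
    (hcard : ∀ m ≤ d, Nat.card (R ⧸ Ideal.span {π} ^ m) = p ^ m) {ι : Type*} [Fintype ι]
    (n : ι → ℕ) [Finite (Π i, R ⧸ Ideal.span {π} ^ n i)] {k : ℕ}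
    (hexp : ∀ v : Π i, R ⧸ Ideal.span {π} ^ n i, p ^ k • v = 0) :
    AddGroup.rank (Π i, R ⧸ Ideal.span {π} ^ n i) = ∑ i, min (n i) d := by
  set P := Ideal.span {π}
  have hsup : ∀ i, P ^ n i ⊔ Ideal.span {(p : R)} = P ^ min (n i) d := by
    intro i
    rw [hp]
    rcases le_total (n i) d with h | h
    · rw [min_eq_left h, sup_eq_left.mpr (Ideal.pow_le_pow_right h)]
    · rw [min_eq_right h, sup_eq_right.mpr (Ideal.pow_le_pow_right h)]
  have hQcard : Nat.card (QuotSMulTop (p : R) (Π i, R ⧸ P ^ n i)) = p ^ ∑ i, min (n i) d := by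
    rw [Nat.card_congr (Ideal.quotSMulTopPiEquiv _ _).toEquiv, Nat.card_pi,
      ← Finset.prod_pow_eq_pow_sum]
    refine Finset.prod_congr rfl fun i _ => ?_
    rw [Nat.card_congr (Ideal.quotEquivOfEq (hsup i)).toEquiv, hcard _ (min_le_right _ _)]
  have hQ : ∀ q : QuotSMulTop (p : R) (Π i, R ⧸ P ^ n i), p • q = 0 := by
    intro q
    obtain ⟨v, rfl⟩ := Submodule.mkQ_surjective _ q
    rw [← map_nsmul, Submodule.mkQ_apply, Submodule.Quotient.mk_eq_zero,
      ← Nat.cast_smul_eq_nsmul R]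
    exact Submodule.smul_mem_pointwise_smul _ _ _ Submodule.mem_top
  have : Finite (QuotSMulTop (p : R) (Π i, R ⧸ P ^ n i)) :=
    Finite.of_surjective _ (Submodule.mkQ_surjective _)
  let _ := AddCommGroup.zmodModule hQ
  rw [← AddGroup.rank_eq_of_natCard_eq_pow hQcard]
  refine (AddGroup.rank_eq_of_surjective_of_ker hexp (Submodule.mkQ _).toAddMonoidHom
    (Submodule.mkQ_surjective _) fun v hv => ?_).symm
  obtain ⟨w, -, hw⟩ := (Submodule.mem_smul_pointwise_iff_exists _ _ _).mp
    ((Submodule.Quotient.mk_eq_zero _).mp hv)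
  exact ⟨w, by rw [← hw, Nat.cast_smul_eq_nsmul]⟩

theorem Group.rank_eq_sum_min_of_addEquiv {G : Type*} [Group G] [Finite G] {p : ℕ} [Fact p.Prime]
    (hG : IsPGroup p G) {R : Type*} [CommRing R] {π : R} {d : ℕ}
    (hp : Ideal.span {(p : R)} = Ideal.span {π} ^ d)
    (hcard : ∀ m ≤ d, Nat.card (R ⧸ Ideal.span {π} ^ m) = p ^ m) {ι : Type*} [Fintype ι]
    (n : ι → ℕ) (e : Additive G ≃+ Π i, R ⧸ Ideal.span {π} ^ n i) :
    Group.rank G = ∑ i, min (n i) d := by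
  obtain ⟨k, hk⟩ := IsPGroup.iff_card.mp hG
  have : Finite (Π i, R ⧸ Ideal.span {π} ^ n i) := Finite.of_equiv _ e.toEquiv
  have hexp (v : Π i, R ⧸ Ideal.span {π} ^ n i) : p ^ k • v = 0 := by
    rw [← hk, Nat.card_congr (Additive.ofMul.trans e.toEquiv)]
    exact card_nsmul_eq_zero'
  rw [← AddGroup.rank_additive, AddGroup.rank_congr e,
    AddGroup.rank_pi_quotient_span_pow hp hcard n hexp]

theorem nonempty_quotient_commutator_mulEquiv {G : Type*} [Group G] {A : Subgroup G} [A.Normal]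
    (hA : ∀ a ∈ A, ∀ b ∈ A, a * b = b * a) {x : G}
    (hgen : Subgroup.closure ((A : Set G) ∪ {x}) = ⊤) {R : Type*} [CommRing R] {π : R}
    {ι : Type*} {n : ι → ℕ} (hn : ∀ i, n i ≠ 0) (e : Additive A ≃+ Π i, R ⧸ Ideal.span {π} ^ n i)
    (he : ∀ a : A, e (.ofMul (MulAut.conjNormal x⁻¹ a)) = (1 + π) • e (.ofMul a))
    {Z : Type*} [AddZeroClass Z] (ε : R ⧸ Ideal.span {π} ≃+ Z) :
    Nonempty (A ⧸ (commutator G).subgroupOf A ≃* Multiplicative (ι → Z)) := by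
  have hsup (i : ι) : Ideal.span {π} ^ n i ⊔ Ideal.span {π} = Ideal.span {π} :=
    sup_eq_right.mpr (Ideal.pow_le_self (hn i))
  exact ⟨(QuotientGroup.quotientMulEquivOfEq
    (commutator_subgroupOf_eq_ker_reductionModSMul hA hgen e he)).trans <|
    (QuotientGroup.quotientKerEquivOfSurjective _ (reductionModSMul_surjective e π)).trans <|
      AddEquiv.toMultiplicative <| (Ideal.quotSMulTopPiEquiv _ π).toAddEquiv.trans <|
        AddEquiv.piCongrRight fun i => (Ideal.quotEquivOfEq (hsup i)).toAddEquiv.trans ε⟩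

theorem stmt_9_general (p : ℕ) [Fact p.Prime]
    (H : Type) [Group H] (A : Subgroup H) [A.Normal] [Finite A]
    (hab : ∀ a ∈ A, ∀ b ∈ A, a * b = b * a)
    (hpgrp : IsPGroup p A)
    (x : H)
    (hgen : Subgroup.closure ((A : Set H) ∪ {x}) = ⊤)
    (g : ℤ_[p][X]) (hg : g = ∑ i ∈ Finset.Icc 1 p, C (p.choose i : ℤ_[p]) * X ^ (i - 1))
    (s : ℕ) (n : Fin s → ℕ) (hpos : ∀ i, 1 ≤ n i)
    (θ : A → ⨁ i : Fin s, (ℤ_[p][X] ⧸ Ideal.span {g}) ⧸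
        (Ideal.span {Ideal.Quotient.mk (Ideal.span {g}) X}) ^ (n i))
    (hbij : Function.Bijective θ)
    (hadd : ∀ a b : A, θ (a * b) = θ a + θ b)
    (hint : ∀ (a : H) (ha : a ∈ A) (hb : x⁻¹ * a * x ∈ A),
      θ ⟨x⁻¹ * a * x, hb⟩ = (1 + Ideal.Quotient.mk (Ideal.span {g}) X) • θ ⟨a, ha⟩) :
    Nonempty ((↥A ⧸ (((⊤ : Subgroup H).lowerCentralSeries 1).subgroupOf A)) ≃*
        Multiplicative (Fin s → ZMod p)) ∧
    sInf {k : ℕ | ∃ S : Finset ↥A, S.card = k ∧ Subgroup.closure (S : Set ↥A) = ⊤} =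
      ∑ j ∈ Finset.Icc 1 (p - 1), (Finset.univ.filter (fun i : Fin s => j ≤ n i)).card := by
  obtain ⟨t, ht⟩ := exists_sum_choose_eq p
  rw [ht] at hg
  let e : Additive A ≃+ Π i : Fin s, (ℤ_[p][X] ⧸ Ideal.span {g}) ⧸
      Ideal.span {Ideal.Quotient.mk (Ideal.span {g}) X} ^ n i :=
    (AddEquiv.mk' (Equiv.ofBijective (θ ∘ Additive.toMul) hbij)
      fun a b => hadd a.toMul b.toMul).trans
        (DirectSum.linearEquivFunOnFintype (ℤ_[p][X] ⧸ Ideal.span {g}) (Fin s) _).toAddEquiv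
  have he (a : A) : e (.ofMul (MulAut.conjNormal x⁻¹ a)) =
      (1 + Ideal.Quotient.mk (Ideal.span {g}) X) • e (.ofMul a) := by
    have hmem : x⁻¹ * a * x ∈ A := by simpa using (MulAut.conjNormal x⁻¹ a).2
    have hconj : MulAut.conjNormal x⁻¹ a = ⟨x⁻¹ * a * x, hmem⟩ := by
      ext
      simp
    simp only [e, AddEquiv.trans_apply, hconj]
    exact (congrArg (DirectSum.linearEquivFunOnFintype _ (Fin s) _) (hint a a.2 hmem)).trans
      (map_smul _ _ _)
  refine ⟨?_, ?_⟩
  · obtain ⟨φ⟩ := nonempty_quotient_commutator_mulEquiv hab hgen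
      (fun i => Nat.one_le_iff_ne_zero.mp (hpos i)) e he
      (quotientSpanXEquivZMod hg (Nat.le_sub_one_of_lt (Fact.out : p.Prime).one_lt)).toAddEquiv
    exact ⟨(QuotientGroup.quotientMulEquivOfEq
      (by rw [Subgroup.top_lowerCentralSeries_one])).trans φ⟩
  · rw [← Group.rank_eq_sInf, Group.rank_eq_sum_min_of_addEquiv hpgrp
      (span_natCast_eq_span_X_pow hg) (fun m hm => natCard_quotient_span_X_pow_of_le hg hm) n e,
      Finset.sum_min_eq_sum_card_filter_le]

/-- With `H`, `A`, `x`, `𝔒 = ℤ_p[X]/(g)`, `𝔓 = (π)` and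
`θ : A ≅ ⊕_{i=1}^s 𝔒/𝔓^(n_i)` as in the context, the quotient `A/γ₂(H)`
(with `γ₂(H) = lowerCentralSeries H 1`) is elementary abelian of rank `s = ℓ(λ)`,
and the minimal number of generators of `A` equals `Σ_{j=1}^{p-1} d_j`, where
`d_j = #{i | n_i ≥ j}`. -/
theorem stmt_9 (p : ℕ) [Fact p.Prime]
    (H : Type) [Group H] (A : Subgroup H) [A.Normal] [Finite A]
    (hab : ∀ a ∈ A, ∀ b ∈ A, a * b = b * a)
    (hpgrp : IsPGroup p A)
    (x : H)
    (hgen : Subgroup.closure ((A : Set H) ∪ {x}) = ⊤)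
    (hxgen : ∀ q : H ⧸ A, q ∈ Subgroup.zpowers (QuotientGroup.mk x : H ⧸ A))
    (hord : ∃ k : ℕ, orderOf (QuotientGroup.mk x : H ⧸ A) = p ^ k)
    (hsplit : ∀ a ∈ A, ((List.range p).map (fun i => (x ^ i)⁻¹ * a * x ^ i)).prod = 1)
    (g : ℤ_[p][X]) (hg : g = ∑ i ∈ Finset.Icc 1 p, C (p.choose i : ℤ_[p]) * X ^ (i - 1))
    (s : ℕ) (n : Fin s → ℕ) (hanti : Antitone n) (hpos : ∀ i, 1 ≤ n i)
    (θ : A → ⨁ i : Fin s, (ℤ_[p][X] ⧸ Ideal.span {g}) ⧸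
        (Ideal.span {Ideal.Quotient.mk (Ideal.span {g}) X}) ^ (n i))
    (hbij : Function.Bijective θ)
    (hadd : ∀ a b : A, θ (a * b) = θ a + θ b)
    (hint : ∀ (a : H) (ha : a ∈ A) (hb : x⁻¹ * a * x ∈ A),
      θ ⟨x⁻¹ * a * x, hb⟩ = (1 + Ideal.Quotient.mk (Ideal.span {g}) X) • θ ⟨a, ha⟩) :
    Nonempty ((↥A ⧸ (((⊤ : Subgroup H).lowerCentralSeries 1).subgroupOf A)) ≃*
        Multiplicative (Fin s → ZMod p)) ∧
    sInf {k : ℕ | ∃ S : Finset ↥A, S.card = k ∧ Subgroup.closure (S : Set ↥A) = ⊤} =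
      ∑ j ∈ Finset.Icc 1 (p - 1), (Finset.univ.filter (fun i : Fin s => j ≤ n i)).card :=
  stmt_9_general p H A hab hpgrp x hgen g hg s n hpos θ hbij hadd hint
end

section
/- Let A be an abelian group (written additively) and σ an endomorphism of A such that (σ − 1)^{p−1}·a = 0 for all a ∈ A and p·((σ − 1)·a) = 0 for all a ∈ A. Then the norm map of σ equals multiplication by p: Σ_{i=0}^{p−1} σ^i(a) = p·a for every a ∈ A. -/
/-! Write `σ = 1 + τ`. Expanding `Σ_{i<p} (1 + τ)^i` binomially gives `Σ_{k<p} C(p, k+1) τ^k`.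
The term `k = 0` is `p`, the term `k = p - 1` is `τ^(p-1) = 0`, and every term in between vanishes
because `p ∣ C(p, k+1)` and `p • τ = 0`. -/

open Finset

theorem sum_range_one_add_pow {R : Type*} [Ring R] (τ : R) (n : ℕ) :
    ∑ i ∈ range n, (1 + τ) ^ i = ∑ k ∈ range n, n.choose (k + 1) • τ ^ k := by
  induction n with
  | zero => simp
  | succ n ih =>
    have hbinom : (1 + τ) ^ n = ∑ k ∈ range (n + 1), n.choose k • τ ^ k := by
      rw [add_comm, (Commute.one_right τ).add_pow]
      simp [nsmul_eq_mul, (Nat.cast_commute _ _).eq]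
    rw [sum_range_succ, ih, hbinom, ← add_zero (∑ k ∈ range n, _), ← zero_smul ℕ (τ ^ n),
      ← Nat.choose_succ_self n, ← sum_range_succ, ← sum_add_distrib]
    refine sum_congr rfl fun k _ => ?_
    rw [← add_smul, Nat.choose_succ_succ', add_comm]

theorem sum_range_one_add_pow_eq_natCast_of_prime {R : Type*} [Ring R] {p : ℕ} (hp : p.Prime)
    {τ : R} (hτ_pow : τ ^ (p - 1) = 0) (hτ_nsmul : p • τ = 0) :
    ∑ i ∈ range p, (1 + τ) ^ i = p := by
  obtain ⟨q, rfl⟩ : ∃ q, p = q + 2 := ⟨p - 2, by have := hp.two_le; omega⟩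
  have hmiddle : ∀ k ∈ range q, (q + 2).choose (k + 2) • τ ^ (k + 1) = 0 := by
    intro k hk
    obtain ⟨m, hm⟩ := hp.dvd_choose_self (k := k + 2) (by omega) (by simpa using hk)
    rw [hm, mul_comm, mul_smul, pow_succ', ← smul_mul_assoc, hτ_nsmul, zero_mul, smul_zero]
  rw [Nat.add_succ_sub_one] at hτ_pow
  rw [sum_range_one_add_pow, sum_range_succ, sum_range_succ', sum_eq_zero hmiddle, hτ_pow]
  simp

/-- Let `A` be an abelian group and `σ` an endomorphism of `A` with
`(σ - 1)^(p-1) = 0` on `A` and `p·((σ - 1)·a) = 0` for all `a`.  Then the norm map of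
`σ` is multiplication by `p`:  `Σ_{i=0}^{p-1} σ^i(a) = p·a` for every `a ∈ A`. -/
theorem stmt_13 (p : ℕ) (hp : p.Prime)
    (A : Type) [AddCommGroup A] (σ : AddMonoid.End A)
    (h1 : ∀ a : A, ((σ - 1) ^ (p - 1)) a = 0)
    (h2 : ∀ a : A, p • ((σ - 1) a) = 0) :
    ∀ a : A, ∑ i ∈ Finset.range p, (σ ^ i) a = p • a := by
  have hnorm : ∑ i ∈ range p, (1 + (σ - 1)) ^ i = p :=
    sum_range_one_add_pow_eq_natCast_of_prime hp (AddMonoidHom.ext h1) (AddMonoidHom.ext h2)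
  rw [add_sub_cancel] at hnorm
  intro a
  rw [← AddMonoid.End.natCast_apply, ← hnorm]
  exact (AddMonoidHom.finsetSum_apply _ _ _).symm
end

section
/- Let 𝔬 be a discrete valuation ring with maximal ideal 𝔭, and let f = X^e + a_{e−1}X^{e−1} + ⋯ + a_0 be an Eisenstein polynomial over 𝔬 (so e ≥ 1, a_0, …, a_{e−1} ∈ 𝔭 and a_0 ∉ 𝔭²). Then 𝔒 = 𝔬[X]/(f) is a discrete valuation ring; the classes of 1, X, …, X^{e−1} form a basis of 𝔒 as a free 𝔬-module of rank e; the maximal ideal of 𝔒 is 𝔓 = (x̄), where x̄ is the image of X; and 𝔭𝔒 = 𝔓^{e}. -/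
/-!
Since `a₀ ∉ 𝔭²`, `a₀` is a uniformizer of `𝔬`. As `𝔒` is finite over `𝔬`, every maximal ideal of `𝔒`
lies over `𝔭`, so it contains `x̄^e ∈ 𝔭𝔒` and hence `x̄`. Every element is `g(x̄) ≡ g(0) mod (x̄)`, and
`(x̄)` contains `a₀`, hence `𝔭`: so a maximal ideal containing `g(x̄)` must have `g(0) ∈ 𝔭`, and is `(x̄)`.
Thus `𝔒` is local with principal maximal ideal `(x̄)`; it is a Noetherian domain by Eisenstein's
criterion, hence a DVR. Finally, writing `f = X^e + a₀ h`, the constant term shows `h(0)` is a unit,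
so `h(x̄)` is a unit of `𝔒` and `x̄^e = -a₀ h(x̄)` gives `𝔭𝔒 = (a₀) = (x̄)^e`.
-/

open Polynomial IsLocalRing Ideal

theorem IsLocalRing.maximalIdeal_eq_span_singleton_of_mem_of_notMem_sq {R : Type*} [CommRing R]
    [IsLocalRing R] (hprinc : (maximalIdeal R).IsPrincipal) {a : R} (ha : a ∈ maximalIdeal R)
    (ha2 : a ∉ maximalIdeal R ^ 2) : maximalIdeal R = span {a} := by
  obtain ⟨ϖ, hϖ⟩ := hprinc.principal
  rw [submodule_span_eq] at hϖ
  obtain ⟨c, rfl⟩ := mem_span_singleton'.mp (hϖ ▸ ha)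
  have hc : IsUnit c := by
    by_contra hc
    exact ha2 (sq (maximalIdeal R) ▸ mul_mem_mul hc (hϖ ▸ mem_span_singleton_self ϖ))
  rw [hϖ, mul_comm, span_singleton_mul_right_unit hc]

theorem IsDiscreteValuationRing.of_maximalIdeal_eq_span_singleton {R : Type*} [CommRing R]
    [IsDomain R] [IsNoetherianRing R] [IsLocalRing R] {ϖ : R} (hϖ : ϖ ≠ 0)
    (h : IsLocalRing.maximalIdeal R = span {ϖ}) : IsDiscreteValuationRing R := by
  have hnf : ¬IsField R := by
    rw [IsLocalRing.isField_iff_maximalIdeal_eq, h, span_singleton_eq_bot]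
    exact hϖ
  exact ((IsDiscreteValuationRing.TFAE R hnf).out 0 4).mpr
    (⟨⟨ϖ, h⟩⟩ : (IsLocalRing.maximalIdeal R).IsPrincipal)

theorem Polynomial.Monic.exists_eq_X_pow_add_C_mul {R : Type*} [CommRing R] {f : R[X]}
    (hmo : f.Monic) {p : R} (hf : f.IsWeaklyEisensteinAt (span {p})) :
    ∃ h, f = X ^ f.natDegree + C p * h := by
  obtain ⟨h, hh⟩ : C p ∣ f.eraseLead := by
    refine (C_dvd_iff_dvd_coeff _ _).mpr fun i => ?_
    rw [eraseLead_coeff]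
    split_ifs with hi
    · exact dvd_zero p
    rcases lt_or_gt_of_ne hi with hlt | hgt
    · exact mem_span_singleton.mp (hf.mem hlt)
    · rw [coeff_eq_zero_of_natDegree_lt hgt]
      exact dvd_zero p
  refine ⟨h, ?_⟩
  conv_lhs => rw [← eraseLead_add_C_mul_X_pow f]
  rw [hh, hmo.leadingCoeff, C_1, one_mul, add_comm]

namespace AdjoinRoot

variable {R : Type*} [CommRing R]

theorem mk_sub_of_coeff_zero_mem_span_root (f g : R[X]) :
    mk f g - of f (g.coeff 0) ∈ span {root f} := by
  obtain ⟨q, hq⟩ := X_dvd_sub_C (p := g)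
  rw [← mk_C, ← map_sub, hq, map_mul, mk_X]
  exact mul_mem_right _ _ (mem_span_singleton_self _)

theorem isDomain_of_isEisensteinAt [IsDomain R] [UniqueFactorizationMonoid R] {f : R[X]}
    {P : Ideal R} [P.IsPrime] (hf : f.IsEisensteinAt P) (hprim : f.IsPrimitive)
    (hdeg : 0 < f.natDegree) : IsDomain (AdjoinRoot f) :=
  isDomain_of_prime
    (UniqueFactorizationMonoid.irreducible_iff_prime.mp (hf.irreducible inferInstance hprim hdeg))

theorem root_ne_zero_of_coeff_zero_ne_zero [IsDomain R] {f : R[X]} (hdeg : f.degree ≠ 0)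
    (hc0 : f.coeff 0 ≠ 0) : root f ≠ 0 := by
  intro h
  have := eval₂_root f
  rw [h, eval₂_at_zero, ← (of f).map_zero] at this
  exact hc0 (of.injective_of_degree_ne_zero hdeg this)

variable [IsLocalRing R] {f : R[X]}

theorem root_mem_of_isMaximal (hmo : f.Monic) (hf : f.IsWeaklyEisensteinAt (maximalIdeal R))
    (m : Ideal (AdjoinRoot f)) [m.IsMaximal] : root f ∈ m := by
  have := hmo.finite_adjoinRoot
  have hcomap : m.comap (algebraMap R (AdjoinRoot f)) = maximalIdeal R :=
    eq_maximalIdeal (isMaximal_comap_of_isIntegral_of_isMaximal m)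
  have hpow := hf.pow_natDegree_le_of_aeval_zero_of_monic_mem_map (aeval_eq f ▸ mk_self) hmo _ le_rfl
  exact IsPrime.mem_of_pow_mem inferInstance _ (map_le_iff_le_comap.mpr hcomap.ge hpow)

theorem eq_span_root_of_isMaximal (hmo : f.Monic) (hf : f.IsWeaklyEisensteinAt (maximalIdeal R))
    (h0 : maximalIdeal R = span {f.coeff 0}) (m : Ideal (AdjoinRoot f)) [hm : m.IsMaximal] :
    m = span {root f} := by
  have hxm : span {root f} ≤ m := (span_singleton_le_iff_mem _).mpr (root_mem_of_isMaximal hmo hf m)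
  refine le_antisymm (fun y hy => ?_) hxm
  obtain ⟨g, rfl⟩ := mk_surjective y
  have hg := mk_sub_of_coeff_zero_mem_span_root f g
  by_cases hg0 : g.coeff 0 ∈ maximalIdeal R
  · obtain ⟨c, hc⟩ := mem_span_singleton'.mp (h0 ▸ hg0)
    have hf0 : of f (f.coeff 0) ∈ span {root f} := by
      simpa [mk_self] using mk_sub_of_coeff_zero_mem_span_root f f
    have hsplit : mk f g = (mk f g - of f (g.coeff 0)) + of f c * of f (f.coeff 0) := by
      rw [← map_mul, hc, sub_add_cancel]
    rw [hsplit]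
    exact add_mem hg (mul_mem_left _ _ hf0)
  · have hunit : IsUnit (of f (g.coeff 0)) := (of f).isUnit_map (not_not.mp hg0)
    have : of f (g.coeff 0) ∈ m := by
      rw [← sub_sub_cancel (mk f g) (of f (g.coeff 0))]
      exact sub_mem hy (hxm hg)
    exact absurd (m.eq_top_of_isUnit_mem this hunit) hm.ne_top

theorem isLocalRing_of_isWeaklyEisensteinAt [Nontrivial (AdjoinRoot f)] (hmo : f.Monic)
    (hf : f.IsWeaklyEisensteinAt (maximalIdeal R)) (h0 : maximalIdeal R = span {f.coeff 0}) :
    IsLocalRing (AdjoinRoot f) := by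
  obtain ⟨m, hm⟩ := exists_maximal (AdjoinRoot f)
  exact .of_unique_max_ideal ⟨m, hm, fun m' hm' =>
    (eq_span_root_of_isMaximal hmo hf h0 m').trans (eq_span_root_of_isMaximal hmo hf h0 m).symm⟩

theorem map_maximalIdeal_eq_span_root_pow (hmo : f.Monic)
    (hf : f.IsWeaklyEisensteinAt (maximalIdeal R)) (h0 : maximalIdeal R = span {f.coeff 0})
    (hc0 : f.coeff 0 ≠ 0) (hdeg : 0 < f.natDegree) :
    (maximalIdeal R).map (algebraMap R (AdjoinRoot f)) = span {root f} ^ f.natDegree := by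
  obtain ⟨h, hh⟩ := hmo.exists_eq_X_pow_add_C_mul (h0 ▸ hf)
  -- the constant terms give `a₀ * (1 - h(0)) = 0` with `a₀ ≠ 0`, so `1 - h(0)` is not a unit
  have hh0 : IsUnit (h.coeff 0) := by
    have hcoeff := congrArg (coeff · 0) hh
    simp only [coeff_add, coeff_X_pow, hdeg.ne, if_false, coeff_C_mul, zero_add] at hcoeff
    refine (isUnit_or_isUnit_one_sub_self _).resolve_right fun hu => hc0 ?_
    exact hu.mul_left_eq_zero.mp (by linear_combination hcoeff)
  have hunit : IsUnit (mk f h) := by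
    by_contra hnu
    obtain ⟨m, hm, hhm⟩ := exists_max_ideal_of_mem_nonunits hnu
    have hsub := eq_span_root_of_isMaximal hmo hf h0 m ▸ mk_sub_of_coeff_zero_mem_span_root f h
    have : of f (h.coeff 0) ∈ m := by
      rw [← sub_sub_cancel (mk f h) (of f (h.coeff 0))]
      exact sub_mem hhm hsub
    exact hm.ne_top (eq_top_of_isUnit_mem _ this ((of f).isUnit_map hh0))
  have hrel : root f ^ f.natDegree = of f (f.coeff 0) * -mk f h := by
    have : mk f (X ^ f.natDegree + C (f.coeff 0) * h) = 0 := by rw [← hh]; exact mk_self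
    rw [map_add, map_mul, map_pow, mk_X, mk_C] at this
    linear_combination this
  rw [h0, map_span, Set.image_singleton, span_singleton_pow, hrel, algebraMap_eq,
    span_singleton_mul_right_unit hunit.neg]

end AdjoinRoot

open AdjoinRoot

/-- Let `𝔬` be a discrete valuation ring with maximal ideal `𝔭`,
and `f = X^e + a_{e-1}X^{e-1} + ⋯ + a_0` an Eisenstein polynomial over `𝔬` (`e ≥ 1`,
`a_i ∈ 𝔭`, `a_0 ∉ 𝔭²`).  Then `𝔒 = 𝔬[X]/(f)` is a discrete valuation ring; the classes
of `1, X, …, X^{e-1}` form a basis of `𝔒` as a free `𝔬`-module of rank `e`; the maximal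
ideal of `𝔒` is `𝔓 = (x̄)` (i.e. `(x̄)` is maximal and is the unique maximal ideal),
where `x̄` is the image of `X`; and `𝔭𝔒 = 𝔓^e`. -/
theorem stmt_16 (𝔬 : Type) [CommRing 𝔬] [IsDomain 𝔬] [IsDiscreteValuationRing 𝔬]
    (e : ℕ) (he : 1 ≤ e) (f : 𝔬[X]) (hmonic : f.Monic) (hdeg : f.natDegree = e)
    (hcoeff : ∀ i < e, f.coeff i ∈ IsLocalRing.maximalIdeal 𝔬)
    (hc0 : f.coeff 0 ∉ (IsLocalRing.maximalIdeal 𝔬) ^ 2) :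
    (∃ h : IsDomain (𝔬[X] ⧸ Ideal.span {f}),
        @IsDiscreteValuationRing (𝔬[X] ⧸ Ideal.span {f}) _ h) ∧
    (∃ b : Module.Basis (Fin e) 𝔬 (𝔬[X] ⧸ Ideal.span {f}),
        ∀ i : Fin e, b i = (Ideal.Quotient.mk (Ideal.span {f}) X) ^ (i : ℕ)) ∧
    (Ideal.span {Ideal.Quotient.mk (Ideal.span {f}) X}).IsMaximal ∧
    (∀ m : Ideal (𝔬[X] ⧸ Ideal.span {f}), m.IsMaximal →
        m = Ideal.span {Ideal.Quotient.mk (Ideal.span {f}) X}) ∧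
    Ideal.map (algebraMap 𝔬 (𝔬[X] ⧸ Ideal.span {f})) (IsLocalRing.maximalIdeal 𝔬) =
      (Ideal.span {Ideal.Quotient.mk (Ideal.span {f}) X}) ^ e := by
  subst hdeg
  -- `AdjoinRoot f` is by definition `𝔬[X] ⧸ span {f}`, with `root f` the class of `X`.
  have hf : f.IsEisensteinAt (maximalIdeal 𝔬) := hmonic.isEisensteinAt_of_mem_of_notMem
    (maximalIdeal.isMaximal 𝔬).ne_top (hcoeff _) hc0
  have hw := hf.isWeaklyEisensteinAt
  have h0 := maximalIdeal_eq_span_singleton_of_mem_of_notMem_sq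
    (IsPrincipalIdealRing.principal _) (hcoeff 0 he) hc0
  have hc0' : f.coeff 0 ≠ 0 := fun h => hc0 (h ▸ zero_mem _)
  have := isDomain_of_isEisensteinAt hf hmonic.isPrimitive he
  have := isLocalRing_of_isWeaklyEisensteinAt hmonic hw h0
  have hmax : maximalIdeal (AdjoinRoot f) = span {root f} :=
    eq_span_root_of_isMaximal hmonic hw h0 _
  have hroot : root f ≠ 0 := root_ne_zero_of_coeff_zero_ne_zero
    (natDegree_pos_iff_degree_pos.mp he).ne' hc0'
  have hdvr : IsDiscreteValuationRing (AdjoinRoot f) := .of_maximalIdeal_eq_span_singleton hroot hmax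
  have hspan : (span {root f}).IsMaximal := hmax ▸ maximalIdeal.isMaximal _
  have hbasis : ∀ i, (powerBasis' hmonic).basis i = root f ^ (i : ℕ) := by simp
  have huniq : ∀ m : Ideal (AdjoinRoot f), m.IsMaximal → m = span {root f} :=
    fun m _ => eq_span_root_of_isMaximal hmonic hw h0 m
  exact ⟨⟨_, hdvr⟩, ⟨_, hbasis⟩, hspan, huniq,
    map_maximalIdeal_eq_span_root_pow hmonic hw h0 hc0' he⟩
end
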